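/- arXiv:1903.00909 — 9 statements merged into one kernel-verified Lean document; each statement's English description precedes it below -/
import Mathlib

section
/- Let P be a finite poset and let I, J be order ideals (down-sets) of P. For any element p that is maximal in I but not maximal in J, the following are equivalent: (i) p ∈ J; (ii) p is a maximal element of I ∩ J; (iii) p is a maximal element of the order ideal generated by max(I ∩ J) ∩ (max(I) ∪ max(J)); (iv) p is not a maximal element of I ∪ J. -/
/-- The set of maximal elements of a subset of a poset. -/
def maxSet {P : Type*} [PartialOrder P] (S : Set P) : Set P :=
  {a | a ∈ S ∧ ∀ b ∈ S, a ≤ b → b = a}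

/-- The order ideal (down-set) generated by a subset of a poset. -/
def genIdeal {P : Type*} [PartialOrder P] (A : Set P) : Set P :=
  {x | ∃ a ∈ A, x ≤ a}

theorem stmt0 {P : Type*} [Fintype P] [PartialOrder P]
    (I J : Set P) (hI : IsLowerSet I) (hJ : IsLowerSet J)
    (p : P) (hpI : p ∈ maxSet I) (hpJ : p ∉ maxSet J) :
    List.TFAE [p ∈ J,
      p ∈ maxSet (I ∩ J),
      p ∈ maxSet (genIdeal (maxSet (I ∩ J) ∩ (maxSet I ∪ maxSet J))),
      p ∉ maxSet (I ∪ J)] := by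
  obtain ⟨hpI1, hpI2⟩ := hpI
  tfae_have 1 → 2
  · intro h
    exact ⟨⟨hpI1, h⟩, fun b hb hpb => hpI2 b hb.1 hpb⟩
  tfae_have 2 → 3
  · intro h
    refine ⟨⟨p, ⟨h, Or.inl ⟨hpI1, hpI2⟩⟩, le_refl p⟩, ?_⟩
    rintro b ⟨a, ⟨ha2, _⟩, hba⟩ hpb
    have hap : a = p := h.2 a ha2.1 (hpb.trans hba)
    exact le_antisymm (hap ▸ hba) hpb
  tfae_have 3 → 1
  · rintro ⟨⟨a, ⟨⟨haIJ, _⟩, _⟩, hpa⟩, _⟩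
    exact hJ hpa haIJ.2
  tfae_have 1 → 4
  · intro h hmax
    simp only [maxSet, Set.mem_setOf_eq, not_and, not_forall] at hpJ
    obtain ⟨b, hbJ, hpb, hbp⟩ := hpJ h
    exact hbp (hmax.2 b (Or.inr hbJ) hpb)
  tfae_have 4 → 1
  · intro h
    by_contra hpJ'
    exact h ⟨Or.inl hpI1, fun b hb hpb =>
      hb.elim (fun hbI => hpI2 b hbI hpb) (fun hbJ => absurd (hJ hpb hbJ) hpJ')⟩
  tfae_finish
end

section
/- Let P be a finite poset on {1,...,n}. The set of lattice points of the enriched order polytope O^(e)_P equals the set of vectors e^ε_{F_min} + e_{F_comin} where F ranges over filters of P and ε over sign vectors on the minimal elements of F. That is, the convex hull of these vectors contains no other integer points. -/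
/-- The set of minimal elements of a subset of a poset. -/
def minSet {P : Type*} [PartialOrder P] (S : Set P) : Set P :=
  {a | a ∈ S ∧ ∀ b ∈ S, b ≤ a → b = a}

/-- The vertex set of the enriched order polytope: the vectors
`e^ε_{F_min} + e_{F_comin}` over filters (up-sets) `F` and sign vectors `ε`. -/
def enrichedOrderVerts (P : Type*) [PartialOrder P] : Set (P → ℝ) :=
  {x | ∃ F : Set P, IsUpperSet F ∧
    (∀ i ∈ minSet F, x i = 1 ∨ x i = -1) ∧
    (∀ i ∈ F, i ∉ minSet F → x i = 1) ∧
    (∀ i, i ∉ F → x i = 0)}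

/-- Valid linear inequalities for the enriched order polytope. -/
def goodSet (P : Type*) [PartialOrder P] : Set (P → ℝ) :=
  {x | (∀ i, -1 ≤ x i ∧ x i ≤ 1) ∧
    ∀ i j, i < j → 2 * x i - x j ≤ 1 ∧ -(2 * x i) - x j ≤ 1}

lemma good_convex (P : Type*) [PartialOrder P] : Convex ℝ (goodSet P) := by
  intro x hx y hy a b ha hb hab
  refine ⟨fun i => ?_, fun i j hij => ?_⟩
  · obtain ⟨h1, h2⟩ := hx.1 i
    obtain ⟨h3, h4⟩ := hy.1 i
    constructor <;>
      simp only [Pi.add_apply, Pi.smul_apply, smul_eq_mul] <;> nlinarith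
  · obtain ⟨h1, h2⟩ := hx.2 i j hij
    obtain ⟨h3, h4⟩ := hy.2 i j hij
    constructor <;>
      simp only [Pi.add_apply, Pi.smul_apply, smul_eq_mul] <;> nlinarith

lemma vert_vals {P : Type*} [PartialOrder P] {v : P → ℝ} (hv : v ∈ enrichedOrderVerts P) :
    ∀ i, v i = -1 ∨ v i = 0 ∨ v i = 1 := by
  obtain ⟨F, hF, h1, h2, h3⟩ := hv
  intro i
  by_cases hi : i ∈ F
  · by_cases hm : i ∈ minSet F
    · rcases h1 i hm with h | h <;> simp [h]
    · simp [h2 i hi hm]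
  · simp [h3 i hi]

lemma vert_pair {P : Type*} [PartialOrder P] {v : P → ℝ} (hv : v ∈ enrichedOrderVerts P)
    {i j : P} (hij : i < j) (hne : v i ≠ 0) : v j = 1 := by
  obtain ⟨F, hF, h1, h2, h3⟩ := hv
  have hiF : i ∈ F := by
    by_contra h; exact hne (h3 i h)
  have hjF : j ∈ F := hF hij.le hiF
  have hjm : j ∉ minSet F := fun hm => hij.ne (hm.2 i hiF hij.le)
  exact h2 j hjF hjm

lemma verts_sub_good (P : Type*) [PartialOrder P] : enrichedOrderVerts P ⊆ goodSet P := by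
  intro v hv
  have hval := vert_vals hv
  have hbd : ∀ i, -1 ≤ v i ∧ v i ≤ 1 := by
    intro i; rcases hval i with h | h | h <;> rw [h] <;> norm_num
  refine ⟨hbd, fun i j hij => ?_⟩
  rcases eq_or_ne (v i) 0 with h | h
  · rw [h]
    have := (hbd j).1
    constructor <;> linarith
  · have hj := vert_pair hv hij h
    rw [hj]
    rcases hval i with h' | h' | h' <;> rw [h'] <;> norm_num

lemma hull_sub_good (P : Type*) [PartialOrder P] :
    convexHull ℝ (enrichedOrderVerts P) ⊆ goodSet P :=
  convexHull_min (verts_sub_good P) (good_convex P)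

/-- The lattice points of the enriched order polytope `O^(e)_P` are exactly the
generating vectors `e^ε_{F_min} + e_{F_comin}`. -/
theorem stmt3 (P : Type*) [Fintype P] [PartialOrder P] :
    convexHull ℝ (enrichedOrderVerts P) ∩ {x : P → ℝ | ∀ i, ∃ m : ℤ, x i = (m : ℝ)}
      = enrichedOrderVerts P := by
  ext x
  simp only [Set.mem_inter_iff, Set.mem_setOf_eq]
  constructor
  · rintro ⟨hx, hint⟩
    have hg := hull_sub_good P hx
    have hval : ∀ i, x i = -1 ∨ x i = 0 ∨ x i = 1 := by
      intro i
      obtain ⟨m, hm⟩ := hint i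
      obtain ⟨h1, h2⟩ := hg.1 i
      rw [hm] at h1 h2 ⊢
      have hm1 : (-1 : ℤ) ≤ m := by exact_mod_cast h1
      have hm2 : m ≤ 1 := by exact_mod_cast h2
      have : m = -1 ∨ m = 0 ∨ m = 1 := by omega
      rcases this with h | h | h <;> rw [h] <;> norm_num
    have key : ∀ i j, i < j → x i ≠ 0 → x j = 1 := by
      intro i j hij hne
      obtain ⟨h1, h2⟩ := hg.2 i j hij
      have hjb := (hg.1 j).2
      rcases hval i with h | h | h
      · rw [h] at h2
        linarith
      · exact absurd h hne
      · rw [h] at h1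
        linarith
    refine ⟨{i | x i ≠ 0}, ?_, ?_, ?_, ?_⟩
    · intro i j hij hi
      rcases eq_or_lt_of_le hij with rfl | h
      · exact hi
      · simp only [Set.mem_setOf_eq, key i j h hi]
        norm_num
    · intro i him
      rcases hval i with h | h | h
      · exact Or.inr h
      · exact absurd h him.1
      · exact Or.inl h
    · intro i hi hnm
      simp only [minSet, Set.mem_setOf_eq] at hnm
      push_neg at hnm
      obtain ⟨b, hb, hble, hbne⟩ := hnm hi
      exact key b i (lt_of_le_of_ne hble hbne) hb
    · intro i hi
      simpa using hi
  · intro hx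
    refine ⟨subset_convexHull ℝ _ hx, fun i => ?_⟩
    rcases vert_vals hx i with h | h | h
    · exact ⟨-1, by rw [h]; norm_num⟩
    · exact ⟨0, by rw [h]; norm_num⟩
    · exact ⟨1, by rw [h]; norm_num⟩
end

section
/- Let P be a finite poset on {1,...,n}. The origin of ℝ^n is an interior point of the enriched order polytope O^(e)_P, and it is the unique interior lattice point of O^(e)_P. -/
open Finset

open scoped Classical in
/-- scaled standard basis vector -/
noncomputable def sgl {Q : Type*} (i : Q) (s : ℝ) : Q → ℝ := fun j => if j = i then s else 0

lemma sgl_apply_self {Q : Type*} (i : Q) (s : ℝ) : sgl i s i = s := by simp [sgl]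

lemma sgl_apply_ne {Q : Type*} {i j : Q} (h : j ≠ i) (s : ℝ) : sgl i s j = 0 := by simp [sgl, h]

lemma sgl_zero {Q : Type*} (i : Q) : sgl i (0:ℝ) = 0 := by
  funext j; simp [sgl]

lemma smul_sgl {Q : Type*} (i : Q) (r s : ℝ) : r • sgl i s = sgl i (r * s) := by
  funext j; by_cases h : j = i <;> simp [sgl, h]

/-- a sub-convex combination lies in a convex set containing 0 -/
lemma helper_sum_mem {E : Type*} [AddCommGroup E] [Module ℝ E] {H : Set E} (hH : Convex ℝ H)
    (h0 : (0:E) ∈ H) {ι : Type*} (t : Finset ι) (w : ι → ℝ) (p : ι → E)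
    (hw : ∀ j ∈ t, 0 ≤ w j) (hs : ∑ j ∈ t, w j ≤ 1) (hp : ∀ j ∈ t, p j ∈ H) :
    (∑ j ∈ t, w j • p j) ∈ H := by
  classical
  have hnone : (none : Option ι) ∉ t.image some := by simp
  have hinj : ∀ a ∈ t, ∀ b ∈ t, some a = some b → a = b := fun a _ b _ h => Option.some_inj.1 h
  let w' : Option ι → ℝ := fun o => Option.elim o (1 - ∑ j ∈ t, w j) w
  let p' : Option ι → E := fun o => Option.elim o 0 p
  have key : (∑ o ∈ insert none (t.image some), w' o • p' o) ∈ H := by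
    apply hH.sum_mem
    · intro o ho
      rcases o with _ | j
      · simpa [w', sub_nonneg] using hs
      · simp only [Finset.mem_insert, Finset.mem_image] at ho
        rcases ho with h | ⟨a, ha, haj⟩
        · exact absurd h (by simp)
        · exact hw j ((Option.some_inj.1 haj) ▸ ha)
    · rw [Finset.sum_insert hnone, Finset.sum_image hinj]
      simp [w']
    · intro o ho
      rcases o with _ | j
      · simpa [p'] using h0
      · simp only [Finset.mem_insert, Finset.mem_image] at ho
        rcases ho with h | ⟨a, ha, haj⟩
        · exact absurd h (by simp)
        · exact hp j ((Option.some_inj.1 haj) ▸ ha)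
  rw [Finset.sum_insert hnone, Finset.sum_image hinj] at key
  simpa [w', p'] using key

lemma zero_mem_verts (P : Type*) [PartialOrder P] : (0 : P → ℝ) ∈ enrichedOrderVerts P := by
  refine ⟨∅, isUpperSet_empty, ?_, ?_, fun i _ => rfl⟩
  · intro i hi; exact absurd hi.1 (Set.notMem_empty i)
  · intro i hi; exact absurd hi (Set.notMem_empty i)

lemma minSet_Ici {P : Type*} [PartialOrder P] (i : P) : minSet (Set.Ici i) = {i} := by
  ext a
  constructor
  · rintro ⟨ha, hmin⟩
    exact (hmin i (Set.self_mem_Ici) ha).symm ▸ rfl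
  · rintro rfl
    exact ⟨Set.self_mem_Ici, fun b hb hba => le_antisymm hba hb⟩

open scoped Classical in
lemma vert_mem {P : Type*} [PartialOrder P] (i : P) (σ : ℝ) (hσ : σ = 1 ∨ σ = -1) :
    (fun j => if j = i then σ else if i < j then 1 else 0) ∈ enrichedOrderVerts P := by
  refine ⟨Set.Ici i, isUpperSet_Ici i, ?_, ?_, ?_⟩
  · intro j hj
    rw [minSet_Ici] at hj
    rcases hj with rfl
    simpa using hσ
  · intro j hj hjm
    rw [minSet_Ici] at hjm
    have hji : j ≠ i := fun h => hjm (h ▸ rfl)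
    have hij : i < j := lt_of_le_of_ne hj (Ne.symm hji)
    simp [hji, hij]
  · intro j hj
    have h1 : ¬ i ≤ j := hj
    have hji : j ≠ i := fun h => h1 (h ▸ le_refl i)
    have h2 : ¬ i < j := fun h => h1 h.le
    simp [hji, h2]

lemma key_single {P : Type*} [Fintype P] [PartialOrder P] (i : P) :
    ∃ c : ℝ, 0 < c ∧ ∀ s : ℝ, |s| ≤ c →
      sgl i s ∈ convexHull ℝ (enrichedOrderVerts P) := by
  classical
  refine IsWellFounded.induction (r := ((· > ·) : P → P → Prop))
    (motive := fun i => ∃ c : ℝ, 0 < c ∧ ∀ s : ℝ, |s| ≤ c →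
      sgl i s ∈ convexHull ℝ (enrichedOrderVerts P)) i ?_
  clear i
  intro i IH
  set H := convexHull ℝ (enrichedOrderVerts P) with hHdef
  have hH : Convex ℝ H := convex_convexHull _ _
  have h0 : (0 : P → ℝ) ∈ H := subset_convexHull _ _ (zero_mem_verts P)
  choose c hc hsc using IH
  set g : P → ℝ := fun j => if h : i < j then min (c j h) 1 else 1 with hgdef
  have hg0 : ∀ j, 0 < g j := by
    intro j; simp only [hgdef]
    split
    · exact lt_min (hc _ _) one_pos
    · exact one_pos
  have hgmem : ∀ j, i < j → ∀ s : ℝ, |s| ≤ g j → sgl j s ∈ H := by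
    intro j hj s hs
    refine hsc j hj s (le_trans hs ?_)
    simp only [hgdef]
    rw [dif_pos hj]
    exact min_le_left _ _
  set m : ℝ := Finset.univ.inf' (Finset.univ_nonempty_iff.mpr ⟨i⟩) g with hmdef
  have hm0 : 0 < m := by
    rw [hmdef, Finset.lt_inf'_iff]
    exact fun j _ => hg0 j
  have hmle : ∀ j, m ≤ g j := fun j => Finset.inf'_le _ (Finset.mem_univ j)
  have hgi : g i = 1 := by simp only [hgdef]; rw [dif_neg (lt_irrefl i)]
  have hm1 : m ≤ 1 := (hmle i).trans_eq hgi
  set n : ℝ := (Fintype.card P : ℝ) with hndef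
  have hn0 : 0 ≤ n := by positivity
  refine ⟨m / (m + n + 1), by positivity, ?_⟩
  intro s hs
  by_cases hs0 : s = 0
  · rw [hs0, sgl_zero]; exact h0
  set σ : ℝ := if 0 < s then 1 else -1 with hσdef
  have hσ : σ = 1 ∨ σ = -1 := by rw [hσdef]; split <;> simp
  have hσs : |s| * σ = s := by
    rw [hσdef]
    rcases lt_trichotomy 0 s with h | h | h
    · rw [if_pos h, mul_one, abs_of_pos h]
    · exact absurd h.symm hs0
    · rw [if_neg (not_lt.2 h.le), abs_of_neg h]; ring
  set u : P → ℝ := fun j => if j = i then σ else if i < j then 1 else 0 with hudef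
  have hu : u ∈ H := subset_convexHull _ _ (vert_mem i σ hσ)
  set w : P → ℝ := fun j => if j = i then |s| else if i < j then |s| / g j else 0 with hwdef
  set p : P → (P → ℝ) := fun j => if j = i then u else if i < j then sgl j (-(g j)) else 0
    with hpdef
  have habs : 0 ≤ |s| := abs_nonneg s
  have hdecomp : sgl i s = ∑ j, w j • p j := by
    funext k
    rw [Finset.sum_apply]
    simp only [Pi.smul_apply, smul_eq_mul]
    by_cases hk : k = i
    · rw [hk, sgl_apply_self]
      rw [Finset.sum_eq_single i]
      · simp only [hwdef, hpdef, if_pos rfl]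
        simp only [hudef, if_pos rfl]
        exact hσs.symm
      · intro j _ hj
        simp only [hwdef, hpdef, if_neg hj]
        by_cases hij : i < j
        · rw [if_pos hij, if_pos hij, sgl_apply_ne (Ne.symm hj), mul_zero]
        · rw [if_neg hij, if_neg hij, Pi.zero_apply, mul_zero]
      · intro h; exact absurd (Finset.mem_univ i) h
    · rw [sgl_apply_ne hk]
      by_cases hik : i < k
      · rw [← Finset.add_sum_erase _ _ (Finset.mem_univ i),
          ← Finset.add_sum_erase _ _ (Finset.mem_erase.2 ⟨hk, Finset.mem_univ k⟩)]
        have t1 : w i * p i k = |s| := by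
          simp only [hwdef, hpdef, if_pos rfl]
          simp only [hudef, if_neg hk, if_pos hik, mul_one]
        have t2 : w k * p k k = -|s| := by
          simp only [hwdef, hpdef, if_neg hk, if_pos hik]
          rw [sgl_apply_self]
          have hgk : g k ≠ 0 := (hg0 k).ne'
          field_simp
        have t3 : ∀ j ∈ (Finset.univ.erase i).erase k, w j * p j k = 0 := by
          intro j hj
          rw [Finset.mem_erase, Finset.mem_erase] at hj
          obtain ⟨hjk, hji, _⟩ := hj
          simp only [hwdef, hpdef, if_neg hji]
          by_cases hij : i < j
          · rw [if_pos hij, if_pos hij, sgl_apply_ne (Ne.symm hjk), mul_zero]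
          · rw [if_neg hij, if_neg hij, Pi.zero_apply, mul_zero]
        rw [t1, t2, Finset.sum_eq_zero t3]
        ring
      · rw [Finset.sum_eq_zero]
        intro j _
        by_cases hji : j = i
        · simp only [hwdef, hpdef, hji, if_pos rfl]
          simp only [hudef, if_neg hk, if_neg hik, mul_zero]
        · simp only [hwdef, hpdef, if_neg hji]
          by_cases hij : i < j
          · rw [if_pos hij, if_pos hij]
            have hkj : k ≠ j := fun h => hik (h ▸ hij)
            rw [sgl_apply_ne hkj, mul_zero]
          · rw [if_neg hij, if_neg hij, Pi.zero_apply, mul_zero]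
  rw [hdecomp]
  apply helper_sum_mem hH h0
  · intro j _
    simp only [hwdef]
    split
    · exact habs
    · split
      · exact div_nonneg habs (hg0 _).le
      · exact le_refl 0
  · have hwle : ∀ j ∈ Finset.univ, w j ≤ |s| / m := by
      intro j _
      simp only [hwdef]
      split
      · rw [le_div_iff₀ hm0]; nlinarith
      · split
        · rw [div_le_div_iff₀ (hg0 _) hm0]; nlinarith [hmle j]
        · positivity
    calc ∑ j, w j ≤ ∑ _j : P, |s| / m := Finset.sum_le_sum hwle
      _ = n * (|s| / m) := by rw [Finset.sum_const, hndef]; simp [nsmul_eq_mul]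
      _ ≤ 1 := by
          have hs' : |s| * (m + n + 1) ≤ m := by
            rw [div_eq_mul_inv] at hs
            nlinarith [mul_le_mul_of_nonneg_right hs (by positivity : (0:ℝ) ≤ m + n + 1),
              mul_inv_cancel₀ (by positivity : (m + n + 1 : ℝ) ≠ 0)]
          rw [mul_div_assoc', div_le_one hm0]
          nlinarith
  · intro j _
    simp only [hpdef]
    split
    · exact hu
    · split
      · next hij => exact hgmem j hij _ (by rw [abs_neg, abs_of_pos (hg0 j)])
      · exact h0

lemma sum_sgl {P : Type*} [Fintype P] (x : P → ℝ) : ∑ i, sgl i (x i) = x := by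
  classical
  funext k
  rw [Finset.sum_apply]
  have : ∀ j ∈ Finset.univ, sgl j (x j) k = if k = j then x j else 0 := by
    intro j _
    by_cases h : k = j
    · rw [h, sgl_apply_self, if_pos rfl]
    · rw [sgl_apply_ne h, if_neg h]
  rw [Finset.sum_congr rfl this, Finset.sum_ite_eq]
  simp

/-- The origin is an interior point of `O^(e)_P`, and it is its unique
interior lattice point. -/
theorem stmt4 (P : Type*) [Fintype P] [PartialOrder P] :
    (0 : P → ℝ) ∈ interior (convexHull ℝ (enrichedOrderVerts P)) ∧
    ∀ x ∈ interior (convexHull ℝ (enrichedOrderVerts P)),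
      (∀ i, ∃ m : ℤ, x i = (m : ℝ)) → x = 0 := by
  classical
  set H := convexHull ℝ (enrichedOrderVerts P) with hHdef
  have hH : Convex ℝ H := convex_convexHull _ _
  have h0 : (0 : P → ℝ) ∈ H := subset_convexHull _ _ (zero_mem_verts P)
  constructor
  · rcases isEmpty_or_nonempty P with hP | hP
    · have huniv : H = Set.univ := by
        apply Set.eq_univ_of_forall
        intro x
        have : x = 0 := Subsingleton.elim x 0
        rw [this]; exact h0
      rw [huniv, interior_univ]; exact Set.mem_univ _
    · choose c hc0 hcmem using fun i : P => key_single (P := P) i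
      set cm : ℝ := Finset.univ.inf' Finset.univ_nonempty c with hcmdef
      have hcm0 : 0 < cm := by
        rw [hcmdef, Finset.lt_inf'_iff]; exact fun j _ => hc0 j
      have hcml : ∀ i, cm ≤ c i := fun i => Finset.inf'_le _ (Finset.mem_univ i)
      set U : Set (P → ℝ) := {x | ∑ i, |x i| < cm} with hUdef
      have hUopen : IsOpen U := by
        have hcont : Continuous fun x : P → ℝ => ∑ i, |x i| :=
          continuous_finset_sum _ fun i _ => (continuous_apply i).abs
        exact isOpen_lt hcont continuous_const
      have hU0 : (0 : P → ℝ) ∈ U := by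
        simp only [hUdef, Set.mem_setOf_eq, Pi.zero_apply, abs_zero, Finset.sum_const_zero]
        exact hcm0
      have hUH : U ⊆ H := by
        intro x hx
        rw [hUdef, Set.mem_setOf_eq] at hx
        have hdecomp : x = ∑ i, (|x i| / cm) • sgl i ((if 0 ≤ x i then 1 else -1) * cm) := by
          conv_lhs => rw [← sum_sgl x]
          refine Finset.sum_congr rfl fun i _ => ?_
          rw [smul_sgl]
          rcases le_or_gt 0 (x i) with h | h
          · rw [if_pos h]
            rw [abs_of_nonneg h]
            field_simp
          · rw [if_neg (not_le.2 h), abs_of_neg h]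
            field_simp
        rw [hdecomp]
        apply helper_sum_mem hH h0
        · intro j _; positivity
        · rw [← Finset.sum_div]
          rw [div_le_one hcm0]
          exact hx.le
        · intro j _
          refine hcmem j _ (le_trans ?_ (hcml j))
          rcases le_or_gt 0 (x j) with h | h
          · rw [if_pos h, one_mul, abs_of_pos hcm0]
          · rw [if_neg (not_le.2 h)]
            rw [abs_mul, abs_neg, abs_one, one_mul, abs_of_pos hcm0]
      exact (hUopen.subset_interior_iff.2 hUH) hU0
  · intro x hx hlat
    have hcube : H ⊆ Set.pi Set.univ (fun _ : P => Set.Icc (-1:ℝ) 1) := by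
      refine convexHull_min ?_ (convex_pi fun i _ => convex_Icc _ _)
      rintro y ⟨F, hF, h1, h2, h3⟩ i _
      by_cases hiF : i ∈ F
      · by_cases him : i ∈ minSet F
        · rcases h1 i him with h | h <;> rw [h] <;> norm_num
        · rw [h2 i hiF him]; norm_num
      · rw [h3 i hiF]; norm_num
    have hx' : x ∈ interior (Set.pi Set.univ (fun _ : P => Set.Icc (-1:ℝ) 1)) :=
      interior_mono hcube hx
    rw [interior_pi_set Set.finite_univ] at hx'
    funext i
    have hi := hx' i (Set.mem_univ i)
    rw [interior_Icc] at hi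
    obtain ⟨mz, hmz⟩ := hlat i
    rw [hmz] at hi
    have h1 : (-1:ℤ) < mz := by exact_mod_cast hi.1
    have h2 : mz < 1 := by exact_mod_cast hi.2
    have : mz = 0 := by omega
    rw [hmz, this, Pi.zero_apply, Int.cast_zero]
end

section
/- Let P be a finite poset on {1,...,n}. The enriched chain polytope C^(e)_P equals the set of points x ∈ ℝ^n satisfying Σ_{j=1}^r ε_j x_{i_j} ≤ 1 for every maximal chain i_1 ⋖ i_2 ⋖ ⋯ ⋖ i_r of P and every choice of signs ε_j ∈ {1,−1}. -/
/-- The vertex set of the enriched chain polytope: signed indicator vectors of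
antichains. -/
def enrichedChainVerts (P : Type*) [PartialOrder P] : Set (P → ℝ) :=
  {x | ∃ A : Set P, IsAntichain (· ≤ ·) A ∧
    (∀ i ∈ A, x i = 1 ∨ x i = -1) ∧ (∀ i, i ∉ A → x i = 0)}

/-- A maximal chain of `P`, as a nonempty list `i_1 ⋖ i_2 ⋖ ⋯ ⋖ i_r` with
`i_1` minimal and `i_r` maximal in `P`. -/
def IsMaxChainList {P : Type*} [PartialOrder P] (l : List P) : Prop :=
  l ≠ [] ∧ l.Chain' (· ⋖ ·) ∧
    (∃ a, l.head? = some a ∧ IsMin a) ∧ (∃ a, l.getLast? = some a ∧ IsMax a)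

section Aux

set_option linter.unusedSectionVars false

lemma ECP.mem_of_getLast?_eq {α : Type*} {l : List α} {c : α} (h : l.getLast? = some c) :
    c ∈ l := by
  have hl : l ≠ [] := by rintro rfl; simp at h
  rw [List.getLast?_eq_getLast hl] at h
  exact (Option.some_injective _ h) ▸ List.getLast_mem hl

lemma ECP.mem_tail_of_getLast? {α : Type*} {l : List α} {a c : α}
    (hh : l.head? = some a) (hl : l.getLast? = some c) (hne : a ≠ c) : c ∈ l.tail := by
  cases l with
  | nil => simp at hh
  | cons d t =>
    have hda : d = a := by simpa using hh
    cases t with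
    | nil =>
      exact absurd (by simpa [hda] using hl : a = c) hne
    | cons e t' =>
      rw [List.getLast?_cons_cons] at hl
      exact ECP.mem_of_getLast?_eq hl

lemma ECP.exists_first {α : Type*} {p : α → Prop} :
    ∀ {l : List α}, (∃ x ∈ l, p x) →
      ∃ l₁ x l₂, l = l₁ ++ x :: l₂ ∧ p x ∧ ∀ z ∈ l₁, ¬ p z := by
  intro l
  induction l with
  | nil => rintro ⟨x, hx, -⟩; simp at hx
  | cons a t ih =>
    intro h
    by_cases ha : p a
    · exact ⟨[], a, t, rfl, ha, by simp⟩
    · obtain ⟨x, hx, hpx⟩ := h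
      rcases List.mem_cons.1 hx with rfl | hx
      · exact absurd hpx ha
      · obtain ⟨l₁, x', l₂, rfl, h1, h2⟩ := ih ⟨x, hx, hpx⟩
        refine ⟨a :: l₁, x', l₂, rfl, h1, ?_⟩
        intro z hz
        rcases List.mem_cons.1 hz with rfl | hz
        · exact ha
        · exact h2 z hz

variable {P : Type*} [PartialOrder P] [Fintype P]

/-- Glue two chains sharing an endpoint. -/
lemma ECP.glue_chains {R : P → P → Prop} {l₁ l₂ : List P} {c : P}
    (c₁ : l₁.Chain' R) (c₂ : l₂.Chain' R)
    (h₁ : l₁.getLast? = some c) (h₂ : l₂.head? = some c) :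
    (l₁ ++ l₂.tail).Chain' R ∧ (l₁ ++ l₂.tail).head? = l₁.head? ∧
      (l₁ ++ l₂.tail).getLast? = l₂.getLast? ∧ ∀ x ∈ l₂, x ∈ l₁ ++ l₂.tail := by
  have hl₁ : l₁ ≠ [] := by rintro rfl; simp at h₁
  have hcl₁ : c ∈ l₁ := ECP.mem_of_getLast?_eq h₁
  cases l₂ with
  | nil => simp at h₂
  | cons d t =>
    have hdc : c = d := by simpa using h₂.symm
    subst hdc
    refine ⟨?_, ?_, ?_, ?_⟩
    · refine List.isChain_append.2 ⟨c₁, c₂.tail, ?_⟩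
      intro x hx y hy
      obtain rfl : x = c := by rw [h₁] at hx; simpa using hx.symm
      exact (List.isChain_cons.1 c₂).1 y hy
    · exact List.head?_append_of_ne_nil _ hl₁
    · cases t with
      | nil => simpa using h₁
      | cons e t' =>
        simp only [List.tail_cons]
        rw [List.getLast?_append_of_ne_nil _ (by simp), List.getLast?_cons_cons]
    · intro x hx
      rcases List.mem_cons.1 hx with rfl | hx
      · exact List.mem_append_left _ hcl₁
      · exact List.mem_append_right _ hx

lemma ECP.exists_down (a : P) : ∃ l : List P, l.Chain' (· ⋖ ·) ∧ l.getLast? = some a ∧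
    ∃ b, l.head? = some b ∧ IsMin b := by
  apply WellFoundedLT.induction a
  intro a IH
  by_cases hm : IsMin a
  · exact ⟨[a], by simp [List.Chain'], by simp, a, by simp, hm⟩
  · obtain ⟨b, hba⟩ := not_isMin_iff.mp hm
    obtain ⟨c, _, hca⟩ := exists_le_covBy_of_lt hba
    obtain ⟨l, hc, hlast, b', hhead, hb'⟩ := IH c hca.lt
    refine ⟨l ++ [a], ?_, ?_, b', ?_, hb'⟩
    · refine List.isChain_append.2 ⟨hc, by simp, ?_⟩
      intro x hx y hy
      obtain rfl : x = c := by rw [hlast] at hx; simpa using hx.symm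
      obtain rfl : y = a := by simpa using hy.symm
      exact hca
    · rw [List.getLast?_append_of_ne_nil _ (by simp)]; simp
    · rw [List.head?_append_of_ne_nil _ (by rintro rfl; simp at hhead)]; exact hhead

lemma ECP.exists_up (a : P) : ∃ l : List P, l.Chain' (· ⋖ ·) ∧ l.head? = some a ∧
    ∃ b, l.getLast? = some b ∧ IsMax b := by
  apply WellFoundedGT.induction a
  intro a IH
  by_cases hm : IsMax a
  · exact ⟨[a], by simp [List.Chain'], by simp, a, by simp, hm⟩
  · obtain ⟨b, hba⟩ := not_isMax_iff.mp hm
    obtain ⟨c, hac, _⟩ := exists_covBy_le_of_lt hba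
    obtain ⟨l, hc, hhead, b', hlast, hb'⟩ := IH c hac.lt
    refine ⟨a :: l, ?_, by simp, b', ?_, hb'⟩
    · refine List.isChain_cons.2 ⟨?_, hc⟩
      intro y hy
      obtain rfl : y = c := by rw [hhead] at hy; simpa using hy.symm
      exact hac
    · cases l with
      | nil => simp at hhead
      | cons e t => rw [List.getLast?_cons_cons]; exact hlast

lemma ECP.exists_mid (b a : P) (hab : a ≤ b) : ∃ l : List P, l.Chain' (· ⋖ ·) ∧
    l.head? = some a ∧ l.getLast? = some b := by
  revert hab
  apply WellFoundedGT.induction a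
  intro a IH hab
  rcases eq_or_lt_of_le hab with rfl | hlt
  · exact ⟨[a], by simp [List.Chain'], by simp, by simp⟩
  · obtain ⟨c, hac, hcb⟩ := exists_covBy_le_of_lt hlt
    obtain ⟨l, hc, hhead, hlast⟩ := IH c hac.lt hcb
    refine ⟨a :: l, ?_, by simp, ?_⟩
    · refine List.isChain_cons.2 ⟨?_, hc⟩
      intro y hy
      obtain rfl : y = c := by rw [hhead] at hy; simpa using hy.symm
      exact hac
    · cases l with
      | nil => simp at hhead
      | cons e t => rw [List.getLast?_cons_cons]; exact hlast

lemma ECP.exists_maxChain_pair {a b : P} (hab : a ≤ b) :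
    ∃ l : List P, IsMaxChainList l ∧ a ∈ l ∧ b ∈ l := by
  obtain ⟨d, cd, dlast, m0, dhead, hmin⟩ := ECP.exists_down a
  obtain ⟨m, cm, mhead, mlast⟩ := ECP.exists_mid b a hab
  obtain ⟨u, cu, uhead, x, ulast, hmax⟩ := ECP.exists_up b
  obtain ⟨hc1, hhead1, hlast1, hmem1⟩ := ECP.glue_chains cd cm dlast mhead
  obtain ⟨hc2, hhead2, hlast2, hmem2⟩ := ECP.glue_chains hc1 cu (hlast1.trans mlast) uhead
  refine ⟨(d ++ m.tail) ++ u.tail, ⟨?_, hc2, ⟨m0, ?_, hmin⟩, ⟨x, ?_, hmax⟩⟩, ?_, ?_⟩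
  · rintro hnil
    rcases List.append_eq_nil_iff.mp hnil with ⟨hnil', -⟩
    rcases List.append_eq_nil_iff.mp hnil' with ⟨rfl, -⟩
    simp at dlast
  · rw [hhead2, hhead1, dhead]
  · rw [hlast2, ulast]
  · exact List.mem_append_left _ (hmem1 a (List.mem_of_mem_head? (by rw [mhead]; rfl)))
  · exact hmem2 b (List.mem_of_mem_head? (by rw [uhead]; rfl))

lemma ECP.chain_antichain_unique {A : Set P} (hA : IsAntichain (· ≤ ·) A) {l : List P}
    (hl : l.Chain' (· ⋖ ·)) : ∀ j k : Fin l.length, l.get j ∈ A → l.get k ∈ A → j = k := by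
  have hp : l.Pairwise (· < ·) := List.isChain_iff_pairwise.mp (hl.imp fun {a b} h => h.lt)
  have key : ∀ j k : Fin l.length, j < k → l.get j ∈ A → l.get k ∈ A → False := by
    intro j k hjk hj hk
    have hlt : l.get j < l.get k := List.pairwise_iff_get.mp hp j k hjk
    exact hA hj hk hlt.ne hlt.le
  intro j k hj hk
  rcases lt_trichotomy j k with h | h | h
  · exact absurd (key j k h hj hk) (by simp)
  · exact h
  · exact absurd (key k j h hk hj) (by simp)

lemma ECP.map_sum_eq (y : P → ℝ) (l : List P) :
    (l.map y).sum = ∑ j : Fin l.length, y (l.get j) := by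
  rw [← Fin.sum_univ_fun_getElem l y]
  simp [List.get_eq_getElem]

lemma ECP.map_sum_nonneg (y : P → ℝ) (h0 : ∀ i, 0 ≤ y i) (l : List P) :
    0 ≤ (l.map y).sum := by
  apply List.sum_nonneg
  intro z hz
  obtain ⟨u, -, rfl⟩ := List.mem_map.1 hz
  exact h0 u

lemma ECP.single_le_map_sum (y : P → ℝ) (h0 : ∀ i, 0 ≤ y i) {l : List P} {a : P}
    (ha : a ∈ l) : y a ≤ (l.map y).sum := by
  apply List.single_le_sum
  · intro z hz
    obtain ⟨u, -, rfl⟩ := List.mem_map.1 hz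
    exact h0 u
  · exact List.mem_map_of_mem (f := y) ha

lemma ECP.pair_le_map_sum (y : P → ℝ) (h0 : ∀ i, 0 ≤ y i) {l : List P} {a b : P}
    (ha : a ∈ l) (hb : b ∈ l) (hab : a ≠ b) : y a + y b ≤ (l.map y).sum := by
  classical
  obtain ⟨j, hj⟩ := List.mem_iff_get.1 ha
  obtain ⟨k, hk⟩ := List.mem_iff_get.1 hb
  have hjk : j ≠ k := by rintro rfl; exact hab (hj ▸ hk ▸ rfl)
  rw [ECP.map_sum_eq]
  calc y a + y b = ∑ i ∈ ({j, k} : Finset (Fin l.length)), y (l.get i) := by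
        rw [Finset.sum_pair hjk, hj, hk]
    _ ≤ ∑ i : Fin l.length, y (l.get i) :=
        Finset.sum_le_sum_of_subset_of_nonneg (Finset.subset_univ _)
          (fun i _ _ => h0 _)

end Aux

section Main

variable {P : Type*} [PartialOrder P] [Fintype P]

set_option linter.unusedSectionVars false

lemma ECP.key_ineq (y : P → ℝ) (h0 : ∀ i, 0 ≤ y i)
    (h1 : ∀ l : List P, IsMaxChainList l → (l.map y).sum ≤ 1)
    (A : Finset P)
    (hAmin : ∀ j : P, y j ≠ 0 → ∃ a ∈ A, a ≤ j)
    (lam : ℝ) (hlam : ∀ a ∈ A, lam ≤ y a) (hlam1 : lam ≤ 1)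
    {l : List P} (hl : IsMaxChainList l) (hdisj : ∀ x ∈ l, x ∉ A) :
    (l.map y).sum + lam ≤ 1 := by
  by_cases hz : ∀ x ∈ l, y x = 0
  · have hzero : (l.map y).sum = 0 := by
      apply List.sum_eq_zero
      intro z hz'
      obtain ⟨x, hx, rfl⟩ := List.mem_map.1 hz'
      exact hz x hx
    linarith
  · push_neg at hz
    obtain ⟨l₁, x, l₂, heq, hx, hl₁0⟩ := ECP.exists_first hz
    obtain ⟨a, haA, hax⟩ := hAmin x hx
    have hnex : a ≠ x := fun h => hdisj x (heq ▸ List.mem_append_right _ List.mem_cons_self) (h ▸ haA)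
    obtain ⟨d, cd, dlast, m0, dhead, hmin⟩ := ECP.exists_down a
    obtain ⟨m, cm, mhead, mlast⟩ := ECP.exists_mid x a hax
    obtain ⟨hc1, hhead1, hlast1, hmem1⟩ := ECP.glue_chains cd cm dlast mhead
    have hlchain : (l₁ ++ x :: l₂).Chain' (· ⋖ ·) := heq ▸ hl.2.1
    have hxl₂ : (x :: l₂).Chain' (· ⋖ ·) := (List.isChain_append.1 hlchain).2.1
    obtain ⟨hc2, hhead2, hlast2, hmem2⟩ :=
      ECP.glue_chains hc1 hxl₂ (hlast1.trans mlast) (rfl : (x :: l₂).head? = some x)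
    set C : List P := (d ++ m.tail) ++ (x :: l₂).tail with hC
    have hCmax : IsMaxChainList C := by
      refine ⟨?_, hc2, ⟨m0, ?_, hmin⟩, ?_⟩
      · rintro hnil
        rcases List.append_eq_nil_iff.mp hnil with ⟨hnil', -⟩
        rcases List.append_eq_nil_iff.mp hnil' with ⟨rfl, -⟩
        simp at dlast
      · rw [hhead2, hhead1, dhead]
      · obtain ⟨z, hz1, hz2⟩ := hl.2.2.2
        refine ⟨z, ?_, hz2⟩
        rw [hlast2, ← List.getLast?_append_of_ne_nil l₁ (l₂ := x :: l₂) (by simp), ← heq]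
        exact hz1
    have hsumC := h1 C hCmax
    -- lower bound for the sum over C
    have hCsum : (C.map y).sum = ((d.map y).sum + ((m.tail).map y).sum) + ((l₂).map y).sum := by
      rw [hC]; simp [List.sum_append, add_assoc]
    have hda : y a ≤ (d.map y).sum :=
      ECP.single_le_map_sum y h0 (ECP.mem_of_getLast?_eq dlast)
    have hmx : y x ≤ ((m.tail).map y).sum :=
      ECP.single_le_map_sum y h0 (ECP.mem_tail_of_getLast? mhead mlast hnex)
    have hlsum : (l.map y).sum = y x + (l₂.map y).sum := by
      rw [heq]
      simp only [List.map_append, List.sum_append, List.map_cons, List.sum_cons]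
      have : (l₁.map y).sum = 0 := by
        apply List.sum_eq_zero
        intro z hz'
        obtain ⟨u, hu, rfl⟩ := List.mem_map.1 hz'
        exact not_not.mp (hl₁0 u hu)
      rw [this]; ring
    have hya := hlam a haA
    linarith

lemma ECP.mem_hull (y : P → ℝ) (h0 : ∀ i, 0 ≤ y i)
    (h1 : ∀ l : List P, IsMaxChainList l → (l.map y).sum ≤ 1) :
    y ∈ convexHull ℝ (enrichedChainVerts P) := by
  classical
  suffices H : ∀ (n : ℕ) (y : P → ℝ), (Finset.univ.filter fun i => y i ≠ 0).card = n →
      (∀ i, 0 ≤ y i) → (∀ l : List P, IsMaxChainList l → (l.map y).sum ≤ 1) →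
      y ∈ convexHull ℝ (enrichedChainVerts P) from H _ y rfl h0 h1
  clear h0 h1 y
  intro n
  induction n using Nat.strong_induction_on with
  | _ n IH =>
  intro y hcard h0 h1
  set S : Finset P := Finset.univ.filter (fun i => y i ≠ 0) with hS
  have hmemS : ∀ i, i ∈ S ↔ y i ≠ 0 := fun i => by simp [hS]
  rcases S.eq_empty_or_nonempty with hSe | hne
  · have hy0 : ∀ i, y i = 0 := by
      intro i
      by_contra h
      exact absurd ((hmemS i).2 h) (by simp [hSe])
    apply subset_convexHull ℝ (enrichedChainVerts P)
    exact ⟨∅, by simp [IsAntichain, Set.pairwise_empty], by simp, fun i _ => hy0 i⟩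
  · set A : Finset P := S.filter (fun i => ∀ j ∈ S, ¬ j < i) with hA
    have hAS : A ⊆ S := Finset.filter_subset _ _
    have hAmin : ∀ j, y j ≠ 0 → ∃ a ∈ A, a ≤ j := by
      intro j hj
      obtain ⟨b, hba, hbmin⟩ := exists_minimal_le_of_wellFoundedLT (fun i => i ∈ S) j ((hmemS j).2 hj)
      refine ⟨b, ?_, hba⟩
      refine Finset.mem_filter.2 ⟨hbmin.1, ?_⟩
      intro k hk hkb
      exact absurd (hbmin.2 hk hkb.le) (not_le_of_gt hkb)
    have hAantichain : IsAntichain (· ≤ ·) (↑A : Set P) := by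
      intro a ha b hb hab hle
      have hb' := Finset.mem_filter.1 (by exact_mod_cast hb)
      exact hb'.2 a (hAS (by exact_mod_cast ha)) (lt_of_le_of_ne hle hab)
    have hAne : A.Nonempty := by
      obtain ⟨j, hj⟩ := hne
      obtain ⟨a, haA, -⟩ := hAmin j ((hmemS j).1 hj)
      exact ⟨a, haA⟩
    obtain ⟨a₀, ha₀A, ha₀min⟩ := A.exists_min_image y hAne
    set lam := y a₀ with hlamdef
    have hlam_pos : 0 < lam :=
      lt_of_le_of_ne (h0 a₀) (Ne.symm ((hmemS a₀).1 (hAS ha₀A)))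
    have hylt1 : ∀ i, y i ≤ 1 := by
      intro i
      obtain ⟨l, hl, hil, -⟩ := ECP.exists_maxChain_pair (le_refl i)
      have hh := h1 l hl
      have hle := ECP.single_le_map_sum y h0 hil
      linarith
    have hlam1 : lam ≤ 1 := hylt1 a₀
    by_cases hlt : lam < 1
    · -- inductive step
      set c : ℝ := 1 - lam with hc
      have hcpos : 0 < c := by simp [hc]; linarith
      set y' : P → ℝ := fun i => if i ∈ A then (y i - lam) / c else y i / c with hy'
      have h0' : ∀ i, 0 ≤ y' i := by
        intro i
        rw [hy']
        dsimp only
        split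
        · next hi => exact div_nonneg (by linarith [ha₀min i hi]) hcpos.le
        · exact div_nonneg (h0 i) hcpos.le
      have hsupp' : ∀ i, y' i ≠ 0 → y i ≠ 0 := by
        intro i hi
        by_contra h'
        have hiA : i ∉ A := fun hiA => ((hmemS i).1 (hAS hiA)) h'
        apply hi
        rw [hy']; dsimp only; rw [if_neg hiA, h', zero_div]
      have ha₀' : y' a₀ = 0 := by
        rw [hy']; dsimp only; rw [if_pos ha₀A, ← hlamdef, sub_self, zero_div]
      have hcardlt : (Finset.univ.filter fun i => y' i ≠ 0).card < n := by
        rw [← hcard]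
        apply Finset.card_lt_card
        constructor
        · intro i hi
          simp only [Finset.mem_filter, Finset.mem_univ, true_and] at hi
          exact (hmemS i).2 (hsupp' i hi)
        · intro hsub
          have := hsub (hAS ha₀A)
          simp only [Finset.mem_filter, Finset.mem_univ, true_and] at this
          exact this ha₀'
      have hform : ∀ i, y' i = (y i - lam * (if i ∈ A then 1 else 0)) / c := by
        intro i
        rw [hy']; dsimp only
        split
        · simp
        · simp
      have h1' : ∀ l : List P, IsMaxChainList l → (l.map y').sum ≤ 1 := by
        intro l hl
        rw [ECP.map_sum_eq]
        have huniq := ECP.chain_antichain_unique hAantichain hl.2.1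
        rw [Finset.sum_congr rfl (fun j _ => hform (l.get j))]
        rw [← Finset.sum_div, div_le_one hcpos, Finset.sum_sub_distrib, ← Finset.mul_sum]
        have hbool : ∑ j : Fin l.length, (if l.get j ∈ A then (1:ℝ) else 0) =
            ((Finset.univ.filter (fun j : Fin l.length => l.get j ∈ A)).card : ℝ) := by
          rw [Finset.sum_boole]
        by_cases hAl : ∀ x ∈ l, x ∉ A
        · have hk0 : (Finset.univ.filter (fun j : Fin l.length => l.get j ∈ A)).card = 0 := by
            rw [Finset.card_eq_zero, Finset.filter_eq_empty_iff]
            intro j _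
            exact hAl (l.get j) (l.get_mem _)
          have hkey := ECP.key_ineq y h0 h1 A hAmin lam ha₀min hlam1 hl hAl
          rw [ECP.map_sum_eq] at hkey
          rw [hbool, hk0]
          simp only [Nat.cast_zero, mul_zero, sub_zero]
          linarith
        · push_neg at hAl
          obtain ⟨x, hxl, hxA⟩ := hAl
          obtain ⟨j₀, hj₀⟩ := List.mem_iff_get.1 hxl
          have hk1 : (Finset.univ.filter (fun j : Fin l.length => l.get j ∈ A)).card = 1 := by
            rw [Finset.card_eq_one]
            refine ⟨j₀, ?_⟩
            ext j
            simp only [Finset.mem_filter, Finset.mem_univ, true_and, Finset.mem_singleton]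
            constructor
            · intro hj
              exact huniq j j₀ hj (by rw [hj₀]; exact_mod_cast hxA)
            · rintro rfl
              rw [hj₀]; exact_mod_cast hxA
          have hh := h1 l hl
          rw [ECP.map_sum_eq] at hh
          rw [hbool, hk1]
          simp only [Nat.cast_one, mul_one]
          linarith
      have hIH := IH _ hcardlt y' rfl h0' h1'
      set χ : P → ℝ := fun i => if i ∈ A then 1 else 0 with hχ
      have hχv : χ ∈ enrichedChainVerts P := by
        refine ⟨↑A, hAantichain, ?_, ?_⟩
        · intro i hi
          left
          rw [hχ]; dsimp only; rw [if_pos (by exact_mod_cast hi)]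
        · intro i hi
          rw [hχ]; dsimp only; rw [if_neg (by exact_mod_cast hi)]
      have hdecomp : y = lam • χ + c • y' := by
        funext i
        simp only [Pi.add_apply, Pi.smul_apply, smul_eq_mul]
        rw [hχ, hy']
        dsimp only
        by_cases hi : i ∈ A
        · rw [if_pos hi, if_pos hi]
          field_simp
          ring
        · rw [if_neg hi, if_neg hi]
          field_simp
          ring
      rw [hdecomp]
      exact (convex_convexHull ℝ _) (subset_convexHull ℝ _ hχv) hIH hlam_pos.le
        (by linarith) (by rw [hc]; ring)
    · -- lam = 1 : y is the indicator of A
      have hlam1' : lam = 1 := le_antisymm hlam1 (not_lt.1 hlt)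
      have hsuppA : ∀ i, y i ≠ 0 → i ∈ A := by
        intro j hj
        by_contra hjA
        obtain ⟨a, haA, haj⟩ := hAmin j hj
        have hne' : a ≠ j := fun h => hjA (h ▸ haA)
        obtain ⟨l, hl, hal, hjl⟩ := ECP.exists_maxChain_pair haj
        have h2 := ECP.pair_le_map_sum y h0 hal hjl hne'
        have hh := h1 l hl
        have hya : lam ≤ y a := ha₀min a haA
        have hyj : 0 < y j := lt_of_le_of_ne (h0 j) (Ne.symm hj)
        linarith
      apply subset_convexHull ℝ (enrichedChainVerts P)
      refine ⟨↑A, hAantichain, ?_, ?_⟩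
      · intro i hi
        left
        exact le_antisymm (hylt1 i) (hlam1' ▸ ha₀min i (by exact_mod_cast hi))
      · intro i hi
        by_contra h
        exact hi (by exact_mod_cast hsuppA i h)

end Main

/-- Facet description of the enriched chain polytope: `C^(e)_P` is the solution
set of `Σ_j ε_j x_{i_j} ≤ 1` over maximal chains and sign choices. -/
theorem stmt7 (P : Type*) [Fintype P] [PartialOrder P] :
    convexHull ℝ (enrichedChainVerts P) =
      {x : P → ℝ | ∀ l : List P, IsMaxChainList l →
        ∀ ε : Fin l.length → ℝ, (∀ j, ε j = 1 ∨ ε j = -1) →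
          ∑ j : Fin l.length, ε j * x (l.get j) ≤ 1} := by
  classical
  apply Set.Subset.antisymm
  · apply convexHull_min
    · rintro x ⟨A, hA, hx1, hx0⟩ l hl ε hε
      calc ∑ j : Fin l.length, ε j * x (l.get j)
          ≤ ∑ j : Fin l.length, (if l.get j ∈ A then (1:ℝ) else 0) := by
            apply Finset.sum_le_sum
            intro j _
            by_cases hj : l.get j ∈ A
            · rw [if_pos hj]
              rcases hx1 _ hj with h | h <;> rcases hε j with h' | h' <;>
                rw [h, h'] <;> norm_num
            · rw [if_neg hj, hx0 _ hj, mul_zero]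
        _ ≤ 1 := by
            rw [Finset.sum_boole]
            have hcard : (Finset.univ.filter (fun j : Fin l.length => l.get j ∈ A)).card ≤ 1 := by
              apply Finset.card_le_one.2
              intro j hj k hk
              simp only [Finset.mem_filter, Finset.mem_univ, true_and] at hj hk
              exact ECP.chain_antichain_unique hA hl.2.1 j k hj hk
            exact_mod_cast hcard
    · intro x hx z hz a b ha hb hab
      intro l hl ε hε
      have hx' := hx l hl ε hε
      have hz' := hz l hl ε hε
      have hsplit : ∀ j : Fin l.length, ε j * (a • x + b • z) (l.get j) =
          a * (ε j * x (l.get j)) + b * (ε j * z (l.get j)) := by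
        intro j
        simp only [Pi.add_apply, Pi.smul_apply, smul_eq_mul]
        ring
      rw [Finset.sum_congr rfl fun j _ => hsplit j, Finset.sum_add_distrib,
        ← Finset.mul_sum, ← Finset.mul_sum]
      nlinarith [hx', hz']
  · intro x hx
    set s : P → ℝ := fun i => if x i < 0 then -1 else 1 with hsdef
    have hs : ∀ i, s i = 1 ∨ s i = -1 := by
      intro i
      rw [hsdef]; dsimp only
      split
      · right; rfl
      · left; rfl
    have hss : ∀ i, s i * s i = 1 := by
      intro i
      rcases hs i with h | h <;> rw [h] <;> norm_num
    set y : P → ℝ := fun i => s i * x i with hydef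
    have h0 : ∀ i, 0 ≤ y i := by
      intro i
      rw [hydef, hsdef]; dsimp only
      split
      · next h => nlinarith
      · next h => push_neg at h; nlinarith
    have h1 : ∀ l : List P, IsMaxChainList l → (l.map y).sum ≤ 1 := by
      intro l hl
      rw [ECP.map_sum_eq]
      exact hx l hl (fun j => s (l.get j)) (fun j => hs _)
    have hy := ECP.mem_hull y h0 h1
    let T : (P → ℝ) →ₗ[ℝ] (P → ℝ) :=
      { toFun := fun z i => s i * z i
        map_add' := fun u v => by funext i; simp [mul_add]
        map_smul' := fun r v => by funext i; simp [smul_eq_mul]; ring }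
    have hxy : x = T y := by
      funext i
      show x i = s i * (s i * x i)
      rw [← mul_assoc, hss i, one_mul]
    have himg : T '' enrichedChainVerts P ⊆ enrichedChainVerts P := by
      rintro _ ⟨v, ⟨A, hA, h1v, h0v⟩, rfl⟩
      refine ⟨A, hA, ?_, ?_⟩
      · intro i hi
        show s i * v i = 1 ∨ s i * v i = -1
        rcases hs i with h | h <;> rcases h1v i hi with h' | h' <;>
          rw [h, h'] <;> norm_num
      · intro i hi
        show s i * v i = 0
        rw [h0v i hi, mul_zero]
    rw [hxy]
    refine convexHull_mono himg ?_
    rw [← T.image_convexHull]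
    exact Set.mem_image_of_mem T hy
end

section
/- Let P be a finite poset on {1,...,n}. The enriched order polytope O^(e)_P equals the set of points x ∈ ℝ^n satisfying: (a) 2^{r−1} x_{i_1} − Σ_{j=2}^r 2^{r−j} x_{i_j} ≤ 1 for every saturated chain i_1 ⋖ ⋯ ⋖ i_r of P with i_r a maximal element of P; and (b) −Σ_{j=1}^r 2^{r−j} x_{i_j} ≤ 1 for every maximal chain i_1 ⋖ ⋯ ⋖ i_r of P. -/
/-- A saturated chain `i_1 ⋖ ⋯ ⋖ i_r` whose top `i_r` is a maximal element. -/
def IsSatChainToMax {P : Type*} [PartialOrder P] (l : List P) : Prop :=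
  l ≠ [] ∧ l.Chain' (· ⋖ ·) ∧ (∃ a, l.getLast? = some a ∧ IsMax a)

/-- weighted chain sum -/
noncomputable def wsum {P : Type*} (x : P → ℝ) : List P → ℝ
  | [] => 0
  | a :: t => 2 ^ t.length * x a + wsum x t

lemma wsum_nil {P : Type*} (x : P → ℝ) : wsum x ([] : List P) = 0 := rfl
lemma wsum_cons {P : Type*} (x : P → ℝ) (a : P) (t : List P) :
    wsum x (a :: t) = 2 ^ t.length * x a + wsum x t := rfl

lemma wsum_append {P : Type*} (x : P → ℝ) (l m : List P) :
    wsum x (l ++ m) = 2 ^ m.length * wsum x l + wsum x m := by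
  induction l with
  | nil => simp [wsum_nil]
  | cons a t ih =>
      simp only [List.cons_append, wsum_cons, ih, List.length_append, pow_add]
      ring

lemma wsum_le {P : Type*} (x : P → ℝ) (m : List P) (h : ∀ i ∈ m, x i ≤ 1) :
    wsum x m ≤ 2 ^ m.length - 1 := by
  induction m with
  | nil => simp [wsum_nil]
  | cons a t ih =>
      have h1 : x a ≤ 1 := h a (by simp)
      have h2 : wsum x t ≤ 2 ^ t.length - 1 := ih (fun i hi => h i (by simp [hi]))
      have hp : (0:ℝ) < 2 ^ t.length := by positivity
      simp only [wsum_cons, List.length_cons, pow_succ]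
      nlinarith

lemma wsum_eq_sum {P : Type*} (x : P → ℝ) (l : List P) :
    wsum x l = ∑ j : Fin l.length, (2:ℝ) ^ (l.length - 1 - (j:ℕ)) * x (l.get j) := by
  induction l with
  | nil => simp [wsum_nil]
  | cons a t ih =>
      rw [wsum_cons, ih]
      rw [show (∑ j : Fin (a :: t).length, (2:ℝ) ^ ((a :: t).length - 1 - (j:ℕ)) * x ((a :: t).get j)) = ∑ j : Fin (t.length + 1), (2:ℝ) ^ (t.length + 1 - 1 - (j:ℕ)) * x ((a :: t).get j) from rfl, Fin.sum_univ_succ]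
      symm
      refine congrArg₂ (· + ·) ?_ (Finset.sum_congr rfl fun j _ => ?_)
      · norm_num
      · show (2:ℝ) ^ (t.length + 1 - 1 - ((j:ℕ)+1)) * x (t.get j) = 2 ^ (t.length - 1 - (j:ℕ)) * x (t.get j)
        congr 2
        omega

/-- the (a)-type sum in the statement rewritten -/
lemma sumA_eq {P : Type*} (x : P → ℝ) (a : P) (t : List P) :
    (∑ j : Fin (a :: t).length,
      (if (j : ℕ) = 0 then (2 : ℝ) ^ ((a :: t).length - 1)
        else -(2 : ℝ) ^ ((a :: t).length - 1 - (j : ℕ))) * x ((a :: t).get j))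
    = 2 ^ (a :: t).length * x a - wsum x (a :: t) := by
  rw [show (∑ j : Fin (a :: t).length,
      (if (j : ℕ) = 0 then (2 : ℝ) ^ ((a :: t).length - 1)
        else -(2 : ℝ) ^ ((a :: t).length - 1 - (j : ℕ))) * x ((a :: t).get j)) =
      ∑ j : Fin (t.length + 1),
      (if (j : ℕ) = 0 then (2 : ℝ) ^ (t.length + 1 - 1)
        else -(2 : ℝ) ^ (t.length + 1 - 1 - (j : ℕ))) * x ((a :: t).get j) from rfl,
    Fin.sum_univ_succ]
  simp only [Fin.val_zero, Fin.val_succ, List.get, if_pos rfl, List.get_cons_succ', List.get_cons_zero, ↓reduceIte]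
  have h1 : (∑ j : Fin t.length,
      (if ((j:ℕ) + 1) = 0 then (2 : ℝ) ^ (t.length + 1 - 1)
        else -(2 : ℝ) ^ (t.length + 1 - 1 - ((j:ℕ) + 1))) * x (t.get j))
      = -wsum x t := by
    rw [wsum_eq_sum, ← Finset.sum_neg_distrib]
    apply Finset.sum_congr rfl
    intro j _
    rw [if_neg (by omega)]
    have : t.length + 1 - 1 - ((j:ℕ) + 1) = t.length - 1 - (j:ℕ) := by omega
    rw [this]
    ring
  rw [h1, wsum_cons]
  have : t.length + 1 - 1 = t.length := by omega
  rw [this]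
  rw [show (a::t).length = t.length + 1 from rfl, pow_succ]
  ring

section ChainStuff

variable {P : Type*} [Fintype P] [PartialOrder P]

open Classical in
/-- every element has a saturated chain to a maximal element above it -/
lemma exists_chain_to_max (a : P) :
    ∃ m : List P, (a :: m).Chain' (· ⋖ ·) ∧
      (∃ z, (a :: m).getLast? = some z ∧ IsMax z) ∧ (∀ b ∈ m, a < b) := by
  classical
  have hwf : WellFoundedGT P := Finite.to_wellFoundedGT
  by_cases hmax : IsMax a
  · exact ⟨[], List.isChain_singleton _, ⟨a, by simp, hmax⟩, by simp⟩
  · obtain ⟨c, hc⟩ := exists_covBy_of_wellFoundedLT hmax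
    obtain ⟨m', h1, ⟨z, hz, hzmax⟩, h3⟩ := exists_chain_to_max c
    refine ⟨c :: m', List.isChain_cons_cons.mpr ⟨hc, h1⟩, ⟨z, ?_, hzmax⟩, ?_⟩
    · rw [List.getLast?_cons_cons]
      exact hz
    · intro b hb
      rcases List.mem_cons.mp hb with h | h
      · exact h ▸ hc.lt
      · exact hc.lt.trans (h3 b h)
termination_by (Finset.univ.filter (fun z => a < z)).card
decreasing_by
  apply Finset.card_lt_card
  constructor
  · intro z hz
    simp only [Finset.mem_filter] at hz ⊢
    exact ⟨hz.1, hc.lt.trans hz.2⟩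
  · intro hsub
    have : c ∈ Finset.univ.filter (fun z => a < z) := by
      simp [hc.lt]
    have hc2 := hsub this
    simp at hc2

/-- gluing a chain with an extension of its last element -/
lemma chain_glue {l m : List P} {z : P} (hl : l.Chain' (· ⋖ ·)) (hz : l.getLast? = some z)
    (hm : (z :: m).Chain' (· ⋖ ·)) :
    (l ++ m).Chain' (· ⋖ ·) ∧ (l ++ m).getLast? = (z :: m).getLast? := by
  constructor
  · refine List.isChain_append.mpr ?_
    refine ⟨hl, hm.tail, ?_⟩
    intro y hy u hu
    rw [hz] at hy
    cases hy
    exact (List.isChain_cons.mp hm).1 u hu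
  · cases m with
    | nil => simpa using hz
    | cons b t =>
        rw [List.getLast?_cons_cons]
        have h1 : (l ++ b :: t).getLast? = (b :: t).getLast? :=
          List.getLast?_append_of_ne_nil l (by simp)
        exact h1

end ChainStuff

section Constraints

variable {P : Type*} [Fintype P] [PartialOrder P] {x : P → ℝ}

/-- abbreviation for hypothesis (a) in wsum form -/
def HypA (x : P → ℝ) : Prop := ∀ (a : P) (t : List P), (a :: t).Chain' (· ⋖ ·) →
    (∃ z, (a :: t).getLast? = some z ∧ IsMax z) →
    2 ^ (a :: t).length * x a - wsum x (a :: t) ≤ 1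

def HypB (x : P → ℝ) : Prop := ∀ (a : P) (t : List P), (a :: t).Chain' (· ⋖ ·) → IsMin a →
    (∃ z, (a :: t).getLast? = some z ∧ IsMax z) →
    -wsum x (a :: t) ≤ 1

open Classical in
lemma entry_le_one (hA : HypA x) (b : P) : x b ≤ 1 := by
  obtain ⟨m, hm, hz, hgt⟩ := exists_chain_to_max b
  have h1 : wsum x m ≤ 2 ^ m.length - 1 := by
    apply wsum_le
    intro i hi
    have hbi : b < i := hgt i hi
    exact entry_le_one hA i
  have h2 := hA b m hm hz
  rw [wsum_cons, List.length_cons, pow_succ] at h2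
  have hp : (0:ℝ) < 2 ^ m.length := by positivity
  nlinarith
termination_by (Finset.univ.filter (fun z => b < z)).card
decreasing_by
  apply Finset.card_lt_card
  constructor
  · intro z hz'
    simp only [Finset.mem_filter] at hz' ⊢
    exact ⟨hz'.1, hbi.trans hz'.2⟩
  · intro hsub
    have : i ∈ Finset.univ.filter (fun z => b < z) := by simp [hbi]
    have hc2 := hsub this
    simp at hc2

lemma chainA_le (hA : HypA x) (a : P) (t : List P) (hc : (a :: t).Chain' (· ⋖ ·)) :
    2 ^ (a :: t).length * x a - wsum x (a :: t) ≤ 1 := by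
  have hne : (a :: t) ≠ [] := by simp
  set z := (a :: t).getLast hne with hzdef
  have hz : (a :: t).getLast? = some z := List.getLast?_eq_getLast hne
  obtain ⟨m, hm, ⟨w, hw, hwmax⟩, _⟩ := exists_chain_to_max z
  obtain ⟨hcg, hlg⟩ := chain_glue hc hz hm
  have hcon := hA a (t ++ m) (by simpa using hcg) ⟨w, by rw [← List.cons_append]; rw [hlg]; exact hw, hwmax⟩
  have hws : wsum x (a :: (t ++ m)) = 2 ^ m.length * wsum x (a :: t) + wsum x m := by
    rw [← List.cons_append, wsum_append]
  have hlen : (a :: (t ++ m)).length = (a :: t).length + m.length := by simp; omega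
  have hS : wsum x m ≤ 2 ^ m.length - 1 := wsum_le x m (fun i _ => entry_le_one hA i)
  rw [hws, hlen, pow_add] at hcon
  have hp : (0:ℝ) < 2 ^ m.length := by positivity
  nlinarith

lemma chainB_le (hA : HypA x) (hB : HypB x) (a : P) (t : List P)
    (hc : (a :: t).Chain' (· ⋖ ·)) (hmin : IsMin a) :
    -wsum x (a :: t) ≤ 1 := by
  have hne : (a :: t) ≠ [] := by simp
  set z := (a :: t).getLast hne with hzdef
  have hz : (a :: t).getLast? = some z := List.getLast?_eq_getLast hne
  obtain ⟨m, hm, ⟨w, hw, hwmax⟩, _⟩ := exists_chain_to_max z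
  obtain ⟨hcg, hlg⟩ := chain_glue hc hz hm
  have hcon := hB a (t ++ m) (by simpa using hcg) hmin
    ⟨w, by rw [← List.cons_append]; rw [hlg]; exact hw, hwmax⟩
  have hws : wsum x (a :: (t ++ m)) = 2 ^ m.length * wsum x (a :: t) + wsum x m := by
    rw [← List.cons_append, wsum_append]
  have hS : wsum x m ≤ 2 ^ m.length - 1 := wsum_le x m (fun i _ => entry_le_one hA i)
  rw [hws] at hcon
  have hp : (0:ℝ) < 2 ^ m.length := by positivity
  nlinarith

end Constraints

section Rho

variable {P : Type*} [Fintype P] [PartialOrder P]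

open Classical in
/-- the transfer map: `rho x i = M + |x i - M|` where `M` is the max of `rho` below `i` (or 0) -/
noncomputable def rho (x : P → ℝ) (i : P) : ℝ :=
  let s := (Finset.univ.filter (fun j => j < i)).attach.image
    (fun j => rho x j.1)
  let M := (insert (0:ℝ) s).max' (Finset.insert_nonempty _ _)
  M + |x i - M|
termination_by (Finset.univ.filter (fun j => j < i)).card
decreasing_by
  apply Finset.card_lt_card
  have hji : j.1 < i := (Finset.mem_filter.mp j.2).2
  constructor
  · intro z hz'
    simp only [Finset.mem_filter] at hz' ⊢
    exact ⟨hz'.1, hz'.2.trans hji⟩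
  · intro hsub
    have : j.1 ∈ Finset.univ.filter (fun z => z < i) := by simp [hji]
    have hc2 := hsub (by simpa using hji)
    simp at hc2

open Classical in
/-- the max of rho over elements strictly below i, with 0 -/
noncomputable def Mlow (x : P → ℝ) (i : P) : ℝ :=
  (insert (0:ℝ) ((Finset.univ.filter (fun j => j < i)).image (rho x))).max'
    (Finset.insert_nonempty _ _)

open Classical in
lemma rho_eq (x : P → ℝ) (i : P) : rho x i = Mlow x i + |x i - Mlow x i| := by
  rw [rho]
  have : ((Finset.univ.filter (fun j => j < i)).attach.image
      (fun j => rho x j.1)) = (Finset.univ.filter (fun j => j < i)).image (rho x) := by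
    ext y
    simp [Finset.mem_image, Finset.mem_attach]
  simp only [this]
  rfl

open Classical in
lemma Mlow_nonneg (x : P → ℝ) (i : P) : 0 ≤ Mlow x i :=
  Finset.le_max' _ _ (Finset.mem_insert_self _ _)

open Classical in
lemma le_Mlow (x : P → ℝ) {j i : P} (h : j < i) : rho x j ≤ Mlow x i := by
  apply Finset.le_max'
  apply Finset.mem_insert_of_mem
  exact Finset.mem_image_of_mem _ (by simp [h])

lemma Mlow_le_rho (x : P → ℝ) (i : P) : Mlow x i ≤ rho x i := by
  rw [rho_eq]
  have := abs_nonneg (x i - Mlow x i)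
  linarith

lemma rho_nonneg (x : P → ℝ) (i : P) : 0 ≤ rho x i :=
  le_trans (Mlow_nonneg x i) (Mlow_le_rho x i)

lemma le_rho (x : P → ℝ) (i : P) : x i ≤ rho x i := by
  rw [rho_eq]
  have := le_abs_self (x i - Mlow x i)
  linarith

lemma two_Mlow_sub_le_rho (x : P → ℝ) (i : P) : 2 * Mlow x i - x i ≤ rho x i := by
  rw [rho_eq]
  have := neg_abs_le (x i - Mlow x i)
  linarith

lemma rho_le_of (x : P → ℝ) (i : P) {c : ℝ} (h1 : x i ≤ c) (h2 : 2 * Mlow x i - x i ≤ c) :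
    rho x i ≤ c := by
  rw [rho_eq]
  rcases le_or_gt (Mlow x i) (x i) with h | h
  · rw [abs_of_nonneg (by linarith)]
    linarith
  · rw [abs_of_neg (by linarith)]
    linarith

lemma rho_mono (x : P → ℝ) {j i : P} (h : j ≤ i) : rho x j ≤ rho x i := by
  rcases eq_or_lt_of_le h with rfl | h
  · exact le_refl _
  · exact le_trans (le_Mlow x h) (Mlow_le_rho x i)

open Classical in
/-- if anything lies below i, Mlow is attained -/
lemma Mlow_attained (x : P → ℝ) {i : P} {j0 : P} (hj0 : j0 < i) :
    ∃ j, j < i ∧ Mlow x i = rho x j := by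
  have hmem := Finset.max'_mem (insert (0:ℝ)
    ((Finset.univ.filter (fun j => j < i)).image (rho x))) (Finset.insert_nonempty _ _)
  rw [Finset.mem_insert] at hmem
  rcases hmem with h0 | hm
  · have h0' : Mlow x i = (0:ℝ) := h0
    refine ⟨j0, hj0, le_antisymm ?_ (le_Mlow x hj0)⟩
    rw [h0']
    exact rho_nonneg x j0
  · rw [Finset.mem_image] at hm
    obtain ⟨j, hj, hje⟩ := hm
    rw [Finset.mem_filter] at hj
    exact ⟨j, hj.2, hje.symm⟩

end Rho

section MainBound

variable {P : Type*} [Fintype P] [PartialOrder P] {x : P → ℝ}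

lemma wsum_singleton (x : P → ℝ) (i : P) : wsum x [i] = x i := by
  simp [wsum_cons, wsum_nil]

open Classical in
lemma Mlow_eq_zero_of_min (x : P → ℝ) {i : P} (hmin : ∀ j, ¬ j < i) : Mlow x i = 0 := by
  have he : Finset.univ.filter (fun j => j < i) = ∅ := by
    ext j
    simp [hmin j]
  rw [Mlow]
  simp [he]

open Classical in
lemma rho_chain_bound (hA : HypA x) (hB : HypB x) (i : P) :
    (∀ (b : P) (t : List P), (b :: t).Chain' (· ⋖ ·) → i ⋖ b →
      2 ^ (b :: t).length * rho x i ≤ 1 + wsum x (b :: t)) ∧ rho x i ≤ 1 := by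
  constructor
  · intro b t hc hib
    have hcc : (i :: b :: t).Chain' (· ⋖ ·) := List.isChain_cons_cons.mpr ⟨hib, hc⟩
    have hp : (0:ℝ) < 2 ^ (b :: t).length := by positivity
    rw [show (2:ℝ) ^ (b :: t).length * rho x i ≤ 1 + wsum x (b :: t) ↔
      rho x i ≤ (1 + wsum x (b :: t)) / 2 ^ (b :: t).length by
        rw [le_div_iff₀ hp]; constructor <;> intro h <;> linarith]
    apply rho_le_of
    · have h := chainA_le hA i (b :: t) hcc
      rw [wsum_cons, List.length_cons, pow_succ] at h
      rw [le_div_iff₀ hp]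
      linarith
    · by_cases hmin : ∃ j0, j0 < i
      · obtain ⟨j0, hj0⟩ := hmin
        obtain ⟨j, hj, hMe⟩ := Mlow_attained x hj0
        obtain ⟨j', hjj', hj'i⟩ := exists_le_covBy_of_lt hj
        have hmono : rho x j ≤ rho x j' := rho_mono x hjj'
        have hlt : j' < i := hj'i.lt
        have IH := (rho_chain_bound hA hB j').1 i (b :: t) hcc hj'i
        rw [wsum_cons, List.length_cons, pow_succ] at IH
        rw [hMe, le_div_iff₀ hp]
        nlinarith
      · push_neg at hmin
        have hisMin : IsMin i := by
          intro j hj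
          rcases eq_or_lt_of_le hj with h | h
          · exact h ▸ le_refl i
          · exact absurd h (hmin j)
        have hM0 : Mlow x i = 0 := Mlow_eq_zero_of_min x hmin
        have h := chainB_le hA hB i (b :: t) hcc hisMin
        rw [wsum_cons] at h
        rw [hM0, le_div_iff₀ hp]
        linarith
  · apply rho_le_of
    · exact entry_le_one hA i
    · by_cases hmin : ∃ j0, j0 < i
      · obtain ⟨j0, hj0⟩ := hmin
        obtain ⟨j, hj, hMe⟩ := Mlow_attained x hj0
        obtain ⟨j', hjj', hj'i⟩ := exists_le_covBy_of_lt hj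
        have hmono : rho x j ≤ rho x j' := rho_mono x hjj'
        have hlt : j' < i := hj'i.lt
        have IH := (rho_chain_bound hA hB j').1 i [] (List.isChain_singleton _) hj'i
        rw [wsum_singleton] at IH
        rw [show ((i:P) :: ([]:List P)).length = 1 from rfl, pow_one] at IH
        rw [hMe]
        linarith
      · push_neg at hmin
        have hisMin : IsMin i := by
          intro j hj
          rcases eq_or_lt_of_le hj with h | h
          · exact h ▸ le_refl i
          · exact absurd h (hmin j)
        have hM0 : Mlow x i = 0 := Mlow_eq_zero_of_min x hmin
        have h := chainB_le hA hB i [] (List.isChain_singleton _) hisMin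
        rw [wsum_singleton] at h
        rw [hM0]
        linarith
termination_by (Finset.univ.filter (fun j => j < i)).card
decreasing_by
  all_goals {
    apply Finset.card_lt_card
    constructor
    · intro z hz'
      simp only [Finset.mem_filter] at hz' ⊢
      exact ⟨hz'.1, hz'.2.trans hlt⟩
    · intro hsub
      have hc2 := hsub (by simpa using hlt)
      simp at hc2 }

lemma rho_le_one (hA : HypA x) (hB : HypB x) (i : P) : rho x i ≤ 1 :=
  (rho_chain_bound hA hB i).2

end MainBound

section Vertex

variable {P : Type*} [Fintype P] [PartialOrder P]

open Classical in
/-- the vertex associated to threshold t -/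
noncomputable def vert (x : P → ℝ) (t : ℝ) : P → ℝ := fun i =>
  if rho x i ≤ t then 0 else if Mlow x i ≤ t then (if Mlow x i ≤ x i then 1 else -1) else 1

open Classical in
lemma vert_mem_s8 (x : P → ℝ) {t : ℝ} (ht : 0 ≤ t) : vert x t ∈ enrichedOrderVerts P := by
  refine ⟨{i | t < rho x i}, ?_, ?_, ?_, ?_⟩
  · intro a b hab ha
    exact lt_of_lt_of_le ha (rho_mono x hab)
  · rintro i ⟨hiS, hminimal⟩
    have hMle : Mlow x i ≤ t := by
      by_contra hMgt
      push_neg at hMgt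
      have hex : ∃ j0, j0 < i := by
        by_contra hno
        push_neg at hno
        rw [Mlow_eq_zero_of_min x hno] at hMgt
        exact absurd ht (not_le.mpr hMgt)
      obtain ⟨j0, hj0⟩ := hex
      obtain ⟨j, hji, hMe⟩ := Mlow_attained x hj0
      have hjS : j ∈ {i | t < rho x i} := by
        simp only [Set.mem_setOf_eq, ← hMe]
        exact hMgt
      have := hminimal j hjS hji.le
      exact absurd this (ne_of_lt hji)
    unfold vert
    rw [if_neg (not_le.mpr hiS), if_pos hMle]
    rcases le_or_gt (Mlow x i) (x i) with h | h
    · left; rw [if_pos h]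
    · right; rw [if_neg (not_le.mpr h)]
  · intro i hiS hnotmin
    have hiS' : t < rho x i := hiS
    have hex : ∃ b, b ∈ {i | t < rho x i} ∧ b ≤ i ∧ b ≠ i := by
      by_contra hno
      push_neg at hno
      exact hnotmin ⟨hiS, fun b hb hbi => hno b hb hbi⟩
    obtain ⟨b, hbS, hbi, hbne⟩ := hex
    have hblt : b < i := lt_of_le_of_ne hbi hbne
    have hMgt : t < Mlow x i := lt_of_lt_of_le hbS (le_Mlow x hblt)
    unfold vert
    rw [if_neg (not_le.mpr hiS'), if_neg (not_le.mpr hMgt)]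
  · intro i hiS
    have : rho x i ≤ t := not_lt.mp hiS
    unfold vert
    rw [if_pos this]

end Vertex

section Decomp

variable {P : Type*} [Fintype P] [PartialOrder P]

open Finset in
open Classical in
lemma mem_hull_of_hyps {x : P → ℝ} (hA : HypA x) (hB : HypB x) :
    x ∈ convexHull ℝ (enrichedOrderVerts P) := by
  classical
  set V : Finset ℝ := insert 0 (insert 1 (Finset.univ.image (rho x))) with hVdef
  have hVne : V.Nonempty := ⟨0, by simp [hVdef]⟩
  have hVlo : ∀ a ∈ V, 0 ≤ a := by
    intro a ha
    simp only [hVdef, mem_insert, mem_image] at ha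
    rcases ha with rfl | rfl | ⟨i, _, rfl⟩
    · exact le_refl 0
    · exact zero_le_one
    · exact rho_nonneg x i
  have hVhi : ∀ a ∈ V, a ≤ 1 := by
    intro a ha
    simp only [hVdef, mem_insert, mem_image] at ha
    rcases ha with rfl | rfl | ⟨i, _, rfl⟩
    · exact zero_le_one
    · exact le_refl 1
    · exact rho_le_one hA hB i
  set L : List ℝ := V.sort (· ≤ ·) with hLdef
  have hsort : L.SortedLT := V.sortedLT_sort
  have hsorted : L.Pairwise (· ≤ ·) := V.pairwise_sort _
  set n : ℕ := L.length with hndef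
  have hn : 0 < n := by
    rw [hndef, hLdef, Finset.length_sort]
    exact Finset.card_pos.mpr hVne
  set g : ℕ → ℝ := fun k => L.getD k 1 with hgdef
  have hget : ∀ {k : ℕ} (hk : k < n), g k = L.get ⟨k, hk⟩ := by
    intro k hk
    rw [hgdef]
    exact List.getD_eq_get (l := L) (d := 1) ⟨k, hk⟩
  have hmemV : ∀ {k : ℕ}, k < n → g k ∈ V := by
    intro k hk
    rw [hget hk]
    exact (Finset.mem_sort (α := ℝ) (· ≤ ·)).1 (List.get_mem L ⟨k, hk⟩)
  have hg_default : ∀ {k : ℕ}, n ≤ k → g k = 1 := by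
    intro k hk
    rw [hgdef]
    exact List.getD_eq_default L 1 hk
  have hg0 : g 0 = 0 := by
    rw [hget hn]
    have h1 : L.get ⟨0, hn⟩ = V.min' hVne := Finset.sorted_zero_eq_min'_aux V hn hVne
    rw [h1]
    apply le_antisymm
    · exact Finset.min'_le V 0 (by simp [hVdef])
    · exact hVlo _ (V.min'_mem hVne)
  have hglast : g (n-1) = 1 := by
    have hlt : n - 1 < n := Nat.sub_lt hn one_pos
    rw [hget hlt]
    have hlen : L.length - 1 < L.length := by rw [← hndef]; exact hlt
    have h1 : L.get ⟨n - 1, hlt⟩ = V.max' hVne := by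
      have := Finset.sorted_last_eq_max'_aux V hlen hVne
      rw [← this]
      rfl
    rw [h1]
    apply le_antisymm
    · exact hVhi _ (V.max'_mem hVne)
    · exact Finset.le_max' V 1 (by simp [hVdef])
  have hg_mono : Monotone g := by
    intro k k' hkk'
    by_cases hk' : k' < n
    · have hk : k < n := lt_of_le_of_lt hkk' hk'
      rw [hget hk, hget hk']
      rcases eq_or_lt_of_le hkk' with rfl | h
      · exact le_refl _
      · exact le_of_lt (hsort.strictMono_get (show (⟨k, hk⟩ : Fin n) < ⟨k', hk'⟩ from h))
    · push_neg at hk'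
      rw [hg_default hk']
      by_cases hk : k < n
      · exact hVhi _ (hmemV hk)
      · push_neg at hk
        rw [hg_default hk]
  have hg_strict : ∀ {k k' : ℕ}, k < k' → k' < n → g k < g k' := by
    intro k k' h hk'
    have hk : k < n := h.trans hk'
    rw [hget hk, hget hk']
    exact hsort.strictMono_get (show (⟨k, hk⟩ : Fin n) < ⟨k', hk'⟩ from h)
  -- the key telescoping identity
  have key : ∀ a ∈ V, (∑ k ∈ Finset.range (n-1),
      (g (k+1) - g k) * (if g k < a then 1 else 0)) = a := by
    intro a haV
    have haL : a ∈ L := (Finset.mem_sort (α := ℝ) (· ≤ ·)).2 haV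
    obtain ⟨⟨idx, hidx⟩, hidxe⟩ := List.mem_iff_get.1 haL
    have hidxe' : g idx = a := by rw [hget hidx]; exact hidxe
    have hchar : ∀ k ∈ Finset.range (n-1),
        (g (k+1) - g k) * (if g k < a then 1 else 0)
          = if k < idx then g (k+1) - g k else 0 := by
      intro k hk
      rw [Finset.mem_range] at hk
      by_cases h : k < idx
      · rw [if_pos h, if_pos (by rw [← hidxe']; exact hg_strict h hidx), mul_one]
      · push_neg at h
        rw [if_neg (not_lt.mpr h), if_neg (by rw [← hidxe']; exact not_lt.mpr (hg_mono h)), mul_zero]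
    rw [Finset.sum_congr rfl hchar]
    have hsub : Finset.range idx ⊆ Finset.range (n-1) := by
      apply Finset.range_subset_range.mpr
      omega
    rw [← Finset.sum_subset hsub (fun k _ hk => by
      rw [if_neg (by rw [Finset.mem_range] at hk; omega)])]
    rw [Finset.sum_congr rfl (fun k hk => by
      rw [if_pos (Finset.mem_range.1 hk)])]
    rw [Finset.sum_range_sub (fun k => g k) idx]
    rw [hidxe', hg0, sub_zero]
  -- coordinate identity
  have hxid : ∀ i : P, (∑ k ∈ Finset.range (n-1), (g (k+1) - g k) * vert x (g k) i) = x i := by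
    intro i
    have hrV : rho x i ∈ V := by simp [hVdef]
    have hMV : Mlow x i ∈ V := by
      by_cases hex : ∃ j0, j0 < i
      · obtain ⟨j0, hj0⟩ := hex
        obtain ⟨j, _, hMe⟩ := Mlow_attained x hj0
        rw [hMe]
        simp [hVdef]
      · push_neg at hex
        rw [Mlow_eq_zero_of_min x hex]
        simp [hVdef]
    set ε : ℝ := if Mlow x i ≤ x i then 1 else -1 with hεdef
    have hexp : ∀ t : ℝ, vert x t i
        = ε * (if t < rho x i then 1 else 0) + (1 - ε) * (if t < Mlow x i then 1 else 0) := by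
      intro t
      unfold vert
      rcases le_or_gt (rho x i) t with h | h
      · rw [if_pos h, if_neg (not_lt.mpr h),
          if_neg (not_lt.mpr ((Mlow_le_rho x i).trans h))]
        ring
      · rw [if_neg (not_le.mpr h), if_pos h]
        rcases le_or_gt (Mlow x i) t with h2 | h2
        · rw [if_pos h2, if_neg (not_lt.mpr h2)]
          rw [← hεdef]
          ring
        · rw [if_neg (not_le.mpr h2), if_pos h2]
          ring
    calc (∑ k ∈ Finset.range (n-1), (g (k+1) - g k) * vert x (g k) i)
        = ∑ k ∈ Finset.range (n-1), (ε * ((g (k+1) - g k) * (if g k < rho x i then 1 else 0))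
          + (1-ε) * ((g (k+1) - g k) * (if g k < Mlow x i then 1 else 0))) := by
          apply Finset.sum_congr rfl
          intro k _
          rw [hexp (g k)]
          ring
      _ = ε * (∑ k ∈ Finset.range (n-1), (g (k+1) - g k) * (if g k < rho x i then 1 else 0))
          + (1-ε) * (∑ k ∈ Finset.range (n-1), (g (k+1) - g k) * (if g k < Mlow x i then 1 else 0)) := by
          rw [Finset.sum_add_distrib, Finset.mul_sum, Finset.mul_sum]
      _ = ε * rho x i + (1-ε) * Mlow x i := by rw [key _ hrV, key _ hMV]
      _ = x i := by
          rw [hεdef]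
          rcases le_or_gt (Mlow x i) (x i) with h | h
          · rw [if_pos h, rho_eq, abs_of_nonneg (by linarith)]
            ring
          · rw [if_neg (not_le.mpr h), rho_eq, abs_of_neg (by linarith)]
            ring
  -- assemble
  have hxw : x = ∑ k ∈ Finset.range (n-1), (g (k+1) - g k) • vert x (g k) := by
    funext i
    rw [Finset.sum_apply]
    rw [← hxid i]
    apply Finset.sum_congr rfl
    intro k _
    simp [smul_eq_mul]
  rw [hxw]
  apply (convex_convexHull ℝ (enrichedOrderVerts P)).sum_mem
  · intro k _
    have := hg_mono (Nat.le_succ k)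
    linarith
  · rw [Finset.sum_range_sub (fun k => g k) (n-1), hglast, hg0]
    ring
  · intro k hk
    rw [Finset.mem_range] at hk
    apply subset_convexHull
    apply vert_mem_s8
    exact hVlo _ (hmemV (by omega))

end Decomp

section EasyDir

variable {P : Type*} [Fintype P] [PartialOrder P]

lemma vert_bounds {v : P → ℝ} (hv : v ∈ enrichedOrderVerts P) (i : P) :
    -1 ≤ v i ∧ v i ≤ 1 := by
  obtain ⟨F, hup, hmin, hcomin, hout⟩ := hv
  by_cases hiF : i ∈ F
  · by_cases him : i ∈ minSet F
    · rcases hmin i him with h | h <;> rw [h] <;> norm_num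
    · rw [hcomin i hiF him]; norm_num
  · rw [hout i hiF]; norm_num

lemma vert_wsum_ge {v : P → ℝ} {F : Set P} (hup : IsUpperSet F)
    (hcomin : ∀ i ∈ F, i ∉ minSet F → v i = 1) :
    ∀ (t : List P) (a : P), (a :: t).Chain' (· ⋖ ·) → a ∈ F →
      2 ^ t.length * v a + (2 ^ t.length - 1) ≤ wsum v (a :: t) := by
  intro t
  induction t with
  | nil =>
      intro a _ _
      rw [wsum_singleton]
      simp
  | cons b t' ih =>
      intro a hc haF
      have hab : a ⋖ b := (List.isChain_cons_cons.mp hc).1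
      have hcb : (b :: t').Chain' (· ⋖ ·) := (List.isChain_cons_cons.mp hc).2
      have hbF : b ∈ F := hup hab.le haF
      have hvb : v b = 1 := hcomin b hbF
        (fun hbm => absurd (hbm.2 a haF hab.le) (ne_of_lt hab.lt))
      have hIH := ih b hcb hbF
      rw [hvb] at hIH
      rw [wsum_cons, List.length_cons, pow_succ]
      have hp : (0:ℝ) < 2 ^ t'.length := by positivity
      nlinarith

lemma vert_wsum_low {v : P → ℝ} {F : Set P} (hup : IsUpperSet F)
    (hcomin : ∀ i ∈ F, i ∉ minSet F → v i = 1)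
    (hout : ∀ i, i ∉ F → v i = 0)
    (hbd : ∀ i, -1 ≤ v i ∧ v i ≤ 1) :
    ∀ l : List P, l.Chain' (· ⋖ ·) → -1 ≤ wsum v l := by
  intro l
  induction l with
  | nil => rw [wsum_nil]; norm_num
  | cons a t ih =>
      intro hc
      by_cases haF : a ∈ F
      · have h1 := vert_wsum_ge hup hcomin t a hc haF
        have h2 := (hbd a).1
        have hp : (0:ℝ) < 2 ^ t.length := by positivity
        nlinarith
      · rw [wsum_cons, hout a haF, mul_zero, zero_add]
        exact ih hc.tail

lemma vert_constraints {v : P → ℝ} (hv : v ∈ enrichedOrderVerts P) :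
    (∀ (a : P) (t : List P), (a :: t).Chain' (· ⋖ ·) →
      2 ^ (a :: t).length * v a - wsum v (a :: t) ≤ 1) ∧
    (∀ (a : P) (t : List P), (a :: t).Chain' (· ⋖ ·) → -wsum v (a :: t) ≤ 1) := by
  have hbd := vert_bounds hv
  obtain ⟨F, hup, hmin, hcomin, hout⟩ := hv
  constructor
  · intro a t hc
    by_cases haF : a ∈ F
    · have h1 := vert_wsum_ge hup hcomin t a hc haF
      have h2 := (hbd a).2
      have hp : (0:ℝ) < 2 ^ t.length := by positivity
      rw [List.length_cons, pow_succ]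
      nlinarith
    · have h1 := vert_wsum_low hup hcomin hout hbd (a :: t) hc
      have h2 : v a = 0 := hout a haF
      rw [List.length_cons, pow_succ, h2]
      linarith
  · intro a t hc
    have h1 := vert_wsum_low hup hcomin hout hbd (a :: t) hc
    linarith

end EasyDir

/-- Facet description of the enriched order polytope: inequalities (a)
`2^{r-1} x_{i_1} - Σ_{j=2}^r 2^{r-j} x_{i_j} ≤ 1` over saturated chains ending at
a maximal element, and (b) `-Σ_{j=1}^r 2^{r-j} x_{i_j} ≤ 1` over maximal chains. -/
theorem stmt8 (P : Type*) [Fintype P] [PartialOrder P] :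
    convexHull ℝ (enrichedOrderVerts P) =
      {x : P → ℝ |
        (∀ l : List P, IsSatChainToMax l →
          ∑ j : Fin l.length,
            (if (j : ℕ) = 0 then (2 : ℝ) ^ (l.length - 1)
              else -(2 : ℝ) ^ (l.length - 1 - (j : ℕ))) * x (l.get j) ≤ 1) ∧
        (∀ l : List P, IsMaxChainList l →
          -∑ j : Fin l.length, (2 : ℝ) ^ (l.length - 1 - (j : ℕ)) * x (l.get j) ≤ 1)} := by
  apply Set.Subset.antisymm
  · apply convexHull_min
    · intro v hv
      obtain ⟨hca, hcb⟩ := vert_constraints hv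
      constructor
      · intro l hl
        obtain ⟨hne, hc, _⟩ := hl
        cases l with
        | nil => exact absurd rfl hne
        | cons a t =>
            rw [sumA_eq]
            exact hca a t hc
      · intro l hl
        obtain ⟨hne, hc, _, _⟩ := hl
        cases l with
        | nil => exact absurd rfl hne
        | cons a t =>
            rw [← wsum_eq_sum]
            exact hcb a t hc
    · intro x1 hx1 x2 hx2 a b ha hb hab
      constructor
      · intro l hl
        have h1 := hx1.1 l hl
        have h2 := hx2.1 l hl
        have heq : (∑ j : Fin l.length,
            (if (j : ℕ) = 0 then (2 : ℝ) ^ (l.length - 1)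
              else -(2 : ℝ) ^ (l.length - 1 - (j : ℕ))) * (a • x1 + b • x2) (l.get j))
            = a * (∑ j : Fin l.length,
            (if (j : ℕ) = 0 then (2 : ℝ) ^ (l.length - 1)
              else -(2 : ℝ) ^ (l.length - 1 - (j : ℕ))) * x1 (l.get j))
            + b * (∑ j : Fin l.length,
            (if (j : ℕ) = 0 then (2 : ℝ) ^ (l.length - 1)
              else -(2 : ℝ) ^ (l.length - 1 - (j : ℕ))) * x2 (l.get j)) := by
          rw [Finset.mul_sum, Finset.mul_sum, ← Finset.sum_add_distrib]
          apply Finset.sum_congr rfl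
          intro j _
          simp only [Pi.add_apply, Pi.smul_apply, smul_eq_mul]
          ring
        rw [heq]
        nlinarith
      · intro l hl
        have h1 := hx1.2 l hl
        have h2 := hx2.2 l hl
        have heq : (∑ j : Fin l.length,
            (2 : ℝ) ^ (l.length - 1 - (j : ℕ)) * (a • x1 + b • x2) (l.get j))
            = a * (∑ j : Fin l.length, (2 : ℝ) ^ (l.length - 1 - (j : ℕ)) * x1 (l.get j))
            + b * (∑ j : Fin l.length, (2 : ℝ) ^ (l.length - 1 - (j : ℕ)) * x2 (l.get j)) := by
          rw [Finset.mul_sum, Finset.mul_sum, ← Finset.sum_add_distrib]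
          apply Finset.sum_congr rfl
          intro j _
          simp only [Pi.add_apply, Pi.smul_apply, smul_eq_mul]
          ring
        rw [heq]
        nlinarith
  · intro x hx
    obtain ⟨ha, hb⟩ := hx
    apply mem_hull_of_hyps
    · intro a t hc hz
      have h := ha (a :: t) ⟨by simp, hc, hz⟩
      rw [sumA_eq] at h
      exact h
    · intro a t hc hmin hz
      have h := hb (a :: t) ⟨by simp, hc, ⟨a, rfl, hmin⟩, hz⟩
      rw [← wsum_eq_sum] at h
      exact h
end

section
/- Let P be a finite poset on {1,...,n}, F a filter of P with minimal set F_min and F_comin = F \ F_min, and ε ∈ {−1,1}^{|F_min|}. Then the point v = e^ε_{F_min} + e_{F_comin} satisfies, for every saturated chain i_1 ⋖ ⋯ ⋖ i_r of P with i_r maximal in P, the inequality 2^{r−1} v_{i_1} − Σ_{j=2}^r 2^{r−j} v_{i_j} ≤ 1, and for every maximal chain i_1 ⋖ ⋯ ⋖ i_r of P, the inequality −Σ_{j=1}^r 2^{r−j} v_{i_j} ≤ 1. -/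
noncomputable def chainSum {P : Type*} (v : P → ℝ) : List P → ℝ
  | [] => 0
  | a :: t => 2 ^ t.length * v a + chainSum v t

lemma chainSum_eq {P : Type*} (v : P → ℝ) (l : List P) :
    ∑ j : Fin l.length, (2:ℝ) ^ (l.length - 1 - (j : ℕ)) * v (l.get j)
      = chainSum v l := by
  induction l with
  | nil => simp [chainSum]
  | cons a t ih =>
    rw [chainSum, ← ih]
    simp only [List.length_cons]
    rw [Fin.sum_univ_succ]
    simp only [Fin.val_succ, Fin.val_zero, Nat.add_sub_cancel, Nat.sub_zero, List.get]
    congr 1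
    apply Finset.sum_congr rfl
    intro j _
    congr 2
    omega

lemma aSum_eq {P : Type*} (v : P → ℝ) (a : P) (t : List P) :
    ∑ j : Fin (a :: t).length,
        (if (j : ℕ) = 0 then (2 : ℝ) ^ ((a :: t).length - 1)
          else -(2 : ℝ) ^ ((a :: t).length - 1 - (j : ℕ))) * v ((a :: t).get j)
      = 2 ^ t.length * v a - chainSum v t := by
  rw [← chainSum_eq]
  simp only [List.length_cons]
  rw [Fin.sum_univ_succ, sub_eq_add_neg, ← Finset.sum_neg_distrib]
  simp only [Fin.val_succ, Fin.val_zero, Nat.add_sub_cancel, List.get, if_pos rfl,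
    if_neg (Nat.succ_ne_zero _)]
  congr 1
  apply Finset.sum_congr rfl
  intro j _
  rw [neg_mul]
  congr 3
  omega

/-- Each generating vector `e^ε_{F_min} + e_{F_comin}` of the enriched order
polytope satisfies inequalities (a) and (b). -/
theorem stmt10 (P : Type*) [Fintype P] [PartialOrder P]
    (v : P → ℝ) (hv : v ∈ enrichedOrderVerts P) :
    (∀ l : List P, IsSatChainToMax l →
      ∑ j : Fin l.length,
        (if (j : ℕ) = 0 then (2 : ℝ) ^ (l.length - 1)
          else -(2 : ℝ) ^ (l.length - 1 - (j : ℕ))) * v (l.get j) ≤ 1) ∧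
    (∀ l : List P, IsMaxChainList l →
      -∑ j : Fin l.length, (2 : ℝ) ^ (l.length - 1 - (j : ℕ)) * v (l.get j) ≤ 1) := by
  obtain ⟨F, hF, hmin, hcomin, hout⟩ := hv
  -- anything strictly above an element of F has value 1
  have hval : ∀ a x : P, a ∈ F → a < x → v x = 1 := by
    intro a x haF hax
    have hxF : x ∈ F := hF hax.le haF
    refine hcomin x hxF ?_
    intro hxmin
    exact hax.ne (hxmin.2 a haF hax.le)
  have hmem : ∀ x : P, v x ≠ 0 → x ∈ F := by
    intro x hx
    by_contra h
    exact hx (hout x h)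
  have hcases : ∀ x : P, v x = 1 ∨ v x = -1 ∨ v x = 0 := by
    intro x
    by_cases hxF : x ∈ F
    · by_cases hxm : x ∈ minSet F
      · rcases hmin x hxm with h | h
        · exact Or.inl h
        · exact Or.inr (Or.inl h)
      · exact Or.inl (hcomin x hxF hxm)
    · exact Or.inr (Or.inr (hout x hxF))
  -- if head is in F, all the tail has value one; chainSum formula for all-one lists
  have hallone : ∀ l : List P, (∀ x ∈ l, v x = 1) → chainSum v l = 2 ^ l.length - 1 := by
    intro l hl
    induction l with
    | nil => simp [chainSum]
    | cons a t ih =>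
      rw [chainSum, hl a (by simp), ih (fun x hx => hl x (by simp [hx]))]
      simp [pow_succ]
      ring
  have hpos : ∀ n : ℕ, (0:ℝ) ≤ 2 ^ n := fun n => by positivity
  -- key lower bound
  have hT : ∀ l : List P, l.Pairwise (· < ·) → -1 ≤ chainSum v l := by
    intro l hl
    induction l with
    | nil => simp [chainSum]
    | cons a t ih =>
      rw [List.pairwise_cons] at hl
      have iht := ih hl.2
      rw [chainSum]
      rcases hcases a with h | h | h
      · have haF : a ∈ F := hmem a (by rw [h]; norm_num)
        have : ∀ x ∈ t, v x = 1 := fun x hx => hval a x haF (hl.1 x hx)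
        rw [h, hallone t this]
        have := hpos t.length
        linarith
      · have haF : a ∈ F := hmem a (by rw [h]; norm_num)
        have : ∀ x ∈ t, v x = 1 := fun x hx => hval a x haF (hl.1 x hx)
        rw [h, hallone t this]
        ring_nf
        linarith
      · rw [h]
        linarith
  have hchain : ∀ l : List P, l.Chain' (· ⋖ ·) → l.Pairwise (· < ·) := by
    intro l hl
    have : l.Chain' (· < ·) := List.IsChain.imp (fun a b h => h.lt) hl
    exact List.isChain_iff_pairwise.mp this
  constructor
  · rintro l ⟨hne, hch, -⟩
    obtain ⟨a, t, rfl⟩ := List.exists_cons_of_ne_nil hne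
    have hp := hchain _ hch
    rw [List.pairwise_cons] at hp
    rw [aSum_eq]
    rcases hcases a with h | h | h
    · have haF : a ∈ F := hmem a (by rw [h]; norm_num)
      have : ∀ x ∈ t, v x = 1 := fun x hx => hval a x haF (hp.1 x hx)
      rw [h, hallone t this]
      ring_nf
      linarith
    · have := hT t hp.2
      have := hpos t.length
      rw [h]
      nlinarith
    · have := hT t hp.2
      rw [h]
      nlinarith
  · rintro l ⟨hne, hch, -, -⟩
    have := hT l (hchain l hch)
    rw [chainSum_eq]
    linarith
end

section
/- Fix an integer n ≥ 5. The maximum of 2·m_1m_2⋯m_r + Σ_{j=1}^{r−1} ∏_{k=1}^{j} m_k over all r ≥ 1 and positive integers m_1,...,m_r with m_1 + ⋯ + m_r = n equals: (47/2)·3^{k−2} − 3/2 if n = 3k; (23/2)·3^{k−1} − 3/2 if n = 3k+1; (11/2)·3^k − 3/2 if n = 3k+2. -/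
/-- The set of values `2·m_1⋯m_r + Σ_{j=1}^{r-1} m_1⋯m_j` over all compositions
`(m_1, …, m_r)` of `n` into positive integer parts. -/
def compositionValues (n : ℕ) : Set ℕ :=
  {v | ∃ m : List ℕ, m ≠ [] ∧ (∀ x ∈ m, 1 ≤ x) ∧ m.sum = n ∧
    v = 2 * m.prod + ∑ j ∈ Finset.range (m.length - 1), (m.take (j + 1)).prod}

def M : ℕ → ℕ
  | 0 => 0
  | 1 => 2
  | 2 => 4
  | 3 => 6
  | 4 => 10
  | 5 => 15
  | 6 => 22
  | (n+7) => 3 * M (n+4) + 3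

lemma Mstep (n : ℕ) (h : 4 ≤ n) : M (n + 3) = 3 * M n + 3 := by
  obtain ⟨m, rfl⟩ : ∃ m, n = m + 4 := ⟨n - 4, by omega⟩
  show M (m + 7) = _
  simp [M]

lemma ind3 (P : ℕ → Prop) (h1 : P 1) (h2 : P 2) (h3 : P 3) (h4 : P 4)
    (h5 : P 5) (h6 : P 6) (hstep : ∀ s, 4 ≤ s → P s → P (s + 3)) :
    ∀ s, 1 ≤ s → P s := by
  intro s
  induction s using Nat.strong_induction_on with
  | _ s ih =>
    intro hs
    rcases le_or_gt s 6 with h | h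
    · interval_cases s <;> assumption
    · obtain ⟨t, rfl⟩ : ∃ t, s = t + 3 := ⟨s - 3, by omega⟩
      exact hstep t (by omega) (ih t (by omega) (by omega))

lemma M_two_mul : ∀ n, 1 ≤ n → 2 * n ≤ M n := by
  apply ind3 <;> try (norm_num [M])
  intro s hs ih
  rw [Mstep s hs]
  omega

lemma K1 : ∀ s, 1 ≤ s → 1 + M s ≤ M (s + 1) := by
  apply ind3 <;> try (norm_num [M])
  intro s hs ih
  rw [show s + 3 + 1 = (s+1) + 3 by ring, Mstep s hs, Mstep (s+1) (by omega)]
  omega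

lemma K2 : ∀ s, 1 ≤ s → 2 * (1 + M s) ≤ M (s + 2) := by
  apply ind3 <;> try (norm_num [M])
  intro s hs ih
  rw [show s + 3 + 2 = (s+2) + 3 by ring, Mstep s hs, Mstep (s+2) (by omega)]
  omega

lemma K3 : ∀ s, 1 ≤ s → 3 * (1 + M s) ≤ M (s + 3) := by
  intro s hs
  rcases le_or_gt s 3 with h | h
  · interval_cases s <;> norm_num [M]
  · rw [Mstep s (by omega)]
    omega

lemma K4 : ∀ s, 1 ≤ s → 4 * (1 + M s) ≤ M (s + 4) := by
  intro s hs
  have h1 := K2 s hs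
  have h2 := K2 (s + 2) (by omega)
  rw [show s + 2 + 2 = s + 4 by ring] at h2
  omega

lemma K : ∀ a s : ℕ, 1 ≤ a → 1 ≤ s → a * (1 + M s) ≤ M (a + s) := by
  intro a
  induction a using Nat.strong_induction_on with
  | _ a ih =>
    intro s ha hs
    rcases le_or_gt a 4 with h | h
    · interval_cases a
      · rw [show 1 + s = s + 1 by ring]; have := K1 s hs; omega
      · rw [show 2 + s = s + 2 by ring]; have := K2 s hs; omega
      · rw [show 3 + s = s + 3 by ring]; have := K3 s hs; omega
      · rw [show 4 + s = s + 4 by ring]; have := K4 s hs; omega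
    · have h1 := ih (a - 3) (by omega) s (by omega) hs
      have h2 := K3 (a - 3 + s) (by omega)
      rw [show a - 3 + s + 3 = a + s by omega] at h2
      calc a * (1 + M s) ≤ (3 * (a - 3)) * (1 + M s) :=
            Nat.mul_le_mul_right _ (by omega)
        _ = 3 * ((a - 3) * (1 + M s)) := by ring
        _ ≤ 3 * M (a - 3 + s) := Nat.mul_le_mul_left _ h1
        _ ≤ M (a + s) := by omega

def F : List ℕ → ℕ
  | [] => 1
  | (a :: t) => a * (1 + F t)

lemma F_val : ∀ m : List ℕ, m ≠ [] →
    2 * m.prod + ∑ j ∈ Finset.range (m.length - 1), (m.take (j + 1)).prod = F m := by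
  intro m
  induction m with
  | nil => simp
  | cons a t ih =>
    intro _
    rcases eq_or_ne t [] with rfl | ht
    · simp [F]; ring
    · have hL : (a :: t).length - 1 = t.length := by simp
      have hL2 : t.length = (t.length - 1) + 1 := by
        have := List.length_pos_iff.mpr ht; omega
      have hsum : ∑ j ∈ Finset.range ((a :: t).length - 1), ((a :: t).take (j + 1)).prod
          = a * (∑ j ∈ Finset.range (t.length - 1), (t.take (j + 1)).prod) + a := by
        rw [hL, hL2, Finset.sum_range_succ']
        simp only [List.take_succ_cons, List.prod_cons, List.take_zero, List.prod_nil,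
          mul_one]
        rw [Finset.mul_sum]
        simp
      rw [hsum]
      have := ih ht
      show 2 * (a * t.prod) + _ = a * (1 + F t)
      rw [← this]
      ring

lemma Ach : ∀ n, 1 ≤ n → ∃ m : List ℕ, m ≠ [] ∧ (∀ x ∈ m, 1 ≤ x) ∧
    m.sum = n ∧ F m = M n := by
  apply ind3
  · exact ⟨[1], by norm_num [F, M]⟩
  · exact ⟨[2], by norm_num [F, M]⟩
  · exact ⟨[3], by norm_num [F, M]⟩
  · exact ⟨[2, 2], by simp, by norm_num, by norm_num, by norm_num [F, M]⟩
  · exact ⟨[3, 2], by simp, by norm_num, by norm_num, by norm_num [F, M]⟩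
  · exact ⟨[2, 2, 2], by simp, by norm_num, by norm_num, by norm_num [F, M]⟩
  · rintro s hs ⟨m, hne, hpos, hsum, hF⟩
    refine ⟨3 :: m, by simp, ?_, by simp [hsum]; ring, ?_⟩
    · intro x hx
      rcases List.mem_cons.mp hx with rfl | hx
      · norm_num
      · exact hpos x hx
    · show 3 * (1 + F m) = M (s + 3)
      rw [Mstep s hs, hF]
      ring

lemma UB : ∀ m : List ℕ, m ≠ [] → (∀ x ∈ m, 1 ≤ x) → F m ≤ M m.sum := by
  intro m
  induction m with
  | nil => simp
  | cons a t ih =>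
    intro _ hpos
    have ha : 1 ≤ a := hpos a (by simp)
    rcases eq_or_ne t [] with rfl | ht
    · show a * (1 + 1) ≤ M ([a].sum)
      simpa [mul_comm] using M_two_mul a ha
    · have hts : 1 ≤ t.sum := by
        obtain ⟨b, u, rfl⟩ := List.exists_cons_of_ne_nil ht
        have : 1 ≤ b := hpos b (by simp)
        simp; omega
      have h1 : F t ≤ M t.sum := ih ht (fun x hx => hpos x (by simp [hx]))
      calc F (a :: t) = a * (1 + F t) := rfl
        _ ≤ a * (1 + M t.sum) := Nat.mul_le_mul_left _ (by omega)
        _ ≤ M (a + t.sum) := K a t.sum ha hts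
        _ = M ((a :: t).sum) := by simp

lemma Mval0 : ∀ k, 2 ≤ k → M (3 * k) = (47 * 3 ^ (k - 2) - 3) / 2 := by
  intro k
  induction k with
  | zero => omega
  | succ k ih =>
    intro hk
    rcases eq_or_lt_of_le hk with h | h
    · norm_num [← h, M]
    · have hk2 : 2 ≤ k := by omega
      have h1 := ih hk2
      have h2 : 3 * (k + 1) = 3 * k + 3 := by ring
      rw [h2, Mstep (3 * k) (by omega), h1]
      have h3 : k + 1 - 2 = (k - 2) + 1 := by omega
      rw [h3, pow_succ]
      have h4 : 1 ≤ 3 ^ (k - 2) := Nat.one_le_pow _ _ (by norm_num)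
      have h5 : 3 ^ (k - 2) % 2 = 1 := by simp [Nat.pow_mod]
      omega

lemma Mval1 : ∀ k, 1 ≤ k → M (3 * k + 1) = (23 * 3 ^ (k - 1) - 3) / 2 := by
  intro k
  induction k with
  | zero => omega
  | succ k ih =>
    intro hk
    rcases eq_or_lt_of_le hk with h | h
    · norm_num [← h, M]
    · have hk2 : 1 ≤ k := by omega
      have h1 := ih hk2
      have h2 : 3 * (k + 1) + 1 = (3 * k + 1) + 3 := by ring
      rw [h2, Mstep (3 * k + 1) (by omega), h1]
      have h3 : k + 1 - 1 = (k - 1) + 1 := by omega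
      rw [h3, pow_succ]
      have h4 : 1 ≤ 3 ^ (k - 1) := Nat.one_le_pow _ _ (by norm_num)
      have h5 : 3 ^ (k - 1) % 2 = 1 := by simp [Nat.pow_mod]
      omega

lemma Mval2 : ∀ k, 1 ≤ k → M (3 * k + 2) = (11 * 3 ^ k - 3) / 2 := by
  intro k
  induction k with
  | zero => omega
  | succ k ih =>
    intro hk
    rcases eq_or_lt_of_le hk with h | h
    · norm_num [← h, M]
    · have hk2 : 1 ≤ k := by omega
      have h1 := ih hk2
      have h2 : 3 * (k + 1) + 2 = (3 * k + 2) + 3 := by ring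
      rw [h2, Mstep (3 * k + 2) (by omega), h1, pow_succ]
      have h4 : 1 ≤ 3 ^ k := Nat.one_le_pow _ _ (by norm_num)
      have h5 : 3 ^ k % 2 = 1 := by simp [Nat.pow_mod]
      omega

lemma main (n : ℕ) (hn : 1 ≤ n) : IsGreatest (compositionValues n) (M n) := by
  constructor
  · obtain ⟨m, hne, hpos, hsum, hF⟩ := Ach n hn
    exact ⟨m, hne, hpos, hsum, by rw [F_val m hne, hF]⟩
  · rintro v ⟨m, hne, hpos, hsum, rfl⟩
    rw [F_val m hne, ← hsum]
    exact UB m hne hpos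

/-- For `n ≥ 5`, the maximum of `2·m_1⋯m_r + Σ_{j<r} m_1⋯m_j` over compositions
of `n` is `(47·3^{k-2} - 3)/2`, `(23·3^{k-1} - 3)/2`, `(11·3^k - 3)/2` according
to `n = 3k`, `3k+1`, `3k+2`. -/
theorem stmt17 (n : ℕ) (hn : 5 ≤ n) (k : ℕ) :
    (n = 3 * k → IsGreatest (compositionValues n) ((47 * 3 ^ (k - 2) - 3) / 2)) ∧
    (n = 3 * k + 1 → IsGreatest (compositionValues n) ((23 * 3 ^ (k - 1) - 3) / 2)) ∧
    (n = 3 * k + 2 → IsGreatest (compositionValues n) ((11 * 3 ^ k - 3) / 2)) := by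
  refine ⟨fun h => ?_, fun h => ?_, fun h => ?_⟩
  · rw [← Mval0 k (by omega), ← h]; exact main n (by omega)
  · rw [← Mval1 k (by omega), ← h]; exact main n (by omega)
  · rw [← Mval2 k (by omega), ← h]; exact main n (by omega)
end

section
/- Let P be a finite poset on {1,...,n}. If the enriched order polytope O^(e)_P contains the point −e_1 − e_2 − ⋯ − e_n (i.e., is centrally symmetric), then P is an antichain. -/
/-- If `O^(e)_P` contains `-e_1 - ⋯ - e_n`, then `P` is an antichain. -/
theorem stmt18 (P : Type*) [Fintype P] [PartialOrder P]
    (h : (fun _ : P => (-1 : ℝ)) ∈ convexHull ℝ (enrichedOrderVerts P)) :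
    IsAntichain (· ≤ ·) (Set.univ : Set P) := by
  intro a _ b _ hab hle
  -- consider the halfspace x a + 2 * x b ≥ -2
  have hconv : Convex ℝ {x : P → ℝ | -2 ≤ x a + 2 * x b} := by
    have hlin : IsLinearMap ℝ (fun x : P → ℝ => x a + 2 * x b) := by
      constructor
      · intro x y; simp [Pi.add_apply]; ring
      · intro c x; simp [Pi.smul_apply, smul_eq_mul]; ring
    exact convex_halfSpace_ge hlin (-2)
  have hsub : enrichedOrderVerts P ⊆ {x : P → ℝ | -2 ≤ x a + 2 * x b} := by
    rintro x ⟨F, hF, hmin, hnonmin, hout⟩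
    simp only [Set.mem_setOf_eq]
    by_cases hbF : b ∈ F
    · by_cases hbm : b ∈ minSet F
      · -- then a ∉ F, else a = b
        have haF : a ∉ F := fun haF => hab (hbm.2 a haF hle)
        rw [hout a haF]
        rcases hmin b hbm with h1 | h1 <;> rw [h1] <;> norm_num
      · have hxb : x b = 1 := hnonmin b hbF hbm
        have hxa : -1 ≤ x a := by
          by_cases haF : a ∈ F
          · by_cases ham : a ∈ minSet F
            · rcases hmin a ham with h1 | h1 <;> rw [h1] <;> norm_num
            · rw [hnonmin a haF ham]; norm_num
          · rw [hout a haF]; norm_num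
        rw [hxb]; linarith
    · have haF : a ∉ F := fun haF => hbF (hF hle haF)
      rw [hout a haF, hout b hbF]; norm_num
  have := convexHull_min hsub hconv h
  simp only [Set.mem_setOf_eq] at this
  linarith
end

section
/- Let P be a finite poset on {1,...,n}. The number of facets of the enriched order polytope O^(e)_P equals the number of facets of the enriched chain polytope C^(e)_P if and only if P is an antichain, in which case O^(e)_P = C^(e)_P. -/
/-- `F` is a facet of `S ⊆ ℝ^P`: a nonempty proper exposed face of affine
dimension `(card P) - 1`. -/
def IsFacetOf (P : Type*) [Fintype P] (S F : Set (P → ℝ)) : Prop :=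
  F.Nonempty ∧ IsExposed ℝ S F ∧ F ≠ S ∧
    Module.finrank ℝ ↥(vectorSpan ℝ F) = Fintype.card P - 1

set_option linter.unusedSectionVars false

namespace Stmt19

open Set List
open scoped Classical

variable {P : Type*} [Fintype P] [PartialOrder P]

/-! ### Basic finite poset lemmas -/

lemma exists_min_le (i : P) : ∃ m : P, m ≤ i ∧ IsMin m := by
  obtain ⟨b, hb, hmax⟩ := Finset.exists_le_maximal (α := Pᵒᵈ) Finset.univ
    (Finset.mem_univ (OrderDual.toDual i))
  exact ⟨OrderDual.ofDual b, hb, fun c hc => hmax.2 (Finset.mem_univ _) hc⟩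

lemma exists_covby_le {i j : P} (h : i < j) : ∃ k, i ⋖ k ∧ k ≤ j := by
  classical
  obtain ⟨m, hm, hmin⟩ : ∃ m ∈ Finset.univ.filter (fun z => i < z ∧ z ≤ j),
      ∀ x ∈ Finset.univ.filter (fun z => i < z ∧ z ≤ j), ¬ x < m := by
    obtain ⟨m, hm⟩ := Finset.exists_minimal
      (s := Finset.univ.filter (fun z => i < z ∧ z ≤ j)) ⟨j, by simp [h]⟩
    exact ⟨m, hm.1, fun x hx hlt => lt_irrefl _ (lt_of_lt_of_le hlt (hm.2 hx hlt.le))⟩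
  simp only [Finset.mem_filter, Finset.mem_univ, true_and] at hm hmin
  refine ⟨m, ⟨hm.1, fun c hc hcm => ?_⟩, hm.2⟩
  exact hmin c ⟨hc, le_trans hcm.le hm.2⟩ hcm

lemma exists_covby_of_not_max {i : P} (h : ¬ IsMax i) : ∃ j, i ⋖ j := by
  rw [not_isMax_iff] at h
  obtain ⟨j, hj⟩ := h
  obtain ⟨k, hk, _⟩ := exists_covby_le hj
  exact ⟨k, hk⟩

lemma exists_lt_covby {i j : P} (h : i < j) : ∃ k, i ≤ k ∧ k ⋖ j := by
  classical
  obtain ⟨m, hm, hmax⟩ : ∃ m ∈ (Finset.univ.filter (fun z : Pᵒᵈ => OrderDual.ofDual z < j ∧ i ≤ OrderDual.ofDual z)),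
      ∀ x ∈ (Finset.univ.filter (fun z : Pᵒᵈ => OrderDual.ofDual z < j ∧ i ≤ OrderDual.ofDual z)), ¬ x < m := by
    obtain ⟨m, hm⟩ := Finset.exists_minimal
      (s := (Finset.univ.filter (fun z : Pᵒᵈ => OrderDual.ofDual z < j ∧ i ≤ OrderDual.ofDual z)))
      ⟨OrderDual.toDual i, by simp [h]⟩
    exact ⟨m, hm.1, fun x hx hlt => lt_irrefl _ (lt_of_lt_of_le hlt (hm.2 hx hlt.le))⟩
  simp only [Finset.mem_filter, Finset.mem_univ, true_and] at hm hmax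
  refine ⟨OrderDual.ofDual m, hm.2, hm.1, fun c hc hcj => ?_⟩
  exact hmax (OrderDual.toDual c) ⟨hcj, le_trans hm.2 hc.le⟩ hc

lemma exists_covby_of_not_min {i : P} (h : ¬ IsMin i) : ∃ j, j ⋖ i := by
  rw [not_isMin_iff] at h
  obtain ⟨j, hj⟩ := h
  obtain ⟨k, _, hk⟩ := exists_lt_covby hj
  exact ⟨k, hk⟩

/-! ### Saturated chains as lists -/

/-- `Tail i r` : `i :: r` is a saturated chain ending at a maximal element. -/
def Tail (i : P) (r : List P) : Prop :=
  List.Chain (· ⋖ ·) i r ∧ IsMax ((i :: r).getLast (List.cons_ne_nil i r))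

lemma tail_nil_iff {i : P} : Tail i [] ↔ IsMax i := by
  simp [Tail, List.Chain.nil]

lemma tail_cons_iff {i j : P} {r : List P} : Tail i (j :: r) ↔ i ⋖ j ∧ Tail j r := by
  constructor
  · rintro ⟨hc, hl⟩
    replace hc := List.isChain_cons_cons.1 hc
    exact ⟨hc.1, hc.2, by simpa [List.getLast_cons] using hl⟩
  · rintro ⟨hij, hc, hl⟩
    exact ⟨List.chain_cons.2 ⟨hij, hc⟩, by simpa [List.getLast_cons] using hl⟩

lemma exists_tail (i : P) : ∃ r, Tail i r := by
  induction i using WellFoundedGT.induction with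
  | _ i IH =>
    by_cases h : IsMax i
    · exact ⟨[], tail_nil_iff.2 h⟩
    · obtain ⟨j, hj⟩ := exists_covby_of_not_max h
      obtain ⟨r, hr⟩ := IH j hj.lt
      exact ⟨j :: r, tail_cons_iff.2 ⟨hj, hr⟩⟩

/-- Maximal chains as lists. -/
def IsMC (l : List P) : Prop :=
  ∃ h : l ≠ [], List.Chain' (· ⋖ ·) l ∧ IsMin (l.head h) ∧ IsMax (l.getLast h)

lemma chain'_pairwise_lt {l : List P} (h : List.Chain' (· ⋖ ·) l) : l.Pairwise (· < ·) :=
  List.isChain_iff_pairwise.1 (List.IsChain.imp (fun a b hab => hab.lt) h)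

lemma chain'_nodup {l : List P} (h : List.Chain' (· ⋖ ·) l) : l.Nodup :=
  (chain'_pairwise_lt h).nodup

lemma sorted_eq_of_mem_iff {l₁ l₂ : List P} (h₁ : l₁.Pairwise (· < ·))
    (h₂ : l₂.Pairwise (· < ·)) (h : ∀ a, a ∈ l₁ ↔ a ∈ l₂) : l₁ = l₂ := by
  have : l₁.Perm l₂ := (List.perm_ext_iff_of_nodup h₁.nodup h₂.nodup).2 h
  exact List.Perm.eq_of_pairwise' (r := (· ≤ ·)) (h₁.imp le_of_lt) (h₂.imp le_of_lt) this


/-! ### The linear forms attached to chains, and the `w`-function -/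

/-- `Bf x r = x r₁/2 + x r₂ /4 + ... + x r_k/2^k + 1/2^k`. -/
noncomputable def Bf (x : P → ℝ) : List P → ℝ := fun r => r.foldr (fun j a => (x j + a)/2) 1

/-- linear part of `Bf`. -/
noncomputable def Lf (x : P → ℝ) : List P → ℝ := fun r => r.foldr (fun j a => (x j + a)/2) 0

@[simp] lemma Bf_nil (x : P → ℝ) : Bf x [] = 1 := rfl
@[simp] lemma Bf_cons (x : P → ℝ) (j : P) (r : List P) :
    Bf x (j :: r) = (x j + Bf x r)/2 := rfl
@[simp] lemma Lf_nil (x : P → ℝ) : Lf x [] = 0 := rfl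
@[simp] lemma Lf_cons (x : P → ℝ) (j : P) (r : List P) :
    Lf x (j :: r) = (x j + Lf x r)/2 := rfl

lemma Bf_eq_Lf_add (x : P → ℝ) (r : List P) : Bf x r = Lf x r + Bf 0 r := by
  induction r with
  | nil => simp
  | cons j r IH => simp [IH]; ring

lemma Bf_zero_pos (r : List P) : 0 < Bf (0 : P → ℝ) r := by
  induction r with
  | nil => norm_num
  | cons j r IH =>
    rw [Bf_cons]
    have : (0 : P → ℝ) j = 0 := rfl
    linarith

lemma Lf_smul (c : ℝ) (x : P → ℝ) (r : List P) : Lf (c • x) r = c * Lf x r := by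
  induction r with
  | nil => simp
  | cons j r IH => simp [IH]; ring

lemma Lf_add (x y : P → ℝ) (r : List P) : Lf (x + y) r = Lf x r + Lf y r := by
  induction r with
  | nil => simp
  | cons j r IH => simp [IH]; ring

lemma Lf_eq_zero_of_notmem (x : P → ℝ) (r : List P) (h : ∀ j ∈ r, x j = 0) :
    Lf x r = 0 := by
  induction r with
  | nil => simp
  | cons j r IH => simp [h j (by simp), IH (fun a ha => h a (by simp [ha]))]

lemma Bf_eq_one_of_all_one (x : P → ℝ) (r : List P) (h : ∀ j ∈ r, x j = 1) :
    Bf x r = 1 := by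
  induction r with
  | nil => simp
  | cons j r IH =>
    simp only [Bf_cons, h j (by simp), IH (fun a ha => h a (by simp [ha]))]
    norm_num

/-- The polyhedron `H` given by all chain inequalities. -/
def HO : Set (P → ℝ) :=
  {x | ∀ i r, Tail i r → x i ≤ Bf x r ∧ (IsMin i → -x i ≤ Bf x r)}

/-- `w x i` : the minimum of `Bf x r` over all saturated chains from `i` to the top. -/
noncomputable def w (x : P → ℝ) (i : P) : ℝ := sInf ((fun r => Bf x r) '' {r | Tail i r})

lemma tailset_finite (i : P) : {r : List P | Tail i r}.Finite := by
  classical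
  have hN : Finite {l : List P // l.Nodup} := fintypeNodupList.finite
  have h1 : {r : List P | Tail i r} ⊆ {r : List P | r.Nodup} := by
    intro r hr
    have : List.Chain' (· ⋖ ·) (i :: r) := hr.1
    exact (List.nodup_cons.1 (chain'_nodup this)).2
  have h2 : {r : List P | r.Nodup}.Finite :=
    Set.finite_coe_iff.1 (Finite.of_injective
      (fun r => (⟨r.1, r.2⟩ : {l : List P // l.Nodup}))
      (by intro a b h; ext1; simpa using congrArg Subtype.val h))
  exact Set.Finite.subset h2 h1

lemma w_mem (x : P → ℝ) (i : P) : ∃ r, Tail i r ∧ w x i = Bf x r := by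
  have hne : ((fun r => Bf x r) '' {r | Tail i r}).Nonempty := by
    obtain ⟨r, hr⟩ := exists_tail i
    exact ⟨Bf x r, ⟨r, hr, rfl⟩⟩
  have hfin : ((fun r => Bf x r) '' {r | Tail i r}).Finite := (tailset_finite i).image _
  obtain ⟨r, hr, heq⟩ := hne.csInf_mem hfin
  exact ⟨r, hr, heq.symm⟩

lemma w_le (x : P → ℝ) {i : P} {r : List P} (hr : Tail i r) : w x i ≤ Bf x r := by
  have hfin : ((fun r => Bf x r) '' {r | Tail i r}).Finite := (tailset_finite i).image _
  exact csInf_le hfin.bddBelow ⟨r, hr, rfl⟩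

lemma le_w (x : P → ℝ) {i : P} {c : ℝ} (h : ∀ r, Tail i r → c ≤ Bf x r) : c ≤ w x i := by
  have hne : ((fun r => Bf x r) '' {r | Tail i r}).Nonempty := by
    obtain ⟨r, hr⟩ := exists_tail i
    exact ⟨Bf x r, ⟨r, hr, rfl⟩⟩
  exact le_csInf hne (by rintro b ⟨r, hr, rfl⟩; exact h r hr)

lemma w_max (x : P → ℝ) {i : P} (h : IsMax i) : w x i = 1 := by
  have h1 : {r : List P | Tail i r} = {[]} := by
    ext r
    simp only [Set.mem_setOf_eq, Set.mem_singleton_iff]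
    constructor
    · intro hr
      cases r with
      | nil => rfl
      | cons j r' => exact absurd ((tail_cons_iff.1 hr).1.lt) h.not_lt
    · rintro rfl; exact tail_nil_iff.2 h
  simp [w, h1]

lemma w_cover_le (x : P → ℝ) {i j : P} (hij : i ⋖ j) : w x i ≤ (x j + w x j)/2 := by
  obtain ⟨r, hr, heq⟩ := w_mem x j
  have : Tail i (j :: r) := tail_cons_iff.2 ⟨hij, hr⟩
  calc w x i ≤ Bf x (j :: r) := w_le x this
  _ = (x j + w x j)/2 := by simp [heq]

lemma w_not_max (x : P → ℝ) {i : P} (h : ¬ IsMax i) :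
    ∃ j, i ⋖ j ∧ w x i = (x j + w x j)/2 := by
  obtain ⟨r, hr, heq⟩ := w_mem x i
  cases r with
  | nil => exact absurd (tail_nil_iff.1 hr) h
  | cons j r' =>
    obtain ⟨hij, hr'⟩ := tail_cons_iff.1 hr
    refine ⟨j, hij, _root_.le_antisymm (w_cover_le x hij) ?_⟩
    have h1 := w_le x hr'
    rw [heq]; simp only [Bf_cons]; linarith

section memHO
variable {x : P → ℝ} (hx : x ∈ HO)
include hx

lemma HO_le_w (i : P) : x i ≤ w x i :=
  le_w x (fun r hr => (hx i r hr).1)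

lemma HO_min_le_w {i : P} (hi : IsMin i) : -x i ≤ w x i :=
  le_w x (fun r hr => (hx i r hr).2 hi)

lemma HO_w_le_one (i : P) : w x i ≤ 1 := by
  induction i using WellFoundedGT.induction with
  | _ i IH =>
    by_cases h : IsMax i
    · simp [w_max x h]
    · obtain ⟨j, hij, heq⟩ := w_not_max x h
      have h1 := IH j hij.lt
      have h2 := HO_le_w hx j
      rw [heq]; linarith

end memHO

/-- The transfer map value `y`. -/
noncomputable def yv (x : P → ℝ) (i : P) : ℝ := (x i + w x i)/2

section yvlem
variable {x : P → ℝ} (hx : x ∈ HO)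
include hx

lemma yv_le_w (i : P) : yv x i ≤ w x i := by
  have := HO_le_w hx i; simp only [yv]; linarith

lemma yv_cover_mono {i j : P} (hij : i ⋖ j) : yv x i ≤ yv x j :=
  le_trans (yv_le_w hx i) (w_cover_le x hij)

lemma yv_strict_mono : ∀ {i j : P}, i < j → yv x i ≤ yv x j := by
  intro i
  induction i using WellFoundedGT.induction with
  | _ i IH =>
    intro j hlt
    obtain ⟨k, hik, hkj⟩ := exists_covby_le hlt
    rcases eq_or_lt_of_le hkj with rfl | hlt2
    · exact yv_cover_mono hx hik
    · exact le_trans (yv_cover_mono hx hik) (IH k hik.lt hlt2)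

lemma yv_mono : Monotone (yv x) := by
  intro i j hij
  rcases eq_or_lt_of_le hij with rfl | hlt
  · exact le_rfl
  · exact yv_strict_mono hx hlt

lemma yv_le_one (i : P) : yv x i ≤ 1 := le_trans (yv_le_w hx i) (HO_w_le_one hx i)

lemma yv_nonneg (i : P) : 0 ≤ yv x i := by
  obtain ⟨m, hmi, hmin⟩ := exists_min_le i
  have h1 : 0 ≤ yv x m := by
    have := HO_min_le_w hx hmin; simp only [yv]; linarith
  exact le_trans h1 (yv_mono hx hmi)

end yvlem


/-! ### The transfer argument: `HO ⊆ conv (V_O)` -/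

/-- The piecewise-linear reconstruction map (for a fixed choice function `J`). -/
noncomputable def Phi (J : P → P) (Y : P → ℝ) : P → ℝ :=
  fun i => if IsMax i then 2*Y i - 1 else 2*Y i - Y (J i)

/-- `J` selects a cover with minimal `Y`-value. -/
def Compat (J : P → P) (Y : P → ℝ) : Prop :=
  ∀ i, ¬ IsMax i → ∀ j, i ⋖ j → Y (J i) ≤ Y j

lemma phi_affine (J : P → P) (Y₁ Y₂ : P → ℝ) {a b : ℝ} (hab : a + b = 1) :
    Phi J (a • Y₁ + b • Y₂) = a • Phi J Y₁ + b • Phi J Y₂ := by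
  funext i
  simp only [Phi, Pi.add_apply, Pi.smul_apply, smul_eq_mul]
  by_cases h : IsMax i <;> simp only [h, if_true, if_false] <;> nlinarith [hab]

lemma phi_indicator_mem (J : P → P) (hJ : ∀ i, ¬IsMax i → i ⋖ J i)
    (Y : P → ℝ) (hY01 : ∀ i, Y i = 0 ∨ Y i = 1) (hmono : Monotone Y)
    (hcompat : Compat J Y) : Phi J Y ∈ enrichedOrderVerts P := by
  set F : Set P := {i | Y i = 1} with hF
  set G : Set P := {i | Phi J Y i ≠ 0} with hG
  have fact1 : ∀ i ∈ F, Phi J Y i = 1 := by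
    intro i hi
    by_cases h : IsMax i
    · simp [Phi, h, hi.out]; norm_num
    · have h1 : Y (J i) = 1 := by
        have h2 : Y i ≤ Y (J i) := hmono (hJ i h).le
        rcases hY01 (J i) with h3 | h3
        · rw [hi.out] at h2; rw [h3] at h2; linarith
        · exact h3
      simp [Phi, h, hi.out, h1]; norm_num
  have factF : ∀ i, i ∉ F → Y i = 0 := by
    intro i hi
    rcases hY01 i with h | h
    · exact h
    · exact absurd h hi
  have hFG : F ⊆ G := by
    intro i hi
    simp only [hG, Set.mem_setOf_eq, fact1 i hi]
    norm_num
  have covers_in_F : ∀ i ∈ G, i ∉ F → ¬IsMax i → ∀ j, i ⋖ j → j ∈ F := by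
    intro i hiG hiF hmax j hij
    have h0 : Y i = 0 := factF i hiF
    have h1 : Phi J Y i = -Y (J i) := by simp [Phi, hmax, h0]
    have h2 : Y (J i) = 1 := by
      rcases hY01 (J i) with h3 | h3
      · exfalso; apply hiG; rw [h1, h3]; ring
      · exact h3
    have h4 := hcompat i hmax j hij
    rw [h2] at h4
    rcases hY01 j with h5 | h5
    · rw [h5] at h4; norm_num at h4
    · exact h5
  have hGupper : IsUpperSet G := by
    intro i i' hle hi
    rcases eq_or_lt_of_le hle with rfl | hlt
    · exact hi
    · refine hFG ?_
      by_cases hiF : i ∈ F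
      · have : (1:ℝ) ≤ Y i' := by rw [← hiF.out]; exact hmono hle
        rcases hY01 i' with h | h
        · rw [h] at this; norm_num at this
        · exact h
      · obtain ⟨k, hik, hki'⟩ := exists_covby_le hlt
        have hkF : k ∈ F := covers_in_F i hi hiF (not_isMax_of_lt hlt) k hik
        have : (1:ℝ) ≤ Y i' := by rw [← hkF.out]; exact hmono hki'
        rcases hY01 i' with h | h
        · rw [h] at this; norm_num at this
        · exact h
  have hminset : ∀ i ∈ G, i ∉ F → i ∈ minSet G := by
    intro i hiG hiF
    refine ⟨hiG, fun b hbG hble => ?_⟩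
    by_contra hne
    have hblt : b < i := lt_of_le_of_ne hble hne
    by_cases hbF : b ∈ F
    · apply hiF
      have : (1:ℝ) ≤ Y i := by rw [← hbF.out]; exact hmono hble
      rcases hY01 i with h | h
      · rw [h] at this; norm_num at this
      · exact h
    · obtain ⟨k, hbk, hki⟩ := exists_covby_le hblt
      have hkF : k ∈ F := covers_in_F b hbG hbF (not_isMax_of_lt hblt) k hbk
      apply hiF
      have : (1:ℝ) ≤ Y i := by rw [← hkF.out]; exact hmono hki
      rcases hY01 i with h | h
      · rw [h] at this; norm_num at this
      · exact h
  refine ⟨G, hGupper, ?_, ?_, ?_⟩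
  · intro i hi
    have hiG : i ∈ G := hi.1
    by_cases hiF : i ∈ F
    · left; exact fact1 i hiF
    · have h0 : Y i = 0 := factF i hiF
      by_cases h : IsMax i
      · right; simp [Phi, h, h0]
      · have h1 : Phi J Y i = -Y (J i) := by simp [Phi, h, h0]
        rcases hY01 (J i) with h3 | h3
        · exfalso; apply hiG; rw [h1, h3]; ring
        · right; rw [h1, h3]
  · intro i hiG hinm
    by_cases hiF : i ∈ F
    · exact fact1 i hiF
    · exact absurd (hminset i hiG hiF) hinm
  · intro i hi
    simpa [hG, Set.mem_setOf_eq, not_not] using hi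

/-- Complexity measure for the peeling induction. -/
noncomputable def measureY (Y : P → ℝ) : ℕ :=
  2 * (Finset.image Y Finset.univ).card + (if ∃ i, Y i = 0 then 0 else 1)

lemma phi_mem_aux [Nonempty P] (J : P → P) (hJ : ∀ i, ¬IsMax i → i ⋖ J i) :
    ∀ N (Y : P → ℝ), measureY Y ≤ N → Monotone Y → (∀ i, 0 ≤ Y i) → (∀ i, Y i ≤ 1) →
    Compat J Y → Phi J Y ∈ convexHull ℝ (enrichedOrderVerts P) := by
  classical
  intro N
  induction N with
  | zero =>
    intro Y hm _ _ _ _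
    exfalso
    have h1 : 1 ≤ (Finset.image Y Finset.univ).card :=
      Finset.card_pos.2 ⟨Y (Classical.arbitrary P), Finset.mem_image_of_mem Y (Finset.mem_univ _)⟩
    simp only [measureY] at hm
    omega
  | succ N IH =>
    intro Y hm hmono h0 h1 hcompat
    by_cases hbase : ∀ i, Y i = 0 ∨ Y i = 1
    · exact subset_convexHull ℝ _ (phi_indicator_mem J hJ Y hbase hmono hcompat)
    · push_neg at hbase
      obtain ⟨i0, hi0⟩ := hbase
      have hi0pos : 0 < Y i0 := lt_of_le_of_ne (h0 i0) (Ne.symm hi0.1)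
      have hi0lt : Y i0 < 1 := lt_of_le_of_ne (h1 i0) hi0.2
      by_cases hz : ∃ i, Y i = 0
      · -- peel off the smallest positive value
        set S : Finset ℝ := (Finset.image Y Finset.univ).filter (0 < ·) with hS
        have hSne : S.Nonempty := ⟨Y i0, by
          simp only [hS, Finset.mem_filter]
          exact ⟨Finset.mem_image_of_mem Y (Finset.mem_univ _), hi0pos⟩⟩
        set c : ℝ := S.min' hSne with hc
        have hcS : c ∈ S := S.min'_mem hSne
        have hcpos : 0 < c := (Finset.mem_filter.1 hcS).2
        have hcle : ∀ i, 0 < Y i → c ≤ Y i := by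
          intro i hYi
          exact S.min'_le _ (by
            simp only [hS, Finset.mem_filter]
            exact ⟨Finset.mem_image_of_mem Y (Finset.mem_univ _), hYi⟩)
        have hclt1 : c < 1 := lt_of_le_of_lt (hcle i0 hi0pos) hi0lt
        set U : P → ℝ := fun i => if Y i = 0 then 0 else 1 with hU
        set V : P → ℝ := fun i => (max (Y i - c) 0) / (1 - c) with hV
        have hYUV : Y = c • U + (1 - c) • V := by
          funext i
          simp only [hU, hV, Pi.add_apply, Pi.smul_apply, smul_eq_mul]
          by_cases h : Y i = 0
          · rw [if_pos h, max_eq_right (by linarith : Y i - c ≤ 0), h]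
            ring
          · have hci : c ≤ Y i := hcle i (lt_of_le_of_ne (h0 i) (Ne.symm h))
            rw [if_neg h, max_eq_left (by linarith : (0:ℝ) ≤ Y i - c)]
            have hne : (1:ℝ) - c ≠ 0 := by intro hcc; rw [sub_eq_zero] at hcc; linarith
            field_simp
            ring
        have hUmono : Monotone U := by
          intro i j hij
          simp only [hU]
          by_cases h : Y i = 0
          · rw [if_pos h]; split <;> norm_num
          · have hj : ¬ Y j = 0 := by
              intro hj
              exact h (_root_.le_antisymm (hj ▸ hmono hij) (h0 i))
            rw [if_neg h, if_neg hj]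
        have hU01 : ∀ i, U i = 0 ∨ U i = 1 := by
          intro i; by_cases h : Y i = 0 <;> simp [hU, h]
        have hUcompat : Compat J U := by
          intro i hmax j hij
          simp only [hU]
          by_cases h : Y (J i) = 0
          · rw [if_pos h]; split <;> norm_num
          · have hji : 0 < Y (J i) := lt_of_le_of_ne (h0 _) (Ne.symm h)
            have hjne : ¬ Y j = 0 := by
              intro hj
              have := hcompat i hmax j hij
              rw [hj] at this; linarith
            rw [if_neg h, if_neg hjne]
        have hdenpos : (0:ℝ) < 1 - c := by linarith
        have hVmono : Monotone V := by
          intro i j hij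
          simp only [hV]
          have h2 := hmono hij
          exact (div_le_div_iff_of_pos_right hdenpos).2 (max_le_max (by linarith) le_rfl)
        have hV0 : ∀ i, 0 ≤ V i := by
          intro i; simp only [hV]
          exact div_nonneg (le_max_right _ _) hdenpos.le
        have hV1 : ∀ i, V i ≤ 1 := by
          intro i
          simp only [hV]
          rw [div_le_one (by linarith)]
          have := h1 i
          simp only [max_le_iff]
          constructor <;> linarith
        have hVcompat : Compat J V := by
          intro i hmax j hij
          simp only [hV]
          have h2 := hcompat i hmax j hij
          exact (div_le_div_iff_of_pos_right hdenpos).2 (max_le_max (by linarith) le_rfl)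
        have hVmeas : measureY V ≤ N := by
          have himg : Finset.image V Finset.univ
              = Finset.image (fun t => max (t - c) 0 / (1 - c)) (Finset.image Y Finset.univ) := by
            rw [Finset.image_image]; rfl
          obtain ⟨iz, hiz⟩ := hz
          have h0c : (0:ℝ) ∈ Finset.image Y Finset.univ := by
            rw [← hiz]; exact Finset.mem_image_of_mem _ (Finset.mem_univ _)
          have hcc : c ∈ Finset.image Y Finset.univ := (Finset.mem_filter.1 hcS).1
          have hsub : Finset.image (fun t => max (t - c) 0 / (1 - c)) (Finset.image Y Finset.univ)
              = Finset.image (fun t => max (t - c) 0 / (1 - c))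
                ((Finset.image Y Finset.univ).erase 0) := by
            apply Finset.Subset.antisymm
            · intro v hv
              obtain ⟨t, ht, rfl⟩ := Finset.mem_image.1 hv
              by_cases h : t = 0
              · subst h
                refine Finset.mem_image.2 ⟨c, Finset.mem_erase.2 ⟨(ne_of_gt hcpos), hcc⟩, ?_⟩
                rw [max_eq_right (by linarith : (0:ℝ) - c ≤ 0),
                  max_eq_right (by linarith : c - c ≤ 0)]
              · exact Finset.mem_image.2 ⟨t, Finset.mem_erase.2 ⟨h, ht⟩, rfl⟩
            · intro v hv
              obtain ⟨t, ht, rfl⟩ := Finset.mem_image.1 hv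
              exact Finset.mem_image.2 ⟨t, (Finset.mem_erase.1 ht).2, rfl⟩
          have hcard : (Finset.image V Finset.univ).card ≤ (Finset.image Y Finset.univ).card - 1 := by
            rw [himg, hsub]
            calc _ ≤ ((Finset.image Y Finset.univ).erase 0).card := Finset.card_image_le
            _ = (Finset.image Y Finset.univ).card - 1 := Finset.card_erase_of_mem h0c
          have hk : 1 ≤ (Finset.image Y Finset.univ).card := Finset.card_pos.2 ⟨0, h0c⟩
          simp only [measureY] at hm ⊢
          rw [if_pos ⟨iz, hiz⟩] at hm
          split <;> omega
        have hUdec : Phi J U ∈ convexHull ℝ (enrichedOrderVerts P) :=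
          subset_convexHull ℝ _ (phi_indicator_mem J hJ U hU01 hUmono hUcompat)
        have hVdec : Phi J V ∈ convexHull ℝ (enrichedOrderVerts P) :=
          IH V hVmeas hVmono hV0 hV1 hVcompat
        rw [hYUV, phi_affine J U V (by ring)]
        exact (convex_convexHull ℝ _) hUdec hVdec hcpos.le (by linarith) (by ring)
      · -- no zero value : peel off the constant `m`
        obtain ⟨im, _, him⟩ := Finset.exists_min_image Finset.univ Y Finset.univ_nonempty
        set m : ℝ := Y im with hm'
        have hmpos : 0 < m := lt_of_le_of_ne (h0 im) (by
          intro h; exact hz ⟨im, h.symm⟩)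
        have hmlt1 : m < 1 := by
          rcases lt_or_ge m 1 with h | h
          · exact h
          · exfalso
            have := him i0 (Finset.mem_univ i0)
            linarith
        set V : P → ℝ := fun i => (Y i - m) / (1 - m) with hV
        have hdenpos : (0:ℝ) < 1 - m := by linarith
        have hYUV : Y = m • (fun _ => (1:ℝ)) + (1 - m) • V := by
          funext i
          simp only [hV, Pi.add_apply, Pi.smul_apply, smul_eq_mul]
          have hne : (1:ℝ) - m ≠ 0 := ne_of_gt hdenpos
          field_simp
          ring
        have hVmono : Monotone V := by
          intro i j hij
          simp only [hV]
          have := hmono hij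
          exact (div_le_div_iff_of_pos_right hdenpos).2 (by linarith)
        have hV0 : ∀ i, 0 ≤ V i := by
          intro i
          have := him i (Finset.mem_univ i)
          simp only [hV]
          exact div_nonneg (by linarith) hdenpos.le
        have hV1 : ∀ i, V i ≤ 1 := by
          intro i
          simp only [hV]
          rw [div_le_one (by linarith)]
          have := h1 i; linarith
        have hVcompat : Compat J V := by
          intro i hmax j hij
          simp only [hV]
          have := hcompat i hmax j hij
          exact (div_le_div_iff_of_pos_right hdenpos).2 (by linarith)
        have hone_mem : Phi J (fun _ => (1:ℝ)) ∈ enrichedOrderVerts P :=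
          phi_indicator_mem J hJ _ (fun i => Or.inr rfl) monotone_const (fun _ _ _ _ => le_rfl)
        have hVmeas : measureY V ≤ N := by
          have himg : Finset.image V Finset.univ
              = Finset.image (fun t => (t - m)/(1 - m)) (Finset.image Y Finset.univ) := by
            rw [Finset.image_image]; rfl
          have hcard : (Finset.image V Finset.univ).card ≤ (Finset.image Y Finset.univ).card := by
            rw [himg]; exact Finset.card_image_le
          have hVz : ∃ i, V i = 0 := ⟨im, by simp only [hV, ← hm', sub_self, zero_div]⟩
          simp only [measureY] at hm ⊢
          rw [if_neg hz] at hm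
          rw [if_pos hVz]
          omega
        have hVdec : Phi J V ∈ convexHull ℝ (enrichedOrderVerts P) :=
          IH V hVmeas hVmono hV0 hV1 hVcompat
        rw [hYUV, phi_affine J _ V (by ring)]
        exact (convex_convexHull ℝ _) (subset_convexHull ℝ _ hone_mem) hVdec hmpos.le
          (by linarith) (by ring)

lemma HO_subset_hull [Nonempty P] : (HO : Set (P → ℝ)) ⊆ convexHull ℝ (enrichedOrderVerts P) := by
  classical
  intro x hx
  have hJex : ∀ i, ¬IsMax i → ∃ j, i ⋖ j ∧ yv x j = w x i := by
    intro i h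
    obtain ⟨j, hij, heq⟩ := w_not_max x h
    exact ⟨j, hij, heq.symm⟩
  set J : P → P := fun i => if h : IsMax i then i else Classical.choose (hJex i h) with hJdef
  have hJ : ∀ i, ¬IsMax i → i ⋖ J i := by
    intro i h
    simp only [hJdef, dif_neg h]
    exact (Classical.choose_spec (hJex i h)).1
  have hJw : ∀ i (h : ¬IsMax i), yv x (J i) = w x i := by
    intro i h
    simp only [hJdef, dif_neg h]
    exact (Classical.choose_spec (hJex i h)).2
  have hcompat : Compat J (yv x) := by
    intro i hmax j hij
    rw [hJw i hmax]
    calc w x i ≤ (x j + w x j)/2 := w_cover_le x hij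
    _ = yv x j := rfl
  have hPhi : Phi J (yv x) = x := by
    funext i
    by_cases h : IsMax i
    · simp only [Phi, h, if_true, yv, w_max x h]
      ring
    · simp only [Phi, h, if_false]
      rw [hJw i h]
      simp only [yv]; ring
  rw [← hPhi]
  exact phi_mem_aux J hJ (measureY (yv x)) (yv x) le_rfl (yv_mono hx) (yv_nonneg hx)
    (yv_le_one hx) hcompat


/-! ### Exposed faces of hulls of finite sets -/

lemma exposed_eq_hull_inter {V F : Set (P → ℝ)} (hV : V.Finite)
    (hexp : IsExposed ℝ (convexHull ℝ V) F) (hne : F.Nonempty) :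
    F = convexHull ℝ (V ∩ F) := by
  classical
  obtain ⟨l, hl⟩ := hexp hne
  have hFconv : Convex ℝ F := hexp.convex (convex_convexHull ℝ V)
  refine Set.Subset.antisymm ?_ (convexHull_min Set.inter_subset_right hFconv)
  intro x hx
  rw [hl] at hx
  obtain ⟨hxS, hxmax⟩ := hx
  have hxS' : x ∈ convexHull ℝ (↑hV.toFinset : Set (P → ℝ)) := by
    rwa [Set.Finite.coe_toFinset]
  rw [Finset.convexHull_eq] at hxS'
  obtain ⟨wt, hw0, hw1, hwx⟩ := hxS'
  have hxval : l x = ∑ y ∈ hV.toFinset, wt y * l y := by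
    rw [← hwx, Finset.centerMass_eq_of_sum_1 _ _ hw1]
    rw [map_sum]
    congr 1
    funext y
    simp
  have hsupp : ∀ y ∈ hV.toFinset, wt y ≠ 0 → y ∈ V ∩ F := by
    intro y hy hwy
    have hyV : y ∈ V := by rwa [← Set.Finite.mem_toFinset hV]
    have hyS : y ∈ convexHull ℝ V := subset_convexHull ℝ V hyV
    refine ⟨hyV, ?_⟩
    rw [hl]
    refine ⟨hyS, fun z hz => ?_⟩
    by_contra hzy
    push_neg at hzy
    have hylt : l y < l x := lt_of_lt_of_le hzy (hxmax z hz)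
    have hstrict : ∑ u ∈ hV.toFinset, wt u * l u < ∑ u ∈ hV.toFinset, wt u * l x := by
      apply Finset.sum_lt_sum
      · intro u hu
        exact mul_le_mul_of_nonneg_left (hxmax u (subset_convexHull ℝ V
          ((Set.Finite.mem_toFinset hV).1 hu))) (hw0 u hu)
      · exact ⟨y, hy, by
          have hwy' : 0 < wt y := lt_of_le_of_ne (hw0 y hy) (Ne.symm hwy)
          exact mul_lt_mul_of_pos_left hylt hwy'⟩
    rw [← hxval] at hstrict
    rw [← Finset.sum_mul, hw1, one_mul] at hstrict
    exact lt_irrefl _ hstrict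
  have hfil : x = (hV.toFinset.filter (fun y => wt y ≠ 0)).centerMass wt id := by
    rw [Finset.centerMass_filter_ne_zero, hwx]
  rw [hfil]
  apply Finset.centerMass_mem_convexHull
  · intro y hy; exact hw0 y (Finset.mem_filter.1 hy).1
  · rw [Finset.sum_filter_ne_zero, hw1]; norm_num
  · intro y hy
    exact hsupp y (Finset.mem_filter.1 hy).1 (Finset.mem_filter.1 hy).2

lemma facets_finite {V : Set (P → ℝ)} (hV : V.Finite) :
    {F : Set (P → ℝ) | IsFacetOf P (convexHull ℝ V) F}.Finite := by
  have hinj : Set.InjOn (fun F => V ∩ F) {F : Set (P → ℝ) | IsFacetOf P (convexHull ℝ V) F} := by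
    intro F1 h1 F2 h2 heq
    have e1 : F1 = convexHull ℝ (V ∩ F1) := exposed_eq_hull_inter hV h1.2.1 h1.1
    have e2 : F2 = convexHull ℝ (V ∩ F2) := exposed_eq_hull_inter hV h2.2.1 h2.1
    rw [e1, e2]
    simp only at heq
    rw [heq]
  apply Set.Finite.of_finite_image ?_ hinj
  apply Set.Finite.subset (Set.Finite.finite_subsets hV)
  rintro A ⟨F, _, rfl⟩
  exact Set.inter_subset_left

lemma orderVerts_finite : (enrichedOrderVerts P).Finite := by
  have hfin : ({-1, 0, 1} : Set ℝ).Finite :=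
    ((Set.finite_singleton (1:ℝ)).insert 0).insert (-1)
  apply Set.Finite.subset (Set.Finite.pi (fun _ : P => hfin))
  rintro x ⟨F, hup, hmin, hnonmin, hoff⟩
  rw [Set.mem_univ_pi]
  intro i
  by_cases hiF : i ∈ F
  · by_cases him : i ∈ minSet F
    · rcases hmin i him with h | h <;> simp [h]
    · simp [hnonmin i hiF him]
  · simp [hoff i hiF]

lemma chainVerts_finite : (enrichedChainVerts P).Finite := by
  have hfin : ({-1, 0, 1} : Set ℝ).Finite :=
    ((Set.finite_singleton (1:ℝ)).insert 0).insert (-1)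
  apply Set.Finite.subset (Set.Finite.pi (fun _ : P => hfin))
  rintro x ⟨A, hA, hval, hoff⟩
  rw [Set.mem_univ_pi]
  intro i
  by_cases hiA : i ∈ A
  · rcases hval i hiA with h | h <;> simp [h]
  · simp [hoff i hiA]

/-! ### The antichain case -/

lemma antichain_verts_eq (h : IsAntichain (· ≤ ·) (Set.univ : Set P)) :
    enrichedOrderVerts P = enrichedChainVerts P := by
  have hle : ∀ {a b : P}, a ≤ b → a = b := by
    intro a b hab
    by_contra hne
    exact h (Set.mem_univ a) (Set.mem_univ b) hne hab
  ext x
  constructor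
  · rintro ⟨F, hup, hmin, hnonmin, hoff⟩
    refine ⟨F, ?_, ?_, hoff⟩
    · intro a _ b _ hne hab
      exact hne (hle hab)
    · intro i hi
      exact hmin i ⟨hi, fun b _ hbi => hle hbi⟩
  · rintro ⟨A, hA, hval, hoff⟩
    refine ⟨A, ?_, ?_, ?_, hoff⟩
    · intro a b hab ha
      rw [← hle hab]; exact ha
    · intro i hi
      exact hval i hi.1
    · intro i hi hnm
      exact absurd ⟨hi, fun b _ hbi => hle hbi⟩ hnm


/-! ### Facets of the enriched chain polytope -/

/-- signed indicator of a single point -/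
noncomputable def sv (i : P) (c : ℝ) : P → ℝ := fun k => if k = i then c else 0

/-- signed indicator of a pair -/
noncomputable def pv (i j : P) (c d : ℝ) : P → ℝ := fun k => if k = i then c else if k = j then d else 0

lemma sv_mem_verts (i : P) {c : ℝ} (hc : c = 1 ∨ c = -1) :
    sv i c ∈ enrichedChainVerts P := by
  refine ⟨{i}, ?_, ?_, ?_⟩
  · exact Set.Subsingleton.isAntichain Set.subsingleton_singleton _
  · intro j hj
    rw [Set.mem_singleton_iff] at hj
    subst hj
    simp [sv, hc]
  · intro j hj
    rw [Set.mem_singleton_iff] at hj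
    simp [sv, hj]

lemma pv_mem_verts {i j : P} (hij : i ≠ j) (hinc : ¬ i ≤ j ∧ ¬ j ≤ i)
    {c d : ℝ} (hc : c = 1 ∨ c = -1) (hd : d = 1 ∨ d = -1) :
    pv i j c d ∈ enrichedChainVerts P := by
  refine ⟨{i, j}, ?_, ?_, ?_⟩
  · intro a ha b hb hne hab
    rcases ha with rfl | ha <;> rcases hb with rfl | hb
    · exact hne rfl
    · rw [Set.mem_singleton_iff] at hb; subst hb; exact hinc.1 hab
    · rw [Set.mem_singleton_iff] at ha; subst ha; exact hinc.2 hab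
    · rw [Set.mem_singleton_iff] at ha hb; subst ha; subst hb; exact hne rfl
  · intro k hk
    rcases hk with rfl | hk
    · simp [pv, hc]
    · rw [Set.mem_singleton_iff] at hk; subst hk
      simp [pv, hij.symm, hd]
  · intro k hk
    simp only [Set.mem_insert_iff, Set.mem_singleton_iff, not_or] at hk
    simp [pv, hk.1, hk.2]

lemma zero_mem_verts : (0 : P → ℝ) ∈ enrichedChainVerts P :=
  ⟨∅, Set.pairwise_empty _, by simp, by simp⟩

/-- the linear functional `x ↦ ∑ y i x i`. -/
noncomputable def dotL (y : P → ℝ) : (P → ℝ) →ₗ[ℝ] ℝ := ∑ j, y j • LinearMap.proj j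

lemma dotL_apply (y x : P → ℝ) : dotL y x = ∑ j, y j * x j := by
  simp [dotL]

lemma dotL_sv (y : P → ℝ) (i : P) (c : ℝ) : dotL y (sv i c) = y i * c := by
  classical
  rw [dotL_apply]
  rw [Finset.sum_eq_single i]
  · simp [sv]
  · intro b _ hb
    simp [sv, hb]
  · intro h
    exact absurd (Finset.mem_univ i) h

lemma dotL_pv (y : P → ℝ) {i j : P} (hij : i ≠ j) (c d : ℝ) :
    dotL y (pv i j c d) = y i * c + y j * d := by
  classical
  have : pv i j c d = sv i c + sv j d := by
    funext k
    simp only [pv, sv, Pi.add_apply]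
    by_cases h1 : k = i
    · subst h1; simp [hij]
    · by_cases h2 : k = j
      · subst h2; simp [h1, hij.symm]
      · simp [h1, h2]
  rw [this, map_add, dotL_sv, dotL_sv]

/-- Index set for the facets of the enriched chain polytope. -/
def ICset : Set (P → ℝ) :=
  {y | ∃ l : List P, IsMC l ∧ (∀ j ∈ l, y j = 1 ∨ y j = -1) ∧ (∀ j, j ∉ l → y j = 0)}

/-- candidate facet of `C` attached to a signed maximal chain. -/
noncomputable def CFacet (y : P → ℝ) : Set (P → ℝ) :=
  {x ∈ convexHull ℝ (enrichedChainVerts P) | dotL y x = 1}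

lemma mem_l_comparable {l : List P} (hch : List.Chain' (· ⋖ ·) l)
    {a b : P} (ha : a ∈ l) (hb : b ∈ l) : a ≤ b ∨ b ≤ a := by
  by_cases hab : a = b
  · subst hab; exact Or.inl le_rfl
  · have hp := chain'_pairwise_lt hch
    have hp2 : l.Pairwise (fun x y => x ≤ y ∨ y ≤ x) := hp.imp (fun h => Or.inl h.le)
    haveI : Std.Symm (fun x y : P => x ≤ y ∨ y ≤ x) := ⟨fun _ _ h => h.symm⟩
    exact List.Pairwise.forall hp2 ha hb hab

lemma chain'_exists_next : ∀ (l : List P), List.Chain' (· ⋖ ·) l → ∀ (hl : l ≠ [])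
    (a : P), a ∈ l → a ≠ l.getLast hl → ∃ b ∈ l, a ⋖ b := by
  intro l
  induction l with
  | nil => intro _ hl; exact absurd rfl hl
  | cons x t IH =>
    intro hch hl a ha hne
    cases t with
    | nil =>
      simp only [List.mem_singleton] at ha
      exact absurd (by simp [ha]) hne
    | cons y t' =>
      replace hch := List.isChain_cons_cons.1 hch
      rcases List.mem_cons.1 ha with rfl | hat
      · exact ⟨y, by simp, hch.1⟩
      · have hgl : (x :: y :: t').getLast hl = (y :: t').getLast (List.cons_ne_nil y t') :=
          List.getLast_cons (List.cons_ne_nil y t')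
        have hne' : a ≠ (y :: t').getLast (List.cons_ne_nil y t') := by
          intro h
          exact hne (h.trans hgl.symm)
        obtain ⟨b, hb, hab⟩ := IH hch.2 (List.cons_ne_nil y t') a hat hne'
        exact ⟨b, by simp [hb], hab⟩

lemma mc_incomp {l : List P} (hmc : IsMC l) {j : P} (hj : j ∉ l) :
    ∃ m ∈ l, ¬ m ≤ j ∧ ¬ j ≤ m := by
  classical
  obtain ⟨hl, hch, hmin, hmax⟩ := hmc
  by_contra hcon
  push_neg at hcon
  have hcomp : ∀ m ∈ l, m ≤ j ∨ j ≤ m := by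
    intro m hm
    by_contra h
    push_neg at h
    exact h.2 (hcon m hm h.1)
  set C : Finset P := l.toFinset.filter (· < j) with hC
  by_cases hCne : C.Nonempty
  · obtain ⟨m, hmC, hmmax⟩ : ∃ m ∈ C, ∀ x ∈ C, ¬ m < x := by
      obtain ⟨m, hm⟩ := Finset.exists_maximal hCne
      exact ⟨m, hm.1, fun x hx hlt => lt_irrefl _ (lt_of_lt_of_le hlt (hm.2 hx hlt.le))⟩
    have hml : m ∈ l := by
      have := (Finset.mem_filter.1 hmC).1
      rwa [List.mem_toFinset] at this
    have hmj : m < j := (Finset.mem_filter.1 hmC).2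
    have hmtop : ∀ z ∈ C, z ≤ m := by
      intro z hz
      have hzl : z ∈ l := by
        have := (Finset.mem_filter.1 hz).1
        rwa [List.mem_toFinset] at this
      rcases mem_l_comparable hch hzl hml with h | h
      · exact h
      · rcases eq_or_lt_of_le h with rfl | hlt
        · exact le_rfl
        · exact absurd hlt (hmmax z hz)
    have hmne : m ≠ l.getLast hl := by
      intro h
      have : IsMax m := h ▸ hmax
      exact this.not_lt hmj
    obtain ⟨s, hsl, hms⟩ := chain'_exists_next l hch hl m hml hmne
    rcases hcomp s hsl with hsj | hjs
    · have hsj' : s < j := lt_of_le_of_ne hsj (fun h => hj (h ▸ hsl))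
      have : s ∈ C := Finset.mem_filter.2 ⟨List.mem_toFinset.2 hsl, hsj'⟩
      have := hmtop s this
      exact absurd hms.lt (not_lt_of_ge this)
    · have hjs' : j < s := lt_of_le_of_ne hjs (fun h => hj (h ▸ hsl))
      exact hms.2 hmj hjs'
  · have hhead : l.head hl ∈ l := List.head_mem hl
    rcases hcomp _ hhead with h | h
    · have : l.head hl < j := lt_of_le_of_ne h (fun hh => hj (hh ▸ hhead))
      exact hCne ⟨l.head hl, Finset.mem_filter.2 ⟨List.mem_toFinset.2 hhead, this⟩⟩
    · have h2 : l.head hl ≤ j := hmin h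
      exact hj ((_root_.le_antisymm h h2) ▸ hhead)

lemma CFacet_valid {y : P → ℝ} (hy : y ∈ ICset) :
    ∀ x ∈ convexHull ℝ (enrichedChainVerts P), dotL y x ≤ 1 := by
  classical
  obtain ⟨l, hmc, hval, hoff⟩ := hy
  have hvert : ∀ v ∈ enrichedChainVerts P, dotL y v ≤ 1 := by
    rintro v ⟨A, hA, hAval, hAoff⟩
    rw [dotL_apply]
    by_cases hex : ∃ j0, y j0 * v j0 ≠ 0
    · obtain ⟨j0, hj0⟩ := hex
      have hy0 : y j0 ≠ 0 := fun h => hj0 (by rw [h]; ring)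
      have hv0 : v j0 ≠ 0 := fun h => hj0 (by rw [h]; ring)
      have hj0l : j0 ∈ l := by
        by_contra h
        exact hy0 (hoff j0 h)
      have hj0A : j0 ∈ A := by
        by_contra h
        exact hv0 (hAoff j0 h)
      rw [Finset.sum_eq_single j0]
      · rcases hval j0 hj0l with h1 | h1 <;> rcases hAval j0 hj0A with h2 | h2 <;>
          rw [h1, h2] <;> norm_num
      · intro b _ hb
        by_contra hb0
        have hyb : y b ≠ 0 := fun h => hb0 (by rw [h]; ring)
        have hvb : v b ≠ 0 := fun h => hb0 (by rw [h]; ring)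
        have hbl : b ∈ l := by by_contra h; exact hyb (hoff b h)
        have hbA : b ∈ A := by by_contra h; exact hvb (hAoff b h)
        obtain ⟨hl, hch, -, -⟩ := hmc
        rcases mem_l_comparable hch hbl hj0l with hle | hle
        · exact hA hbA hj0A hb hle
        · exact hA hj0A hbA (Ne.symm hb) hle
      · intro h; exact absurd (Finset.mem_univ j0) h
    · push_neg at hex
      rw [Finset.sum_eq_zero (fun j _ => hex j)]
      norm_num
  intro x hx
  have hconv : Convex ℝ {z : P → ℝ | dotL y z ≤ 1} := convex_halfSpace_le (dotL y).isLinear 1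
  exact convexHull_min hvert hconv hx


lemma CFacet_isFacet {y : P → ℝ} (hy : y ∈ ICset) :
    IsFacetOf P (convexHull ℝ (enrichedChainVerts P)) (CFacet y) := by
  classical
  have hvalid := CFacet_valid hy
  obtain ⟨l, hmc, hval, hoff⟩ := hy
  obtain ⟨hl, hch, hminh, hmaxl⟩ := hmc
  set h0 := l.head hl with hh0
  have hh0l : h0 ∈ l := List.head_mem hl
  have hyh0 : y h0 = 1 ∨ y h0 = -1 := hval h0 hh0l
  have hyh0sq : y h0 * y h0 = 1 := by rcases hyh0 with h|h <;> rw [h] <;> norm_num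
  have hv0 : sv h0 (y h0) ∈ enrichedChainVerts P := sv_mem_verts h0 hyh0
  have hv0S : sv h0 (y h0) ∈ convexHull ℝ (enrichedChainVerts P) :=
    subset_convexHull _ _ hv0
  have hv0F : sv h0 (y h0) ∈ CFacet y := ⟨hv0S, by rw [dotL_sv]; exact hyh0sq⟩
  refine ⟨⟨_, hv0F⟩, ?_, ?_, ?_⟩
  · -- exposed
    intro _
    refine ⟨LinearMap.toContinuousLinearMap (dotL y), ?_⟩
    ext x
    simp only [CFacet, Set.mem_setOf_eq, LinearMap.coe_toContinuousLinearMap']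
    constructor
    · rintro ⟨hxS, hx1⟩
      exact ⟨hxS, fun z hz => by rw [hx1]; exact hvalid z hz⟩
    · rintro ⟨hxS, hxmax⟩
      refine ⟨hxS, _root_.le_antisymm (hvalid x hxS) ?_⟩
      have h2 := hxmax _ hv0S
      rwa [dotL_sv, hyh0sq] at h2
  · -- proper
    intro h
    have h0S : (0 : P → ℝ) ∈ convexHull ℝ (enrichedChainVerts P) :=
      subset_convexHull _ _ zero_mem_verts
    rw [← h] at h0S
    have h2 := h0S.2
    rw [map_zero] at h2
    norm_num at h2
  · -- dimension
    set lfin : Finset P := l.toFinset with hlfin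
    have hker : vectorSpan ℝ (CFacet y) = LinearMap.ker (dotL y) := by
      apply _root_.le_antisymm
      · rw [vectorSpan_def, Submodule.span_le]
        rintro v ⟨a, ha, b, hb, rfl⟩
        simp only [SetLike.mem_coe, LinearMap.mem_ker]
        rw [vsub_eq_sub, map_sub, ha.2, hb.2, sub_self]
      · intro v hv
        rw [LinearMap.mem_ker, dotL_apply] at hv
        have hsub1 : ∀ j, j ∉ l → sv j (1:ℝ) ∈ vectorSpan ℝ (CFacet y) := by
          intro j hjl
          obtain ⟨m, hml, hm1, hm2⟩ := mc_incomp ⟨hl, hch, hminh, hmaxl⟩ hjl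
          have hmj : m ≠ j := fun h => hm1 (h ▸ le_rfl)
          have hym : y m = 1 ∨ y m = -1 := hval m hml
          have hymsq : y m * y m = 1 := by rcases hym with h|h <;> rw [h] <;> norm_num
          have hyj : y j = 0 := hoff j hjl
          have hp : pv m j (y m) 1 ∈ CFacet y := by
            refine ⟨subset_convexHull _ _ (pv_mem_verts hmj ⟨hm1, hm2⟩ hym (Or.inl rfl)), ?_⟩
            rw [dotL_pv _ hmj, hymsq, hyj]
            ring
          have hq : pv m j (y m) (-1) ∈ CFacet y := by
            refine ⟨subset_convexHull _ _ (pv_mem_verts hmj ⟨hm1, hm2⟩ hym (Or.inr rfl)), ?_⟩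
            rw [dotL_pv _ hmj, hymsq, hyj]
            ring
          have hvs : pv m j (y m) 1 -ᵥ pv m j (y m) (-1) = sv j (2:ℝ) := by
            funext k
            simp only [vsub_eq_sub, Pi.sub_apply, pv, sv]
            by_cases h1 : k = m
            · subst h1; simp [hmj]
            · by_cases h2 : k = j
              · subst h2; simp [h1]; norm_num
              · simp [h1, h2]
          have h2m := vsub_mem_vectorSpan ℝ hp hq
          rw [hvs] at h2m
          have : sv j (1:ℝ) = (1/2 : ℝ) • sv j (2:ℝ) := by
            funext k; simp only [sv, Pi.smul_apply, smul_eq_mul]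
            by_cases h : k = j <;> simp [h] <;> norm_num
          rw [this]
          exact Submodule.smul_mem _ _ h2m
        have hchi : ∀ i ∈ l, sv i (y i) ∈ CFacet y := by
          intro i hil
          have hyi := hval i hil
          refine ⟨subset_convexHull _ _ (sv_mem_verts i hyi), ?_⟩
          rw [dotL_sv]
          rcases hyi with h|h <;> rw [h] <;> norm_num
        have hsub2 : ∀ i ∈ l, sv i (y i) - sv h0 (y h0) ∈ vectorSpan ℝ (CFacet y) := by
          intro i hil
          have := vsub_mem_vectorSpan ℝ (hchi i hil) hv0F
          rwa [vsub_eq_sub] at this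
        -- decomposition of v
        set S1 : P → ℝ := ∑ j ∈ Finset.univ.filter (fun j => j ∉ l), v j • sv j (1:ℝ) with hS1
        set S2 : P → ℝ := ∑ i ∈ lfin, (v i * y i) • (sv i (y i) - sv h0 (y h0)) with hS2
        have hS1mem : S1 ∈ vectorSpan ℝ (CFacet y) := by
          apply Submodule.sum_mem
          intro j hj
          exact Submodule.smul_mem _ _ (hsub1 j (by simpa using (Finset.mem_filter.1 hj).2))
        have hS2mem : S2 ∈ vectorSpan ℝ (CFacet y) := by
          apply Submodule.sum_mem
          intro i hi
          exact Submodule.smul_mem _ _ (hsub2 i (by rwa [hlfin, List.mem_toFinset] at hi))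
        have hsum0 : ∑ i ∈ lfin, v i * y i = 0 := by
          rw [← hv]
          rw [Finset.sum_subset (Finset.subset_univ lfin)]
          · apply Finset.sum_congr rfl
            intro i _; ring
          · intro i _ hil
            rw [hoff i (by rwa [hlfin, List.mem_toFinset] at hil)]
            ring
        have hdecomp : v = S1 + S2 := by
          funext k
          rw [Pi.add_apply, hS1, hS2, Finset.sum_apply, Finset.sum_apply]
          have hterm : ∀ i, ((v i * y i) • (sv i (y i) - sv h0 (y h0))) k
              = (v i * y i) * (if k = i then y i else 0)
                - (v i * y i) * (if k = h0 then y h0 else 0) := by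
            intro i
            simp only [Pi.smul_apply, Pi.sub_apply, smul_eq_mul, sv]
            ring
          rw [Finset.sum_congr rfl (fun i _ => hterm i), Finset.sum_sub_distrib,
            ← Finset.sum_mul, hsum0, zero_mul, sub_zero]
          by_cases hkl : k ∈ l
          · have e1 : ∑ j ∈ Finset.univ.filter (fun j => j ∉ l), (v j • sv j (1:ℝ)) k = 0 := by
              apply Finset.sum_eq_zero
              intro j hj
              have hjnl : j ∉ l := by simpa using (Finset.mem_filter.1 hj).2
              have hjk : j ≠ k := fun h => hjnl (h ▸ hkl)
              simp [sv, Ne.symm hjk]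
            have hksq : y k * y k = 1 := by
              rcases hval k hkl with h|h <;> rw [h] <;> norm_num
            have e2 : ∑ i ∈ lfin, (v i * y i) * (if k = i then y i else 0) = v k := by
              rw [Finset.sum_eq_single k]
              · rw [if_pos rfl, mul_assoc, hksq, mul_one]
              · intro b _ hb
                rw [if_neg (Ne.symm hb), mul_zero]
              · intro h
                exact absurd (by rwa [hlfin, List.mem_toFinset] : k ∈ lfin) h
            rw [e1, e2]
            ring
          · have e1 : ∑ j ∈ Finset.univ.filter (fun j => j ∉ l), (v j • sv j (1:ℝ)) k = v k := by
              rw [Finset.sum_eq_single k]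
              · simp [sv]
              · intro b _ hb
                simp [sv, Ne.symm hb]
              · intro h
                exact absurd (Finset.mem_filter.2 ⟨Finset.mem_univ k, by simpa using hkl⟩) h
            have e2 : ∑ i ∈ lfin, (v i * y i) * (if k = i then y i else 0) = 0 := by
              apply Finset.sum_eq_zero
              intro i hi
              have hik : i ≠ k := by
                intro h
                exact hkl (h ▸ (by rwa [hlfin, List.mem_toFinset] at hi))
              rw [if_neg (Ne.symm hik), mul_zero]
            rw [e1, e2]
            ring
        rw [hdecomp]
        exact Submodule.add_mem _ hS1mem hS2mem
    rw [hker]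
    have hrange : LinearMap.range (dotL y) = ⊤ := by
      rw [LinearMap.range_eq_top]
      intro t
      refine ⟨(t * y h0) • sv h0 1, ?_⟩
      rw [map_smul, dotL_sv, smul_eq_mul, mul_one, mul_assoc, hyh0sq, mul_one]
    have hrn := LinearMap.finrank_range_add_finrank_ker (dotL y)
    rw [hrange, finrank_top, Module.finrank_self, Module.finrank_pi] at hrn
    omega

lemma CFacet_eq_val {y1 y2 : P → ℝ} (hy1 : y1 ∈ ICset) (heq : CFacet y1 = CFacet y2) :
    ∀ i, y1 i ≠ 0 → y2 i = y1 i := by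
  obtain ⟨l, hmc, hval, hoff⟩ := hy1
  intro i hi
  have hil : i ∈ l := by by_contra h; exact hi (hoff i h)
  have h1 : y1 i = 1 ∨ y1 i = -1 := hval i hil
  have hsq : y1 i * y1 i = 1 := by rcases h1 with h|h <;> rw [h] <;> norm_num
  have hm : sv i (y1 i) ∈ CFacet y1 :=
    ⟨subset_convexHull _ _ (sv_mem_verts i h1), by rw [dotL_sv]; exact hsq⟩
  rw [heq] at hm
  have h2 : y2 i * y1 i = 1 := by have := hm.2; rwa [dotL_sv] at this
  rcases h1 with h|h <;> rw [h] at h2 ⊢ <;> linarith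

lemma CFacet_injOn : Set.InjOn (CFacet (P := P)) ICset := by
  intro y1 hy1 y2 hy2 heq
  funext i
  by_cases h1 : y1 i = 0
  · by_cases h2 : y2 i = 0
    · rw [h1, h2]
    · exfalso
      have := CFacet_eq_val hy2 heq.symm i h2
      rw [h1] at this
      exact h2 this.symm
  · exact (CFacet_eq_val hy1 heq i h1).symm


/-! ### The linear functionals for the enriched order polytope -/

lemma tail_lt {i : P} {r : List P} (h : Tail i r) : ∀ j ∈ r, i < j := by
  induction r generalizing i with
  | nil => simp
  | cons j0 r' IH =>
    intro j hj
    obtain ⟨hij0, ht⟩ := tail_cons_iff.1 h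
    rcases List.mem_cons.1 hj with rfl | hj'
    · exact hij0.lt
    · exact hij0.lt.trans (IH ht j hj')

lemma orderVerts_subset_HO : enrichedOrderVerts P ⊆ HO := by
  rintro v ⟨F, hup, hmin, hnonmin, hoff⟩
  have hval3 : ∀ j, v j = 1 ∨ v j = -1 ∨ v j = 0 := by
    intro j
    by_cases hjF : j ∈ F
    · by_cases hjm : j ∈ minSet F
      · rcases hmin j hjm with h | h
        · exact Or.inl h
        · exact Or.inr (Or.inl h)
      · exact Or.inl (hnonmin j hjF hjm)
    · exact Or.inr (Or.inr (hoff j hjF))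
  have hneg_min : ∀ j, v j = -1 → j ∈ minSet F := by
    intro j hj
    by_cases hjF : j ∈ F
    · by_cases hjm : j ∈ minSet F
      · exact hjm
      · rw [hnonmin j hjF hjm] at hj; norm_num at hj
    · rw [hoff j hjF] at hj; norm_num at hj
  have hone_F : ∀ j, v j = 1 → j ∈ F := by
    intro j hj
    by_cases hjF : j ∈ F
    · exact hjF
    · rw [hoff j hjF] at hj; norm_num at hj
  have habove : ∀ j ∈ F, ∀ k, j < k → k ∈ F ∧ k ∉ minSet F := by
    intro j hjF k hjk
    have hkF : k ∈ F := hup hjk.le hjF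
    exact ⟨hkF, fun hkm => hjk.ne (hkm.2 j hjF hjk.le)⟩
  have hBone : ∀ j ∈ F, ∀ r, (∀ k ∈ r, j < k) → Bf v r = 1 := by
    intro j hjF r hr
    apply Bf_eq_one_of_all_one
    intro k hk
    obtain ⟨hkF, hkm⟩ := habove j hjF k (hr k hk)
    exact hnonmin k hkF hkm
  have hA : ∀ i r, Tail i r → 0 ≤ Bf v r := by
    intro i r
    induction r generalizing i with
    | nil => intro _; norm_num
    | cons j r' IH =>
      intro ht
      obtain ⟨hij, ht'⟩ := tail_cons_iff.1 ht
      rw [Bf_cons]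
      have h1 : 0 ≤ Bf v r' := IH j ht'
      rcases hval3 j with h | h | h
      · rw [h]; linarith
      · -- v j = -1 : everything above j has value 1
        have hjm := hneg_min j h
        have hB1 : Bf v r' = 1 := hBone j hjm.1 r' (tail_lt ht')
        rw [h, hB1]; norm_num
      · rw [h]; linarith
  intro i r ht
  constructor
  · rcases hval3 i with h | h | h
    · have hiF : i ∈ F := hone_F i h
      rw [h, hBone i hiF r (tail_lt ht)]
    · rw [h]
      have := hA i r ht
      linarith
    · rw [h]
      exact hA i r ht
  · intro _
    rcases hval3 i with h | h | h
    · rw [h]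
      have := hA i r ht
      linarith
    · have hiF : i ∈ F := (hneg_min i h).1
      rw [h, hBone i hiF r (tail_lt ht)]
      norm_num
    · rw [h]
      simpa using hA i r ht

/-- linear part of `Bf · r` as a linear map. -/
noncomputable def LfL (r : List P) : (P → ℝ) →ₗ[ℝ] ℝ where
  toFun := fun x => Lf x r
  map_add' := fun a b => Lf_add a b r
  map_smul' := fun c a => by simp [Lf_smul c a r]

noncomputable def sgn (σ : Bool) : ℝ := if σ then 1 else -1

/-- the linear functional of the chain inequality indexed by `(i, r, σ)`. -/
noncomputable def gL (p : P × List P × Bool) : (P → ℝ) →ₗ[ℝ] ℝ :=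
  sgn p.2.2 • LinearMap.proj p.1 - LfL p.2.1

lemma Lf_zero (r : List P) : Lf (0 : P → ℝ) r = 0 :=
  Lf_eq_zero_of_notmem _ _ (fun _ _ => rfl)

lemma gL_apply (p : P × List P × Bool) (x : P → ℝ) :
    gL p x = sgn p.2.2 * x p.1 - Lf x p.2.1 := rfl

/-- Index set for the facet inequalities of the enriched order polytope. -/
def IOset : Set (P × List P × Bool) :=
  {p | Tail p.1 p.2.1 ∧ (p.2.2 = false → IsMin p.1)}

lemma gL_le_iff (p : P × List P × Bool) (x : P → ℝ) :
    gL p x ≤ Bf 0 p.2.1 ↔ sgn p.2.2 * x p.1 ≤ Bf x p.2.1 := by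
  rw [gL_apply]
  have h1 := Bf_eq_Lf_add x p.2.1
  constructor <;> intro h <;> linarith

lemma gL_lt_iff (p : P × List P × Bool) (x : P → ℝ) :
    gL p x < Bf 0 p.2.1 ↔ sgn p.2.2 * x p.1 < Bf x p.2.1 := by
  rw [gL_apply]
  have h1 := Bf_eq_Lf_add x p.2.1
  constructor <;> intro h <;> linarith

lemma mem_HO_iff (x : P → ℝ) : x ∈ HO ↔ ∀ p ∈ IOset, gL p x ≤ Bf 0 p.2.1 := by
  constructor
  · rintro hx ⟨i, r, σ⟩ ⟨ht, hσ⟩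
    rw [gL_le_iff]
    simp only at ht ⊢
    cases σ
    · have := (hx i r ht).2 (hσ rfl)
      simp only [sgn, Bool.false_eq_true, if_false]
      linarith
    · have := (hx i r ht).1
      simp only [sgn, if_true]
      linarith
  · intro h i r ht
    constructor
    · have := h (i, r, true) ⟨ht, by simp⟩
      rw [gL_le_iff] at this
      simpa [sgn] using this
    · intro hmin
      have := h (i, r, false) ⟨ht, fun _ => hmin⟩
      rw [gL_le_iff] at this
      simp only [sgn, Bool.false_eq_true, if_false] at this
      linarith

lemma IOset_finite : (IOset (P := P)).Finite := by
  classical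
  have hN : {r : List P | r.Nodup}.Finite :=
    Set.finite_coe_iff.1 (Finite.of_injective
      (fun r => (⟨r.1, r.2⟩ : {l : List P // l.Nodup}))
      (by intro a b h; ext1; simpa using congrArg Subtype.val h))
  apply Set.Finite.subset ((Set.finite_univ (α := P)).prod (hN.prod (Set.finite_univ (α := Bool))))
  rintro ⟨i, r, σ⟩ ⟨ht, _⟩
  refine ⟨Set.mem_univ _, ?_, Set.mem_univ _⟩
  have : List.Chain' (· ⋖ ·) (i :: r) := ht.1
  exact (List.nodup_cons.1 (chain'_nodup this)).2

lemma SO_valid : ∀ x ∈ convexHull ℝ (enrichedOrderVerts P), ∀ p ∈ IOset,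
    gL p x ≤ Bf 0 p.2.1 := by
  intro x hx p hp
  have hvert : ∀ v ∈ enrichedOrderVerts P, gL p v ≤ Bf 0 p.2.1 := by
    intro v hv
    exact (mem_HO_iff v).1 (orderVerts_subset_HO hv) p hp
  have hconv : Convex ℝ {z : P → ℝ | gL p z ≤ Bf 0 p.2.1} :=
    convex_halfSpace_le (gL p).isLinear _
  exact convexHull_min hvert hconv hx


/-! ### Covering a convex set by affine hyperplanes -/

lemma line_mem {A : AffineSubspace ℝ (P → ℝ)} {x0 d : P → ℝ} {l1 l2 : ℝ} (hne : l1 ≠ l2)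
    (h1 : x0 + l1 • d ∈ A) (h2 : x0 + l2 • d ∈ A) (mu : ℝ) : x0 + mu • d ∈ A := by
  have h3 := A.smul_vsub_vadd_mem ((mu - l2)/(l1 - l2)) h1 h2 h2
  have hsub : (x0 + l1 • d) -ᵥ (x0 + l2 • d) = (l1 - l2) • d := by
    rw [vsub_eq_sub]
    module
  rw [hsub, vadd_eq_add, smul_smul, div_mul_cancel₀ _ (sub_ne_zero.2 hne)] at h3
  have halg : (mu - l2) • d + (x0 + l2 • d) = x0 + mu • d := by module
  rwa [halg] at h3

lemma convex_cover_affine {ι : Type*} (t : Finset ι) (A : ι → AffineSubspace ℝ (P → ℝ)) :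
    ∀ (F : Set (P → ℝ)), Convex ℝ F → F.Nonempty → (∀ x ∈ F, ∃ i ∈ t, x ∈ A i) →
    ∃ i ∈ t, F ⊆ (A i : Set (P → ℝ)) := by
  classical
  induction t using Finset.induction_on with
  | empty =>
    intro F _ hne hcov
    obtain ⟨x, hx⟩ := hne
    obtain ⟨i, hi, _⟩ := hcov x hx
    exact absurd hi (Finset.notMem_empty i)
  | insert _ _ ha IH =>
    rename_i a s
    intro F hF hne hcov
    by_cases hsub : F ⊆ (A a : Set (P → ℝ))
    · exact ⟨a, Finset.mem_insert_self a s, hsub⟩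
    · obtain ⟨x0, hx0F, hx0A⟩ := Set.not_subset.1 hsub
      have hclaim : ∀ y ∈ F, ∃ i ∈ s, y ∈ A i := by
        intro y hy
        by_cases hyx0 : y = x0
        · obtain ⟨i, hi, hyA⟩ := hcov y hy
          rcases Finset.mem_insert.1 hi with rfl | his
          · exact absurd (hyx0 ▸ hyA) hx0A
          · exact ⟨i, his, hyA⟩
        · set d : P → ℝ := y - x0 with hd
          set lam : ℕ → ℝ := fun n => 1/(n+2) with hlam
          set pt : ℕ → (P → ℝ) := fun n => x0 + lam n • d with hpt
          have hlaminj : Function.Injective lam := by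
            intro n m h
            simp only [hlam] at h
            have hn : ((n:ℝ)+2) ≠ 0 := by positivity
            have hm : ((m:ℝ)+2) ≠ 0 := by positivity
            rw [div_eq_div_iff hn hm] at h
            have : (n:ℝ) = m := by linarith
            exact_mod_cast this
          have hmemF : ∀ n, pt n ∈ F := by
            intro n
            have h1 : (0:ℝ) < lam n := by simp only [hlam]; positivity
            have h2 : lam n ≤ 1 := by
              simp only [hlam]
              rw [div_le_one (by positivity)]
              have : (0:ℝ) ≤ (n:ℝ) := Nat.cast_nonneg n
              linarith
            have h3 := hF hx0F hy (by linarith : (0:ℝ) ≤ 1 - lam n) h1.le (by ring)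
            have h4 : (1 - lam n) • x0 + lam n • y = pt n := by
              simp only [hpt, hd]
              module
            rwa [h4] at h3
          choose idx hidx1 hidx2 using fun n => hcov (pt n) (hmemF n)
          have hidx' : ∀ n, (⟨idx n, hidx1 n⟩ : {i // i ∈ insert a s}) =
              ⟨idx n, hidx1 n⟩ := fun n => rfl
          obtain ⟨n, m, hnm, hidxeq0⟩ := Finite.exists_ne_map_eq_of_infinite
            (fun n => (⟨idx n, hidx1 n⟩ : {i // i ∈ insert a s}))
          have hidxeq : idx n = idx m := congrArg Subtype.val hidxeq0
          have hAn : pt n ∈ A (idx n) := hidx2 n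
          have hAm : pt m ∈ A (idx n) := by rw [hidxeq]; exact hidx2 m
          have hlne : lam n ≠ lam m := fun h => hnm (hlaminj h)
          have hyline : ∀ mu : ℝ, x0 + mu • d ∈ A (idx n) :=
            fun mu => line_mem hlne hAn hAm mu
          have hy' : y ∈ A (idx n) := by
            have := hyline 1
            rwa [one_smul, hd, add_sub_cancel] at this
          have hx0' : x0 ∈ A (idx n) := by
            have := hyline 0
            rwa [zero_smul, add_zero] at this
          have hidxs : idx n ∈ s := by
            rcases Finset.mem_insert.1 (hidx1 n) with heq | his
            · exact absurd (heq ▸ hx0') hx0A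
            · exact his
          exact ⟨idx n, hidxs, hy'⟩
      obtain ⟨i, his, hFsub⟩ := IH F hF hne hclaim
      exact ⟨i, Finset.mem_insert_of_mem his, hFsub⟩

/-- the affine hyperplane of a chain inequality. -/
noncomputable def hypAS (p : P × List P × Bool) : AffineSubspace ℝ (P → ℝ) where
  carrier := {x | gL p x = Bf 0 p.2.1}
  smul_vsub_vadd_mem' := by
    intro c p1 p2 p3 h1 h2 h3
    simp only [Set.mem_setOf_eq] at h1 h2 h3 ⊢
    rw [vsub_eq_sub, vadd_eq_add, map_add, map_smul, map_sub, h1, h2, h3]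
    simp

lemma mem_hypAS {p : P × List P × Bool} {x : P → ℝ} :
    x ∈ hypAS p ↔ gL p x = Bf 0 p.2.1 := Iff.rfl

/-! ### Classification of the facets of the enriched order polytope -/

lemma facetO_classified [Nonempty P] {F : Set (P → ℝ)}
    (hF : IsFacetOf P (convexHull ℝ (enrichedOrderVerts P)) F) :
    ∃ p ∈ IOset, F = (convexHull ℝ (enrichedOrderVerts P)) ∩ {x | gL p x = Bf 0 p.2.1} := by
  classical
  set SO : Set (P → ℝ) := convexHull ℝ (enrichedOrderVerts P) with hSO
  obtain ⟨hne, hexp, hneS, hrank⟩ := hF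
  obtain ⟨lc, hl⟩ := hexp hne
  have hlcne : ∃ v, lc v ≠ 0 := by
    by_contra h
    push_neg at h
    apply hneS
    rw [hl]
    ext z
    simp only [Set.mem_setOf_eq, h]
    constructor
    · rintro ⟨hz, _⟩; exact hz
    · intro hz; exact ⟨hz, fun y _ => le_rfl⟩
  have hbd : ∀ x ∈ F, x ∉ interior SO := by
    intro x hxF hxint
    obtain ⟨v0, hv0⟩ := hlcne
    set v : P → ℝ := if 0 < lc v0 then v0 else -v0 with hv
    have hvpos : 0 < lc v := by
      by_cases h : 0 < lc v0
      · simp only [hv, if_pos h]; exact h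
      · simp only [hv, if_neg h, map_neg]
        push_neg at h
        rcases lt_or_eq_of_le h with h' | h'
        · linarith
        · exact absurd h' hv0
    have hvne : v ≠ 0 := by
      intro h
      rw [h, map_zero] at hvpos
      exact lt_irrefl _ hvpos
    obtain ⟨ε, hε, hball⟩ := Metric.mem_nhds_iff.1 (mem_interior_iff_mem_nhds.1 hxint)
    have hnv : 0 < ‖v‖ := norm_pos_iff.2 hvne
    set δ : ℝ := ε/(2*‖v‖) with hδ
    have hδpos : 0 < δ := by positivity
    have hz : x + δ • v ∈ SO := by
      apply hball
      rw [Metric.mem_ball, dist_eq_norm]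
      have heq1 : x + δ • v - x = δ • v := add_sub_cancel_left x (δ • v)
      rw [heq1, norm_smul, Real.norm_eq_abs, abs_of_pos hδpos]
      have heq2 : δ * ‖v‖ = ε/2 := by
        rw [hδ]
        field_simp
      rw [heq2]
      linarith
    rw [hl] at hxF
    have := hxF.2 _ hz
    rw [map_add, map_smul, smul_eq_mul] at this
    nlinarith
  have hcov : ∀ x ∈ F, ∃ p ∈ IOset_finite.toFinset, x ∈ hypAS p := by
    intro x hxF
    have hxF' : x ∈ {x | x ∈ SO ∧ ∀ y ∈ SO, lc y ≤ lc x} := hl ▸ hxF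
    have hxSO : x ∈ SO := hxF'.1
    by_cases hstrict : ∀ p ∈ IOset (P := P), gL p x < Bf 0 p.2.1
    · exfalso
      set U : Set (P → ℝ) := ⋂ p ∈ IOset (P := P), {z | gL p z < Bf 0 p.2.1} with hU
      have hUopen : IsOpen U := Set.Finite.isOpen_biInter IOset_finite (fun p _ =>
        isOpen_lt (gL p).continuous_of_finiteDimensional continuous_const)
      have hUsub : U ⊆ SO := by
        intro z hz
        apply HO_subset_hull
        rw [mem_HO_iff]
        intro p hp
        exact le_of_lt (Set.mem_iInter₂.1 hz p hp)
      have hxU : x ∈ U := Set.mem_iInter₂.2 hstrict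
      exact hbd x hxF (interior_maximal hUsub hUopen hxU)
    · push_neg at hstrict
      obtain ⟨p, hp, hge⟩ := hstrict
      refine ⟨p, IOset_finite.mem_toFinset.2 hp, ?_⟩
      rw [mem_hypAS]
      exact _root_.le_antisymm (SO_valid x hxSO p hp) hge
  have hFconv : Convex ℝ F := hexp.convex (convex_convexHull ℝ _)
  obtain ⟨p, hpt, hFsub⟩ := convex_cover_affine IOset_finite.toFinset hypAS F hFconv hne hcov
  have hp : p ∈ IOset := IOset_finite.mem_toFinset.1 hpt
  refine ⟨p, hp, ?_⟩
  obtain ⟨ht, hσ⟩ := hp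
  have hnotin : p.1 ∉ p.2.1 := fun h => lt_irrefl p.1 (tail_lt ht p.1 h)
  have hgLsv : gL p (sv p.1 1) = sgn p.2.2 := by
    rw [gL_apply]
    rw [Lf_eq_zero_of_notmem _ _ (fun j hj => by
      have hjne : j ≠ p.1 := fun h => hnotin (h ▸ hj)
      simp [sv, hjne])]
    simp [sv]
  have hsgn_ne : sgn p.2.2 ≠ 0 := by
    cases p.2.2 <;> simp [sgn]
  have hrange : LinearMap.range (gL p) = ⊤ := by
    rw [LinearMap.range_eq_top]
    intro t
    refine ⟨(t / sgn p.2.2) • sv p.1 1, ?_⟩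
    rw [map_smul, hgLsv, smul_eq_mul, div_mul_cancel₀ _ hsgn_ne]
  have hrn := LinearMap.finrank_range_add_finrank_ker (gL p)
  rw [hrange, finrank_top, Module.finrank_self, Module.finrank_pi] at hrn
  have hkerrank : Module.finrank ℝ ↥(LinearMap.ker (gL p)) = Fintype.card P - 1 := by omega
  have hdirle : vectorSpan ℝ F ≤ LinearMap.ker (gL p) := by
    rw [vectorSpan_def, Submodule.span_le]
    rintro w ⟨a, ha, b, hb, rfl⟩
    have ha' : gL p a = Bf 0 p.2.1 := hFsub ha
    have hb' : gL p b = Bf 0 p.2.1 := hFsub hb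
    simp only [SetLike.mem_coe, LinearMap.mem_ker]
    rw [vsub_eq_sub, map_sub, ha', hb', sub_self]
  have hdeq : vectorSpan ℝ F = LinearMap.ker (gL p) :=
    Submodule.eq_of_le_of_finrank_le hdirle (by rw [hkerrank, hrank])
  have hlcF : ∀ a ∈ F, ∀ b ∈ F, lc a = lc b := by
    intro a ha b hb
    have ha' : a ∈ {x | x ∈ SO ∧ ∀ y ∈ SO, lc y ≤ lc x} := hl ▸ ha
    have hb' : b ∈ {x | x ∈ SO ∧ ∀ y ∈ SO, lc y ≤ lc x} := hl ▸ hb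
    exact _root_.le_antisymm (hb'.2 a ha'.1) (ha'.2 b hb'.1)
  have hlcker : ∀ w ∈ Submodule.span ℝ ((F : Set (P → ℝ)) -ᵥ F), lc w = 0 := by
    intro w hw
    refine Submodule.span_induction ?_ ?_ ?_ ?_ hw
    · rintro u ⟨a, ha, b, hb, rfl⟩
      change lc (a -ᵥ b) = 0
      rw [vsub_eq_sub, map_sub, hlcF a ha b hb, sub_self]
    · exact map_zero lc
    · intro u v _ _ hu hv
      rw [map_add, hu, hv, add_zero]
    · intro c u _ hu
      rw [map_smul, hu, smul_zero]
  apply Set.Subset.antisymm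
  · intro z hz
    have hz' : z ∈ {x | x ∈ SO ∧ ∀ y ∈ SO, lc y ≤ lc x} := hl ▸ hz
    exact ⟨hz'.1, hFsub hz⟩
  · rintro z ⟨hzSO, hzhyp⟩
    obtain ⟨x0, hx0⟩ := hne
    have hx0hyp : gL p x0 = Bf 0 p.2.1 := hFsub hx0
    have hzk : gL p (z - x0) = 0 := by
      rw [map_sub, hzhyp.out, hx0hyp, sub_self]
    have hmem : z - x0 ∈ vectorSpan ℝ F := by
      rw [hdeq]
      exact LinearMap.mem_ker.2 hzk
    rw [vectorSpan_def] at hmem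
    have hlczx : lc (z - x0) = 0 := hlcker _ hmem
    rw [map_sub, sub_eq_zero] at hlczx
    have hx0F : x0 ∈ {x | x ∈ SO ∧ ∀ y ∈ SO, lc y ≤ lc x} := hl ▸ hx0
    rw [hl]
    exact ⟨hzSO, fun y hy => by
      have := hx0F.2 y hy
      rw [hlczx]
      linarith⟩


/-! ### Extending saturated chains downward to maximal chains -/

lemma exists_mc_ext : ∀ (i : P) (r : List P), Tail i r →
    ∃ pre : List P, IsMC (pre ++ i :: r) ∧
      ∀ (h : (pre ++ i :: r) ≠ []),
        (pre ++ i :: r).getLast h = (i :: r).getLast (List.cons_ne_nil i r) := by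
  intro i
  induction i using WellFoundedLT.induction with
  | _ i IH =>
    intro r ht
    by_cases hmin : IsMin i
    · refine ⟨[], ⟨by simp, ?_, ?_, ?_⟩, ?_⟩
      · show List.Chain' (· ⋖ ·) (i :: r)
        exact ht.1
      · simpa using hmin
      · simpa using ht.2
      · intro h; rfl
    · obtain ⟨j, hj⟩ := exists_covby_of_not_min hmin
      have ht' : Tail j (i :: r) := tail_cons_iff.2 ⟨hj, ht⟩
      obtain ⟨pre', hmc', hlast'⟩ := IH j hj.lt (i :: r) ht'
      have heq : (pre' ++ [j]) ++ i :: r = pre' ++ j :: i :: r := by simp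
      refine ⟨pre' ++ [j], ?_, ?_⟩
      · rw [heq]; exact hmc'
      · intro h
        have h2 := hlast' (by simp)
        have h3 : (pre' ++ [j] ++ i :: r).getLast h
            = (pre' ++ j :: i :: r).getLast (by simp) := by
          congr 1
        rw [h3, h2]
        exact List.getLast_cons (List.cons_ne_nil i r)

/-! ### Encoding `O`-facet indices as `C`-facet indices -/

noncomputable def encode (p : P × List P × Bool) : P → ℝ :=
  if h : p ∈ IOset then
    if p.2.2 then
      (fun k => if k ∈ p.1 :: p.2.1 then 1
        else if k ∈ Classical.choose (exists_mc_ext p.1 p.2.1 h.1) then -1 else 0)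
    else (fun k => if k ∈ p.1 :: p.2.1 then -1 else 0)
  else 0

lemma encode_true_val {p : P × List P × Bool} (h : p ∈ IOset) (htrue : p.2.2 = true) (k : P) :
    encode p k = (if k ∈ p.1 :: p.2.1 then 1
      else if k ∈ Classical.choose (exists_mc_ext p.1 p.2.1 h.1) then -1 else 0) := by
  rw [encode, dif_pos h, if_pos htrue]

lemma encode_false_val {p : P × List P × Bool} (h : p ∈ IOset) (hfalse : p.2.2 = false) (k : P) :
    encode p k = (if k ∈ p.1 :: p.2.1 then -1 else 0) := by
  rw [encode, dif_pos h, hfalse]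
  simp

lemma encode_mem_ICset {p : P × List P × Bool} (h : p ∈ IOset) : encode p ∈ ICset := by
  classical
  obtain ⟨ht, hσ⟩ := h
  cases hb : p.2.2
  · -- σ = false : the chain itself is maximal
    refine ⟨p.1 :: p.2.1, ⟨by simp, ht.1, by simpa using hσ hb, by simpa using ht.2⟩, ?_, ?_⟩
    · intro j hj
      rw [encode_false_val ⟨ht, hσ⟩ hb, if_pos hj]
      right; rfl
    · intro j hj
      rw [encode_false_val ⟨ht, hσ⟩ hb, if_neg hj]
  · -- σ = true : extend downward
    obtain ⟨hmc, hlast⟩ := Classical.choose_spec (exists_mc_ext p.1 p.2.1 ht)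
    set pre := Classical.choose (exists_mc_ext p.1 p.2.1 ht) with hpre
    obtain ⟨hX, hch', hmin', hmax'⟩ := hmc
    have hnd : (pre ++ p.1 :: p.2.1).Nodup := chain'_nodup hch'
    refine ⟨pre ++ p.1 :: p.2.1, ⟨hX, hch', hmin', hmax'⟩, ?_, ?_⟩
    · intro j hj
      rw [encode_true_val ⟨ht, hσ⟩ hb]
      rcases List.mem_append.1 hj with hj1 | hj2
      · rw [if_neg (fun hj2 => (List.disjoint_of_nodup_append hnd) hj1 hj2), if_pos hj1]
        right; rfl
      · rw [if_pos hj2]; left; rfl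
    · intro j hj
      rw [List.mem_append] at hj
      push_neg at hj
      rw [encode_true_val ⟨ht, hσ⟩ hb, if_neg hj.2, if_neg hj.1]


lemma mem_isMax_eq_getLast {l : List P} (hch : List.Chain' (· ⋖ ·) l) (hl : l ≠ [])
    {m : P} (hm : m ∈ l) (hmax : IsMax m) : m = l.getLast hl := by
  by_contra hne
  obtain ⟨s, _, hms⟩ := chain'_exists_next l hch hl m hm hne
  exact hmax.not_lt hms.lt

lemma ICset_finite : (ICset (P := P)).Finite := by
  have hfin : ({-1, 0, 1} : Set ℝ).Finite :=
    ((Set.finite_singleton (1:ℝ)).insert 0).insert (-1)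
  apply Set.Finite.subset (Set.Finite.pi (fun _ : P => hfin))
  rintro y ⟨l, _, hval, hoff⟩
  rw [Set.mem_univ_pi]
  intro i
  by_cases hil : i ∈ l
  · rcases hval i hil with h | h <;> simp [h]
  · simp [hoff i hil]

lemma encode_one_iff {p : P × List P × Bool} (h : p ∈ IOset) (htrue : p.2.2 = true) (k : P) :
    encode p k = 1 ↔ k ∈ p.1 :: p.2.1 := by
  rw [encode_true_val h htrue]
  constructor
  · intro hk
    by_cases h1 : k ∈ p.1 :: p.2.1
    · exact h1
    · rw [if_neg h1] at hk
      by_cases h2 : k ∈ Classical.choose (exists_mc_ext p.1 p.2.1 h.1)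
      · rw [if_pos h2] at hk; norm_num at hk
      · rw [if_neg h2] at hk; norm_num at hk
  · intro hk
    rw [if_pos hk]

lemma encode_neg_iff {p : P × List P × Bool} (h : p ∈ IOset) (hfalse : p.2.2 = false) (k : P) :
    encode p k = -1 ↔ k ∈ p.1 :: p.2.1 := by
  rw [encode_false_val h hfalse]
  constructor
  · intro hk
    by_cases h1 : k ∈ p.1 :: p.2.1
    · exact h1
    · rw [if_neg h1] at hk; norm_num at hk
  · intro hk
    rw [if_pos hk]

lemma encode_nonpos_of_false {p : P × List P × Bool} (h : p ∈ IOset) (hfalse : p.2.2 = false)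
    (k : P) : encode p k ≤ 0 := by
  rw [encode_false_val h hfalse]
  split <;> norm_num

lemma encode_injOn : Set.InjOn (encode (P := P)) IOset := by
  rintro ⟨i1, r1, σ1⟩ hp1 ⟨i2, r2, σ2⟩ hp2 heq
  have hs1 : (i1 :: r1).Pairwise (· < ·) := chain'_pairwise_lt hp1.1.1
  have hs2 : (i2 :: r2).Pairwise (· < ·) := chain'_pairwise_lt hp2.1.1
  have hlists : ∀ σ, σ1 = σ ∧ σ2 = σ → i1 :: r1 = i2 :: r2 := by
    rintro σ ⟨h1, h2⟩
    apply sorted_eq_of_mem_iff hs1 hs2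
    intro k
    cases σ
    · rw [← encode_neg_iff hp1 h1 k, ← encode_neg_iff hp2 h2 k, heq]
    · rw [← encode_one_iff hp1 h1 k, ← encode_one_iff hp2 h2 k, heq]
  cases hσ1 : σ1 <;> cases hσ2 : σ2
  · have := hlists false ⟨hσ1, hσ2⟩
    rw [List.cons.injEq] at this
    simp [this.1, this.2]
  · exfalso
    have h1 : encode (i1, r1, σ1) i1 ≤ 0 := encode_nonpos_of_false hp1 hσ1 i1
    have h2 : encode (i2, r2, σ2) i1 = encode (i1, r1, σ1) i1 := by rw [heq]
    have h3 : encode (i2, r2, σ2) i2 = 1 := (encode_one_iff hp2 hσ2 i2).2 (by simp)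
    -- evaluate at i2 instead
    have h4 : encode (i1, r1, σ1) i2 = encode (i2, r2, σ2) i2 := by rw [heq]
    rw [h3] at h4
    have h5 := encode_nonpos_of_false hp1 hσ1 i2
    rw [← h4] at h3
    linarith [encode_nonpos_of_false hp1 hσ1 i2, h3.ge]
  · exfalso
    have h3 : encode (i1, r1, σ1) i1 = 1 := (encode_one_iff hp1 hσ1 i1).2 (by simp)
    have h4 : encode (i2, r2, σ2) i1 = 1 := by rw [← heq]; exact h3
    have h5 := encode_nonpos_of_false hp2 hσ2 i1
    linarith
  · have := hlists true ⟨hσ1, hσ2⟩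
    rw [List.cons.injEq] at this
    simp [this.1, this.2]

lemma count_lt [Nonempty P] {a b : P} (hab : a < b) :
    {F : Set (P → ℝ) | IsFacetOf P (convexHull ℝ (enrichedOrderVerts P)) F}.ncard
      < {F : Set (P → ℝ) | IsFacetOf P (convexHull ℝ (enrichedChainVerts P)) F}.ncard := by
  classical
  obtain ⟨k0, hak0, hk0b⟩ := exists_covby_le hab
  obtain ⟨rk, hrk⟩ := exists_tail k0
  have hta : Tail a (k0 :: rk) := tail_cons_iff.2 ⟨hak0, hrk⟩
  obtain ⟨pre0, hmc0, hlast0⟩ := exists_mc_ext a (k0 :: rk) hta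
  set M0 : List P := pre0 ++ a :: k0 :: rk with hM0
  have hM0ne : M0 ≠ [] := by simp [hM0]
  obtain ⟨hX0, hch0, hmin0, hmax0⟩ := hmc0
  set t0 : P := M0.getLast hM0ne with ht0def
  have ht0max : IsMax t0 := hmax0
  have haM0 : a ∈ M0 := by simp [hM0]
  have ht0M0 : t0 ∈ M0 := List.getLast_mem hM0ne
  have ht0eq : t0 = (a :: k0 :: rk).getLast (List.cons_ne_nil _ _) := hlast0 hM0ne
  have ht0mem2 : t0 ∈ k0 :: rk := by
    rw [ht0eq, List.getLast_cons (List.cons_ne_nil k0 rk)]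
    exact List.getLast_mem _
  have hat0 : a ≠ t0 := by
    intro h
    have h2 : a < t0 := tail_lt hta t0 ht0mem2
    rw [← h] at h2
    exact lt_irrefl a h2
  set y0 : P → ℝ := fun j => if j = t0 then -1 else if j ∈ M0 then 1 else 0 with hy0def
  have hy0IC : y0 ∈ ICset := by
    refine ⟨M0, ⟨hX0, hch0, hmin0, hmax0⟩, ?_, ?_⟩
    · intro j hj
      simp only [hy0def]
      by_cases h : j = t0
      · rw [if_pos h]; right; rfl
      · rw [if_neg h, if_pos hj]; left; rfl
    · intro j hj
      simp only [hy0def]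
      rw [if_neg (fun h => hj (by rw [h]; exact ht0M0)), if_neg hj]
  have hy0a : y0 a = 1 := by
    simp only [hy0def]
    rw [if_neg hat0, if_pos haM0]
  have hdisc : ∀ p ∈ IOset (P := P), encode p ≠ y0 := by
    rintro ⟨i, r, σ⟩ hp hEq
    cases hσ : σ
    · have h1 : encode (i, r, σ) a ≤ 0 := encode_nonpos_of_false hp hσ a
      rw [hEq, hy0a] at h1
      norm_num at h1
    · set tv : P := (i :: r).getLast (List.cons_ne_nil i r) with htv
      have htvmem : tv ∈ i :: r := List.getLast_mem _
      have htvmax : IsMax tv := hp.1.2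
      have h1 : encode (i, r, σ) tv = 1 := (encode_one_iff hp hσ tv).2 htvmem
      rw [hEq] at h1
      simp only [hy0def] at h1
      by_cases h2 : tv = t0
      · rw [if_pos h2] at h1; norm_num at h1
      · rw [if_neg h2] at h1
        by_cases h3 : tv ∈ M0
        · exact h2 (mem_isMax_eq_getLast hch0 hM0ne h3 htvmax)
        · rw [if_neg h3] at h1; norm_num at h1
  have hICfin := ICset_finite (P := P)
  have hstep1 : {F : Set (P → ℝ) | IsFacetOf P (convexHull ℝ (enrichedOrderVerts P)) F}.ncard
      ≤ (ICset (P := P) \ {y0}).ncard := by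
    have hch : ∀ F : Set (P → ℝ), ∃ p : P × List P × Bool,
        IsFacetOf P (convexHull ℝ (enrichedOrderVerts P)) F → p ∈ IOset ∧
          F = (convexHull ℝ (enrichedOrderVerts P)) ∩ {x | gL p x = Bf 0 p.2.1} := by
      intro F
      by_cases hF : IsFacetOf P (convexHull ℝ (enrichedOrderVerts P)) F
      · obtain ⟨p, hp, heq⟩ := facetO_classified hF
        exact ⟨p, fun _ => ⟨hp, heq⟩⟩
      · exact ⟨(Classical.arbitrary P, [], true), fun h => absurd h hF⟩
    choose pf hpf using hch
    refine Set.ncard_le_ncard_of_injOn (fun F => encode (pf F)) ?_ ?_ (hICfin.diff)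
    · intro F hF
      obtain ⟨hp, _⟩ := hpf F hF
      exact ⟨encode_mem_ICset hp, by simpa using hdisc _ hp⟩
    · intro F1 h1 F2 h2 heq
      obtain ⟨hp1, he1⟩ := hpf F1 h1
      obtain ⟨hp2, he2⟩ := hpf F2 h2
      have := encode_injOn hp1 hp2 heq
      rw [he1, he2, this]
  have hstep2 : (ICset (P := P) \ {y0}).ncard < (ICset (P := P)).ncard := by
    exact Set.ncard_lt_ncard (Set.diff_singleton_ssubset.2 hy0IC) hICfin
  have hstep3 : (ICset (P := P)).ncard
      ≤ {F : Set (P → ℝ) | IsFacetOf P (convexHull ℝ (enrichedChainVerts P)) F}.ncard := by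
    refine Set.ncard_le_ncard_of_injOn CFacet ?_ CFacet_injOn (facets_finite chainVerts_finite)
    intro y hy
    exact CFacet_isFacet hy
  omega

end Stmt19

/-- `O^(e)_P` and `C^(e)_P` have the same number of facets iff `P` is an
antichain, in which case the two polytopes coincide. -/
theorem stmt19 (P : Type*) [Fintype P] [PartialOrder P] [Nonempty P] :
    (Set.ncard {F : Set (P → ℝ) | IsFacetOf P (convexHull ℝ (enrichedOrderVerts P)) F}
        = Set.ncard {F : Set (P → ℝ) | IsFacetOf P (convexHull ℝ (enrichedChainVerts P)) F}
      ↔ IsAntichain (· ≤ ·) (Set.univ : Set P)) ∧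
    (IsAntichain (· ≤ ·) (Set.univ : Set P) →
      convexHull ℝ (enrichedOrderVerts P) = convexHull ℝ (enrichedChainVerts P)) := by
  constructor
  · constructor
    · intro hcount
      by_contra hanti
      have hex : ∃ x y : P, x ≠ y ∧ x ≤ y := by
        by_contra h
        push_neg at h
        exact hanti (fun x _ y _ hne hxy => h x y hne hxy)
      obtain ⟨x, y, hne, hxy⟩ := hex
      exact absurd hcount (ne_of_lt (Stmt19.count_lt (lt_of_le_of_ne hxy hne)))
    · intro h
      rw [Stmt19.antichain_verts_eq h]
  · intro h
    rw [Stmt19.antichain_verts_eq h]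
end
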